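/- arXiv:2511.07374 — 7 statements merged into one kernel-verified Lean document; each statement's English description precedes it below -/
import Mathlib

section
/- For every integer k ≥ 3 and all integers a, b with b ≥ a ≥ k, there exists a connected bipartite simple graph with bipartition classes of sizes a and b, containing no path on 2k-1 vertices as a subgraph, having exactly (k-2)(b-1) + a edges. Consequently ex_{b,c}(a,b,P_{2k}) ≥ ex_{b,c}(a,b,P_{2k-1}) ≥ (k-2)(b-1) + a. -/
open SimpleGraph

/-- `G` contains a copy of `H` as a (not necessarily induced) subgraph. -/
def Contains {V W : Type*} (G : SimpleGraph V) (H : SimpleGraph W) : Prop :=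
  ∃ f : H →g G, Function.Injective f

/-- `(A, B)` is a bipartition of the graph `G`: the two classes cover the vertex
set, are disjoint, and every edge has one endpoint in each class. -/
def IsBipartition {V : Type*} (G : SimpleGraph V) (A B : Finset V) : Prop :=
  (∀ v, v ∈ A ∨ v ∈ B) ∧ (∀ v, ¬(v ∈ A ∧ v ∈ B)) ∧
  ∀ ⦃u v⦄, G.Adj u v → (u ∈ A ∧ v ∈ B) ∨ (u ∈ B ∧ v ∈ A)

namespace Stmt1Aux

/-- The base relation: hubs (the first `k-2` vertices of the A-side) joined to all
of B except the first B-vertex `a`, and the vertex `a` joined to all of A. -/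
def R (k a : ℕ) (u v : ℕ) : Prop := (u < k - 2 ∧ a + 1 ≤ v) ∨ (u < a ∧ v = a)

instance (k a u v : ℕ) : Decidable (R k a u v) := by unfold R; infer_instance

/-- The extremal graph. -/
def Gr (k a b : ℕ) : SimpleGraph (Fin (a + b)) :=
  fromRel (fun u v => R k a u.val v.val)

instance (k a b : ℕ) : DecidableRel (Gr k a b).Adj :=
  fun u v => decidable_of_iff _ (fromRel_adj _ u v).symm

lemma R_lt {k a u v : ℕ} (hka : k ≤ a) (h : R k a u v) : u < a ∧ a ≤ v := by
  unfold R at h; omega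

lemma adjA {k a b : ℕ} (hka : k ≤ a) {u v : Fin (a + b)}
    (h : (Gr k a b).Adj u v) (hu : u.val < a) : R k a u.val v.val := by
  rw [Gr, fromRel_adj] at h
  rcases h.2 with h | h
  · exact h
  · exact absurd (R_lt hka h).2 (by omega)

lemma adj_sides {k a b : ℕ} (hka : k ≤ a) {u v : Fin (a + b)}
    (h : (Gr k a b).Adj u v) : (u.val < a ↔ ¬ v.val < a) := by
  rw [Gr, fromRel_adj] at h
  rcases h.2 with h | h <;> have := R_lt hka h <;> omega

lemma pigeon (n M : ℕ) (g : Fin n → ℕ) (hg : Function.Injective g)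
    (hb : ∀ j, g j < M) : n ≤ M := by
  have hinj : Function.Injective (fun j : Fin n => (⟨g j, hb j⟩ : Fin M)) := by
    intro x y hxy
    exact hg (by simpa [Fin.ext_iff] using hxy)
  simpa using Fintype.card_le_of_injective _ hinj

lemma no_path {k a b : ℕ} (hk : 3 ≤ k) (hka : k ≤ a) :
    ¬ Contains (Gr k a b) (pathGraph (2 * k - 1)) := by
  rintro ⟨f, hf⟩
  have hn0 : 0 < 2 * k - 1 := by omega
  set F : ℕ → Fin (a + b) := fun i => f ⟨i % (2 * k - 1), Nat.mod_lt _ hn0⟩ with hFdef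
  have hFinj : ∀ i < 2 * k - 1, ∀ j < 2 * k - 1, F i = F j → i = j := by
    intro i hi j hj h
    have := hf h
    simpa [Fin.ext_iff, Nat.mod_eq_of_lt, hi, hj] using this
  have hFadj : ∀ i, i + 1 < 2 * k - 1 → (Gr k a b).Adj (F i) (F (i + 1)) := by
    intro i h
    apply f.map_adj
    rw [pathGraph_adj]
    left
    simp [Nat.mod_eq_of_lt, h, Nat.lt_of_succ_lt h]
  have hub : ∀ i, 0 < i → i + 1 < 2 * k - 1 → (F i).val < a → (F i).val < k - 2 := by
    intro i h0 h1 hA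
    by_contra hge
    have hprev : (Gr k a b).Adj (F i) (F (i - 1)) := by
      have := hFadj (i - 1) (by omega)
      rw [show i - 1 + 1 = i by omega] at this
      exact this.symm
    have hnext := hFadj i h1
    have e1 : (F (i - 1)).val = a := by
      have := adjA hka hprev hA
      unfold R at this; omega
    have e2 : (F (i + 1)).val = a := by
      have := adjA hka hnext hA
      unfold R at this; omega
    have : F (i - 1) = F (i + 1) := Fin.ext (by omega)
    have := hFinj (i - 1) (by omega) (i + 1) (by omega) this
    omega
  by_cases h0 : (F 0).val < a
  · -- even indices are on the A side
    have hA : ∀ i, i < 2 * k - 1 → ((F i).val < a ↔ i % 2 = 0) := by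
      intro i
      induction i with
      | zero => intro _; simp [h0]
      | succ m ih =>
        intro hi
        have h1 := ih (by omega)
        have h2 := adj_sides hka (hFadj m hi)
        have hx : (m + 1) % 2 = 0 ↔ ¬ (m % 2 = 0) := by omega
        rw [hx]
        tauto
    have e0 : ¬ (F 0).val < k - 2 := by
      intro hh
      have := pigeon (k - 1) (k - 2) (fun j => (F (2 * j)).val) ?_ ?_
      · omega
      · intro x y hxy
        have h := hFinj (2 * x) (by omega) (2 * y) (by omega) (Fin.ext hxy)
        exact Fin.ext (by omega)
      · intro j
        show (F (2 * (j : ℕ))).val < k - 2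
        rcases Nat.eq_zero_or_pos (j : ℕ) with hj | hj
        · rw [hj]; simpa using hh
        · exact hub (2 * j) (by omega) (by omega)
            ((hA (2 * j) (by omega)).2 (by omega))
    have eend : ¬ (F (2 * k - 2)).val < k - 2 := by
      intro hh
      have := pigeon (k - 1) (k - 2) (fun j => (F (2 * j + 2)).val) ?_ ?_
      · omega
      · intro x y hxy
        have h := hFinj (2 * x + 2) (by omega) (2 * y + 2) (by omega) (Fin.ext hxy)
        exact Fin.ext (by omega)
      · intro j
        show (F (2 * (j : ℕ) + 2)).val < k - 2
        rcases Nat.lt_or_ge (j : ℕ) (k - 2) with hj | hj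
        · exact hub (2 * j + 2) (by omega) (by omega)
            ((hA (2 * j + 2) (by omega)).2 (by omega))
        · rw [show 2 * (j : ℕ) + 2 = 2 * k - 2 by omega]
          exact hh
    have e1 : (F 1).val = a := by
      have h := adjA hka (hFadj 0 (by omega)) h0
      rw [show (0 : ℕ) + 1 = 1 from rfl] at h
      unfold R at h; omega
    have e2 : (F (2 * k - 3)).val = a := by
      have hadj := hFadj (2 * k - 3) (by omega)
      rw [show 2 * k - 3 + 1 = 2 * k - 2 by omega] at hadj
      have h := adjA hka hadj.symm ((hA (2 * k - 2) (by omega)).2 (by omega))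
      unfold R at h; omega
    have heq : F 1 = F (2 * k - 3) := Fin.ext (by omega)
    have := hFinj 1 (by omega) (2 * k - 3) (by omega) heq
    omega
  · -- odd indices are on the A side; all of them are internal, hence hubs
    have hA : ∀ i, i < 2 * k - 1 → ((F i).val < a ↔ i % 2 = 1) := by
      intro i
      induction i with
      | zero =>
        intro _
        constructor
        · intro hh; exact absurd hh h0
        · intro hh; omega
      | succ m ih =>
        intro hi
        have h1 := ih (by omega)
        have h2 := adj_sides hka (hFadj m hi)
        have hx : (m + 1) % 2 = 1 ↔ ¬ (m % 2 = 1) := by omega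
        rw [hx]
        tauto
    have := pigeon (k - 1) (k - 2) (fun j => (F (2 * j + 1)).val) ?_ ?_
    · omega
    · intro x y hxy
      have h := hFinj (2 * x + 1) (by omega) (2 * y + 1) (by omega) (Fin.ext hxy)
      exact Fin.ext (by omega)
    · intro j
      show (F (2 * (j : ℕ) + 1)).val < k - 2
      exact hub (2 * j + 1) (by omega) (by omega)
        ((hA (2 * j + 1) (by omega)).2 (by omega))

lemma conn {k a b : ℕ} (hk : 3 ≤ k) (hka : k ≤ a) (hab : a ≤ b) :
    (Gr k a b).Connected := by
  have hw : a < a + b := by omega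
  rw [connected_iff]
  refine ⟨fun u v => ?_, ⟨⟨0, by omega⟩⟩⟩
  suffices h : ∀ x : Fin (a + b), (Gr k a b).Reachable x ⟨a, hw⟩ from
    (h u).trans (h v).symm
  intro x
  rcases lt_trichotomy x.val a with h | h | h
  · refine Adj.reachable ?_
    rw [Gr, fromRel_adj]
    exact ⟨Fin.ne_of_val_ne (show x.val ≠ a by omega),
      Or.inl (Or.inr ⟨h, rfl⟩)⟩
  · have : x = ⟨a, hw⟩ := Fin.ext h
    rw [this]
  · have h1 : (Gr k a b).Adj ⟨0, by omega⟩ x := by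
      rw [Gr, fromRel_adj]
      exact ⟨Fin.ne_of_val_ne (show (0 : ℕ) ≠ x.val by omega),
        Or.inl (Or.inl ⟨show (0 : ℕ) < k - 2 by omega, show a + 1 ≤ x.val by omega⟩)⟩
    have h2 : (Gr k a b).Adj ⟨0, by omega⟩ ⟨a, hw⟩ := by
      rw [Gr, fromRel_adj]
      exact ⟨Fin.ne_of_val_ne (show (0 : ℕ) ≠ a by omega),
        Or.inl (Or.inr ⟨show (0 : ℕ) < a by omega, rfl⟩)⟩
    exact h1.symm.reachable.trans h2.reachable

lemma count {k a b : ℕ} (hk : 3 ≤ k) (hka : k ≤ a) (hab : a ≤ b) :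
    (Gr k a b).edgeFinset.card = (k - 2) * (b - 1) + a := by
  classical
  set F : Finset (ℕ × ℕ) :=
    (Finset.range (k - 2) ×ˢ Finset.Ico (a + 1) (a + b)) ∪
      (Finset.range a ×ˢ {a}) with hFdef
  have memF : ∀ p : ℕ × ℕ, p ∈ F →
      p.1 < a ∧ a ≤ p.2 ∧ p.2 < a + b ∧ R k a p.1 p.2 := by
    intro p hp
    simp only [hFdef, Finset.mem_union, Finset.mem_product, Finset.mem_range,
      Finset.mem_Ico, Finset.mem_singleton] at hp
    unfold R
    omega
  have hdisj : Disjoint (Finset.range (k - 2) ×ˢ Finset.Ico (a + 1) (a + b))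
      ((Finset.range a) ×ˢ ({a} : Finset ℕ)) := by
    rw [Finset.disjoint_left]
    intro p hp hq
    simp only [Finset.mem_product, Finset.mem_range, Finset.mem_Ico,
      Finset.mem_singleton] at hp hq
    omega
  have hcard : F.card = (k - 2) * (b - 1) + a := by
    rw [hFdef, Finset.card_union_of_disjoint hdisj, Finset.card_product,
      Finset.card_product, Finset.card_range, Finset.card_range, Nat.card_Ico,
      Finset.card_singleton]
    have : a + b - (a + 1) = b - 1 := by omega
    rw [this, mul_one]
  rw [← hcard]
  symm
  apply Finset.card_bij (fun p hp =>
    s((⟨p.1, by have := memF p hp; omega⟩ : Fin (a + b)),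
      (⟨p.2, (memF p hp).2.2.1⟩ : Fin (a + b))))
  · intro p hp
    rw [mem_edgeFinset, mem_edgeSet, Gr, fromRel_adj]
    have h := memF p hp
    exact ⟨Fin.ne_of_val_ne (show p.1 ≠ p.2 by omega), Or.inl h.2.2.2⟩
  · intro p hp q hq h
    have hp' := memF p hp
    have hq' := memF q hq
    rw [Sym2.eq_iff] at h
    rcases h with ⟨h1, h2⟩ | ⟨h1, h2⟩ <;>
      · rw [Fin.ext_iff] at h1 h2
        simp only at h1 h2
        exact Prod.ext (by omega) (by omega)
  · intro e he
    induction e using Sym2.ind with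
    | _ x y =>
      rw [mem_edgeFinset, mem_edgeSet, Gr, fromRel_adj] at he
      rcases he.2 with hR | hR
      · have hlt := R_lt hka hR
        refine ⟨(x.val, y.val), ?_, ?_⟩
        · simp only [hFdef, Finset.mem_union, Finset.mem_product,
            Finset.mem_range, Finset.mem_Ico, Finset.mem_singleton]
          have hy := y.2
          unfold R at hR
          omega
        · simp [Sym2.eq_iff, Fin.ext_iff]
      · have hlt := R_lt hka hR
        refine ⟨(y.val, x.val), ?_, ?_⟩
        · simp only [hFdef, Finset.mem_union, Finset.mem_product,
            Finset.mem_range, Finset.mem_Ico, Finset.mem_singleton]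
          have hx := x.2
          unfold R at hR
          omega
        · rw [Sym2.eq_swap]

end Stmt1Aux

open Stmt1Aux in
/-- For every `k ≥ 3` and all `b ≥ a ≥ k`, there is a connected bipartite graph with
part sizes `a` and `b`, with no path on `2k-1` vertices (hence also none on `2k`
vertices) as a subgraph, having exactly `(k-2)(b-1) + a` edges. -/
theorem stmt1 (k a b : ℕ) (hk : 3 ≤ k) (hka : k ≤ a) (hab : a ≤ b) :
    ∃ (G : SimpleGraph (Fin (a + b))) (A B : Finset (Fin (a + b))),
      IsBipartition G A B ∧ A.card = a ∧ B.card = b ∧ G.Connected ∧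
      ¬ Contains G (pathGraph (2 * k - 1)) ∧ ¬ Contains G (pathGraph (2 * k)) ∧
      G.edgeSet.ncard = (k - 2) * (b - 1) + a := by
  classical
  refine ⟨Gr k a b, Finset.univ.filter (fun v => v.val < a),
    Finset.univ.filter (fun v => a ≤ v.val), ?_, ?_, ?_, conn hk hka hab, ?_, ?_, ?_⟩
  · refine ⟨fun v => ?_, fun v => ?_, fun u v h => ?_⟩
    · simp only [Finset.mem_filter, Finset.mem_univ, true_and]
      omega
    · simp only [Finset.mem_filter, Finset.mem_univ, true_and]
      omega
    · rw [Gr, fromRel_adj] at h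
      simp only [Finset.mem_filter, Finset.mem_univ, true_and]
      rcases h.2 with h | h <;> have := R_lt hka h <;> omega
  · have hA : (Finset.univ.filter (fun v : Fin (a + b) => v.val < a)).card
        = (Finset.univ : Finset (Fin a)).card := by
      apply Finset.card_bij (fun (v : Fin (a + b)) hv =>
        (⟨v.val, by simpa using hv⟩ : Fin a))
      · intro v hv; exact Finset.mem_univ _
      · intro p hp q hq h
        exact Fin.ext (by simpa [Fin.ext_iff] using h)
      · intro j _
        exact ⟨⟨j.val, by omega⟩, by simp [j.2], rfl⟩
    rw [hA, Finset.card_univ, Fintype.card_fin]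
  · have hB : (Finset.univ.filter (fun v : Fin (a + b) => a ≤ v.val)).card
        = (Finset.univ : Finset (Fin b)).card := by
      apply Finset.card_bij (fun (v : Fin (a + b)) hv => (⟨v.val - a, by
        simp only [Finset.mem_filter, Finset.mem_univ, true_and] at hv
        have := v.2; omega⟩ : Fin b))
      · intro v hv; exact Finset.mem_univ _
      · intro p hp q hq h
        simp only [Finset.mem_filter, Finset.mem_univ, true_and] at hp hq
        rw [Fin.ext_iff] at h
        exact Fin.ext (by simp only at h; omega)
      · intro j _
        refine ⟨⟨a + j.val, by omega⟩, by simp, ?_⟩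
        exact Fin.ext (by simp)
    rw [hB, Finset.card_univ, Fintype.card_fin]
  · exact no_path hk hka
  · intro h
    refine no_path hk hka (b := b) ?_
    obtain ⟨f, hf⟩ := h
    have hle : 2 * k - 1 ≤ 2 * k := by omega
    refine ⟨f.comp ⟨Fin.castLE hle, ?_⟩, ?_⟩
    · intro u v h
      rw [pathGraph_adj] at h ⊢
      simpa using h
    · exact hf.comp (Fin.castLE_injective hle)
  · rw [← coe_edgeFinset, Set.ncard_coe_finset]
    exact count hk hka hab
end

section
/- For every integer k ≥ 3, every connected bipartite simple graph with bipartition (A,B) satisfying |A| = |B| = k and containing no path on 2k vertices as a subgraph has at most (k-1)² + 1 edges. -/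
open SimpleGraph

section Aux
open Finset

section lemA

variable {α : Type*} (R : α → α → Prop) [DecidableRel R]

/-- number of "missing arcs" between `v` and the elements of `l`. -/
def missc (v : α) (l : List α) : ℕ :=
  (l.countP fun z => ¬ R v z) + (l.countP fun z => ¬ R z v)

/-- auxiliary count: given previous element `p` and the rest of the list,
counts, for each consecutive pair `(a,b)` of `p :: t`, missing arcs `a → v`
and `v → b`, plus the missing arc `last → v`. -/
def gcount (v : α) : α → List α → ℕ
  | p, [] => if R p v then 0 else 1
  | p, q :: t => ((if R p v then 0 else 1) + (if R v q then 0 else 1)) + gcount v q t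

lemma missc_nil (v : α) : missc R v [] = 0 := rfl

lemma missc_cons (v p : α) (t : List α) :
    missc R v (p :: t) =
      ((if R v p then 0 else 1) + (if R p v then 0 else 1)) + missc R v t := by
  simp only [missc, List.countP_cons]
  split_ifs <;> simp_all <;> omega

lemma missc_eq_gcount (v : α) : ∀ (t : List α) (p : α),
    missc R v (p :: t) = (if R v p then 0 else 1) + gcount R v p t
  | [], p => by
      rw [missc_cons, missc_nil, gcount]
      omega
  | q :: t, p => by
      rw [missc_cons, missc_eq_gcount v t q, gcount]
      ring

lemma gcount_ge (v : α) : ∀ (t : List α) (p : α),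
    List.Chain' R (p :: t) →
    (∀ l₁ l₂ : List α, p :: t = l₁ ++ l₂ → l₁ ≠ [] → ¬ List.Chain' R (l₁ ++ v :: l₂)) →
    t.length + 1 ≤ gcount R v p t
  | [], p, _, hfail => by
      have h1 : ¬ R p v := by
        intro h
        exact hfail [p] [] rfl (by simp) (List.isChain_pair.2 h)
      rw [gcount]
      simp [h1]
  | q :: t', p, hch, hfail => by
      have hch' : List.Chain' R (q :: t') := (List.isChain_cons_cons.1 hch).2
      have hpq : R p q := (List.isChain_cons_cons.1 hch).1
      have h1 : ¬ (R p v ∧ R v q) := by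
        rintro ⟨h1, h2⟩
        exact hfail [p] (q :: t') rfl (by simp)
          (List.isChain_cons_cons.2 ⟨h1, List.isChain_cons_cons.2 ⟨h2, hch'⟩⟩)
      have hfail' : ∀ l₁ l₂ : List α, q :: t' = l₁ ++ l₂ → l₁ ≠ [] →
          ¬ List.Chain' R (l₁ ++ v :: l₂) := by
        intro l₁ l₂ heq hne hchain
        apply hfail (p :: l₁) l₂ (by rw [heq]; rfl) (by simp)
        rcases l₁ with _ | ⟨x, l₁'⟩
        · exact absurd rfl hne
        · have hx : x = q := by
            have := congrArg List.head? heq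
            simpa using this.symm
          subst hx
          exact List.isChain_cons_cons.2 ⟨hpq, hchain⟩
      have hIH := gcount_ge v t' q hch' hfail'
      rw [gcount]
      have : 1 ≤ (if R p v then 0 else 1) + (if R v q then 0 else 1) := by
        split_ifs with hA hB <;> simp_all
      simp only [List.length_cons]
      omega

/-- If `v` has at most `l.length` missing arcs to/from `l`, it can be inserted. -/
lemma insertable (v : α) (l : List α) (hch : List.Chain' R l)
    (hm : missc R v l ≤ l.length) :
    ∃ l₁ l₂ : List α, l = l₁ ++ l₂ ∧ List.Chain' R (l₁ ++ v :: l₂) := by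
  by_contra hfail
  push_neg at hfail
  rcases l with _ | ⟨p, t⟩
  · exact hfail [] [] rfl (List.isChain_singleton v)
  · have hvp : ¬ R v p := by
      intro h
      exact hfail [] (p :: t) rfl (List.isChain_cons_cons.2 ⟨h, hch⟩)
    have hg := gcount_ge R v t p hch (fun l₁ l₂ heq hne => hfail l₁ l₂ heq)
    have heq := missc_eq_gcount R v t p
    rw [if_neg hvp] at heq
    simp only [List.length_cons] at hm
    omega

end lemA

section lemA2

variable {α : Type*} [Fintype α] [DecidableEq α] (R : α → α → Prop) [DecidableRel R]

lemma grow : ∀ (n : ℕ) (l : List α), l.Nodup → List.Chain' R l →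
    l.length + n = Fintype.card α →
    (∃ h : List α, h.Nodup ∧ List.Chain' R h ∧ h.length = Fintype.card α) ∨
    (∃ l' : List α, l'.Nodup ∧ List.Chain' R l' ∧ (∀ x ∈ l, x ∈ l') ∧
      l'.length < Fintype.card α ∧ ∀ w, w ∉ l' → l'.length + 1 ≤ missc R w l')
  | 0, l, hnd, hch, hlen => Or.inl ⟨l, hnd, hch, by omega⟩
  | n + 1, l, hnd, hch, hlen => by
    by_cases hins : ∃ w, w ∉ l ∧ missc R w l ≤ l.length
    · obtain ⟨w, hwl, hwm⟩ := hins
      obtain ⟨l₁, l₂, rfl, hch'⟩ := insertable R w l hch hwm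
      have hperm : (l₁ ++ w :: l₂).Perm (w :: (l₁ ++ l₂)) := List.perm_middle
      have hnd' : (l₁ ++ w :: l₂).Nodup :=
        hperm.nodup_iff.2 (List.nodup_cons.2 ⟨hwl, hnd⟩)
      have hlen' : (l₁ ++ w :: l₂).length + n = Fintype.card α := by
        have := hperm.length_eq
        simp only [List.length_cons] at this
        omega
      rcases grow n (l₁ ++ w :: l₂) hnd' hch' hlen' with h | ⟨l', h1, h2, h3, h4, h5⟩
      · exact Or.inl h
      · refine Or.inr ⟨l', h1, h2, fun x hx => h3 x ?_, h4, h5⟩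
        exact (hperm.mem_iff).2 (List.mem_cons_of_mem _ hx)
    · push_neg at hins
      exact Or.inr ⟨l, hnd, hch, fun x hx => hx, by omega,
        fun w hw => hins w hw⟩

/-- the global count of missing arcs. -/
def dcount : ℕ := #(Finset.univ.filter fun p : α × α => p.1 ≠ p.2 ∧ ¬ R p.1 p.2)

omit [Fintype α] in
lemma missc_le_pairs (v : α) (l : List α) (hnd : l.Nodup) (hvl : v ∉ l) :
    missc R v l =
      #((({v} : Finset α) ×ˢ l.toFinset).filter fun p : α × α => ¬ R p.1 p.2) +
      #((l.toFinset ×ˢ ({v} : Finset α)).filter fun p : α × α => ¬ R p.1 p.2) := by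
  have h1 : (({v} : Finset α) ×ˢ l.toFinset).filter (fun p : α × α => ¬ R p.1 p.2)
      = (l.toFinset.filter fun z => ¬ R v z).image (fun z => (v, z)) := by
    ext ⟨a, b⟩
    simp only [Finset.mem_filter, Finset.mem_product, Finset.mem_singleton,
      Finset.mem_image]
    constructor
    · rintro ⟨⟨rfl, hb⟩, hr⟩; exact ⟨b, ⟨hb, hr⟩, rfl⟩
    · rintro ⟨z, ⟨hz, hr⟩, h⟩; cases h; exact ⟨⟨rfl, hz⟩, hr⟩
  have h2 : ((l.toFinset ×ˢ ({v} : Finset α)).filter fun p : α × α => ¬ R p.1 p.2)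
      = (l.toFinset.filter fun z => ¬ R z v).image (fun z => (z, v)) := by
    ext ⟨a, b⟩
    simp only [Finset.mem_filter, Finset.mem_product, Finset.mem_singleton,
      Finset.mem_image]
    constructor
    · rintro ⟨⟨ha, rfl⟩, hr⟩; exact ⟨a, ⟨ha, hr⟩, rfl⟩
    · rintro ⟨z, ⟨hz, hr⟩, h⟩; cases h; exact ⟨⟨hz, rfl⟩, hr⟩
  rw [h1, h2, Finset.card_image_of_injective _ (fun a b h => (Prod.mk.injEq _ _ _ _ ▸ h :  _ ∧ _).2),
    Finset.card_image_of_injective _ (fun a b h => (Prod.mk.injEq _ _ _ _ ▸ h : _ ∧ _).1)]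
  have e1 : (l.toFinset.filter fun z => ¬ R v z) = (l.filter fun z => ¬ R v z).toFinset := by
    ext z; simp [List.mem_filter, and_comm]
  have e2 : (l.toFinset.filter fun z => ¬ R z v) = (l.filter fun z => ¬ R z v).toFinset := by
    ext z; simp [List.mem_filter, and_comm]
  rw [e1, e2, List.toFinset_card_of_nodup (hnd.filter _),
    List.toFinset_card_of_nodup (hnd.filter _)]
  simp [missc, List.countP_eq_length_filter]

end lemA2

section lemA3

set_option linter.unusedSectionVars false

variable {α : Type*} [Fintype α] [DecidableEq α] (R : α → α → Prop) [DecidableRel R]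

lemma sum_missc_le (l : List α) (hnd : l.Nodup) :
    ∑ w ∈ Finset.univ \ l.toFinset, missc R w l ≤ dcount R := by
  classical
  set s := Finset.univ \ l.toFinset with hs
  have hdisj : ∀ w ∈ s, w ∉ l := by
    intro w hw
    simp only [hs, Finset.mem_sdiff, List.mem_toFinset] at hw
    exact hw.2
  have hsum : ∑ w ∈ s, missc R w l =
      ∑ w ∈ s, (#((({w} : Finset α) ×ˢ l.toFinset).filter fun p : α × α => ¬ R p.1 p.2) +
        #((l.toFinset ×ˢ ({w} : Finset α)).filter fun p : α × α => ¬ R p.1 p.2)) :=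
    Finset.sum_congr rfl fun w hw => missc_le_pairs R w l hnd (hdisj w hw)
  rw [hsum, Finset.sum_add_distrib]
  have hT1 : ∑ w ∈ s, #((({w} : Finset α) ×ˢ l.toFinset).filter fun p : α × α => ¬ R p.1 p.2)
      = #((s ×ˢ l.toFinset).filter fun p : α × α => ¬ R p.1 p.2) := by
    rw [Finset.card_filter, Finset.sum_product]
    refine Finset.sum_congr rfl fun w hw => ?_
    rw [Finset.card_filter, Finset.sum_product, Finset.sum_singleton]
  have hT2 : ∑ w ∈ s, #((l.toFinset ×ˢ ({w} : Finset α)).filter fun p : α × α => ¬ R p.1 p.2)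
      = #((l.toFinset ×ˢ s).filter fun p : α × α => ¬ R p.1 p.2) := by
    rw [Finset.card_filter, Finset.sum_product_right]
    refine Finset.sum_congr rfl fun w hw => ?_
    rw [Finset.card_filter, Finset.sum_product_right, Finset.sum_singleton]
  rw [hT1, hT2]
  have hdisj2 : Disjoint ((s ×ˢ l.toFinset).filter fun p : α × α => ¬ R p.1 p.2)
      ((l.toFinset ×ˢ s).filter fun p : α × α => ¬ R p.1 p.2) := by
    refine Finset.disjoint_left.2 ?_
    rintro ⟨a, b⟩ h1 h2
    simp only [Finset.mem_filter, Finset.mem_product, hs, Finset.mem_sdiff,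
      List.mem_toFinset] at h1 h2
    exact h1.1.1.2 h2.1.1
  rw [← Finset.card_union_of_disjoint hdisj2]
  apply Finset.card_le_card
  rintro ⟨a, b⟩ h
  simp only [Finset.mem_union, Finset.mem_filter, Finset.mem_product, hs,
    Finset.mem_sdiff, List.mem_toFinset] at h
  simp only [dcount, Finset.mem_filter, Finset.mem_univ, true_and]
  rcases h with ⟨⟨⟨_, ha⟩, hb⟩, hr⟩ | ⟨⟨ha, ⟨_, hb⟩⟩, hr⟩
  · exact ⟨fun h => ha (h ▸ hb), hr⟩
  · exact ⟨fun h => hb (h ▸ ha), hr⟩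

lemma missc_le_incident (v : α) (l : List α) (hnd : l.Nodup) (hvl : v ∉ l) :
    missc R v l ≤
      #(Finset.univ.filter fun p : α × α =>
        (p.1 = v ∨ p.2 = v) ∧ p.1 ≠ p.2 ∧ ¬ R p.1 p.2) := by
  rw [missc_le_pairs R v l hnd hvl]
  have hdisj2 : Disjoint ((({v} : Finset α) ×ˢ l.toFinset).filter fun p : α × α => ¬ R p.1 p.2)
      ((l.toFinset ×ˢ ({v} : Finset α)).filter fun p : α × α => ¬ R p.1 p.2) := by
    refine Finset.disjoint_left.2 ?_
    rintro ⟨a, b⟩ h1 h2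
    simp only [Finset.mem_filter, Finset.mem_product, Finset.mem_singleton,
      List.mem_toFinset] at h1 h2
    exact hvl (h1.1.1 ▸ h2.1.1)
  rw [← Finset.card_union_of_disjoint hdisj2]
  apply Finset.card_le_card
  rintro ⟨a, b⟩ h
  simp only [Finset.mem_union, Finset.mem_filter, Finset.mem_product,
    Finset.mem_singleton, List.mem_toFinset] at h
  simp only [Finset.mem_filter, Finset.mem_univ, true_and]
  rcases h with ⟨⟨rfl, hb⟩, hr⟩ | ⟨⟨ha, rfl⟩, hr⟩
  · exact ⟨Or.inl rfl, fun h => hvl (h ▸ hb), hr⟩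
  · exact ⟨Or.inr rfl, fun h => hvl (h.symm ▸ ha), hr⟩

lemma lemA (k : ℕ) (hk : 3 ≤ k) (hcard : Fintype.card α = k)
    (hD : dcount R + 3 ≤ 2 * k) :
    ∃ l : List α, l.Nodup ∧ List.Chain' R l ∧ l.length = k := by
  classical
  have hne : Nonempty α := Fintype.card_pos_iff.1 (by omega)
  -- a helper deriving facts from a stuck state
  have stuck : ∀ l' : List α, l'.Nodup → l'.length ≠ 0 → l'.length < k →
      (∀ w, w ∉ l' → l'.length + 1 ≤ missc R w l') → l'.length = k - 1 := by
    intro l' hnd hne0 hlt hmiss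
    set m := l'.length with hm
    have hcards : #(Finset.univ \ l'.toFinset) = k - m := by
      rw [Finset.card_sdiff_of_subset (Finset.subset_univ _), List.toFinset_card_of_nodup hnd,
        Finset.card_univ, hcard]
    have hsum : (k - m) * (m + 1) ≤ dcount R := by
      calc (k - m) * (m + 1) = ∑ _w ∈ Finset.univ \ l'.toFinset, (m + 1) := by
            rw [Finset.sum_const, hcards, smul_eq_mul]
        _ ≤ ∑ w ∈ Finset.univ \ l'.toFinset, missc R w l' := by
            refine Finset.sum_le_sum fun w hw => ?_
            simp only [Finset.mem_sdiff, List.mem_toFinset] at hw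
            exact hmiss w hw.2
        _ ≤ dcount R := sum_missc_le R l' hnd
    by_contra hne1
    -- then k - m ≥ 2, m ≥ 1, so (k-m)(m+1) ≥ 2k-2 > dcount
    have h2 : 2 ≤ k - m := by omega
    have h1 : 1 ≤ m := by omega
    obtain ⟨a, ha⟩ : ∃ a, k - m = a + 2 := ⟨k - m - 2, by omega⟩
    obtain ⟨b, hb⟩ : ∃ b, m = b + 1 := ⟨m - 1, by omega⟩
    rw [ha, hb] at hsum
    have hab : (a + 2) * (b + 1 + 1) = a * b + 2 * a + 2 * b + 4 := by ring
    omega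
  -- first run
  obtain ⟨x₀⟩ := hne
  have hrun1 := grow R (k - 1) [x₀] (by simp) (List.isChain_singleton _) (by simp; omega)
  rcases hrun1 with ⟨h, hh1, hh2, hh3⟩ | ⟨l₁, hnd₁, hch₁, hmem₁, hlt₁, hmiss₁⟩
  · exact ⟨h, hh1, hh2, by omega⟩
  have hne₁ : l₁.length ≠ 0 := by
    have := hmem₁ x₀ (by simp)
    intro h0
    rw [List.length_eq_zero_iff] at h0
    simp [h0] at this
  have hl₁ : l₁.length = k - 1 := stuck l₁ hnd₁ hne₁ (by omega) hmiss₁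
  -- get the vertex outside l₁
  have : l₁.toFinset ≠ Finset.univ := by
    intro h
    have := congrArg Finset.card h
    rw [List.toFinset_card_of_nodup hnd₁, Finset.card_univ, hcard] at this
    omega
  obtain ⟨u, hu⟩ : ∃ u, u ∉ l₁ := by
    by_contra hall
    push_neg at hall
    exact this (Finset.eq_univ_iff_forall.2 fun x => List.mem_toFinset.2 (hall x))
  have humiss : k ≤ missc R u l₁ := by
    have := hmiss₁ u hu; omega
  -- second run
  have hrun2 := grow R (k - 1) [u] (by simp) (List.isChain_singleton _) (by simp; omega)
  rcases hrun2 with ⟨h, hh1, hh2, hh3⟩ | ⟨l₂, hnd₂, hch₂, hmem₂, hlt₂, hmiss₂⟩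
  · exact ⟨h, hh1, hh2, by omega⟩
  have hul₂ : u ∈ l₂ := hmem₂ u (by simp)
  have hne₂ : l₂.length ≠ 0 := by
    intro h0; rw [List.length_eq_zero_iff] at h0; simp [h0] at hul₂
  have hl₂ : l₂.length = k - 1 := stuck l₂ hnd₂ hne₂ (by omega) hmiss₂
  obtain ⟨w, hw⟩ : ∃ w, w ∉ l₂ := by
    by_contra hall
    push_neg at hall
    have : l₂.toFinset = Finset.univ := Finset.eq_univ_iff_forall.2 fun x =>
      List.mem_toFinset.2 (hall x)
    have := congrArg Finset.card this
    rw [List.toFinset_card_of_nodup hnd₂, Finset.card_univ, hcard] at this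
    omega
  have hwu : w ≠ u := fun h => hw (h ▸ hul₂)
  have hwmiss : k ≤ missc R w l₂ := by
    have := hmiss₂ w hw; omega
  -- incident sets
  set U := Finset.univ.filter (fun p : α × α => (p.1 = u ∨ p.2 = u) ∧ p.1 ≠ p.2 ∧ ¬ R p.1 p.2)
    with hU
  set W := Finset.univ.filter (fun p : α × α => (p.1 = w ∨ p.2 = w) ∧ p.1 ≠ p.2 ∧ ¬ R p.1 p.2)
    with hW
  have hUk : k ≤ #U := le_trans humiss (missc_le_incident R u l₁ hnd₁ hu)
  have hWk : k ≤ #W := le_trans hwmiss (missc_le_incident R w l₂ hnd₂ hw)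
  have hUW : U ∪ W ⊆ Finset.univ.filter fun p : α × α => p.1 ≠ p.2 ∧ ¬ R p.1 p.2 := by
    rintro ⟨a, b⟩ h
    simp only [hU, hW, Finset.mem_union, Finset.mem_filter, Finset.mem_univ, true_and] at h ⊢
    rcases h with ⟨_, h⟩ | ⟨_, h⟩ <;> exact h
  have hinter : U ∩ W ⊆ ({(u, w), (w, u)} : Finset (α × α)) := by
    rintro ⟨a, b⟩ h
    simp only [hU, hW, Finset.mem_inter, Finset.mem_filter, Finset.mem_univ, true_and] at h
    obtain ⟨⟨h1, hne', _⟩, ⟨h2, _, _⟩⟩ := h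
    simp only [Finset.mem_insert, Finset.mem_singleton, Prod.mk.injEq]
    rcases h1 with ha | hb
    · rcases h2 with ha' | hb'
      · exact (hwu (ha'.symm.trans ha)).elim
      · exact Or.inl ⟨ha, hb'⟩
    · rcases h2 with ha' | hb'
      · exact Or.inr ⟨ha', hb⟩
      · exact (hwu (hb'.symm.trans hb)).elim
  have hcard2 : #(U ∩ W) ≤ 2 := le_trans (Finset.card_le_card hinter)
    (le_trans (Finset.card_insert_le _ _) (by simp))
  have := Finset.card_union_add_card_inter U W
  have hunion : #(U ∪ W) ≤ dcount R := Finset.card_le_card hUW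
  omega

end lemA3

section weave

variable {α β : Type*}

/-- interleave two images of a list. -/
def weave (f g : α → β) : List α → List β
  | [] => []
  | a :: t => f a :: g a :: weave f g t

lemma weave_length (f g : α → β) : ∀ l : List α, (weave f g l).length = 2 * l.length
  | [] => rfl
  | a :: t => by rw [weave, List.length_cons, List.length_cons, weave_length f g t,
      List.length_cons]; ring

lemma weave_perm (f g : α → β) : ∀ l : List α, (weave f g l).Perm (l.map f ++ l.map g)
  | [] => by simp [weave]
  | a :: t => by
      rw [weave, List.map_cons, List.map_cons, List.cons_append]
      refine List.Perm.cons _ ?_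
      exact ((weave_perm f g t).cons (g a)).trans List.perm_middle.symm

lemma weave_chain' (f g : α → β) (S : β → β → Prop) (R : α → α → Prop)
    (hfg : ∀ a, S (f a) (g a)) (hgf : ∀ a b, R a b → S (g a) (f b)) :
    ∀ l : List α, l.Chain' R → (weave f g l).Chain' S
  | [], _ => List.isChain_nil
  | [a], _ => by
      rw [weave, weave]
      exact List.isChain_pair.2 (hfg a)
  | a :: b :: t, hch => by
      rw [weave]
      have hab : R a b := (List.isChain_cons_cons.1 hch).1
      have ht : List.Chain' R (b :: t) := (List.isChain_cons_cons.1 hch).2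
      have hrec := weave_chain' f g S R hfg hgf (b :: t) ht
      rw [weave] at hrec ⊢
      exact List.isChain_cons_cons.2 ⟨hfg a, List.isChain_cons_cons.2 ⟨hgf a b hab, hrec⟩⟩

end weave

open SimpleGraph


end Aux

open Finset in
/-- For every `k ≥ 3`, every connected bipartite graph with both classes of size `k`
and no path on `2k` vertices as a subgraph has at most `(k-1)² + 1` edges. -/
theorem stmt5 {V : Type*} [Fintype V] (G : SimpleGraph V) (A B : Finset V) (k : ℕ)
    (hk : 3 ≤ k) (hbip : IsBipartition G A B) (hA : A.card = k) (hB : B.card = k)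
    (hconn : G.Connected) (hfree : ¬ Contains G (pathGraph (2 * k))) :
    G.edgeSet.ncard ≤ (k - 1) ^ 2 + 1 := by
  classical
  obtain ⟨hcover, hdisj, hedge⟩ := hbip
  -- basic facts
  have hdisjAB : Disjoint A B := Finset.disjoint_left.2 fun v hvA hvB => hdisj v ⟨hvA, hvB⟩
  have huniv : (Finset.univ : Finset V) = A ∪ B :=
    (Finset.eq_univ_iff_forall.2 fun v => Finset.mem_union.2 (hcover v)).symm
  have hcardV : Fintype.card V = 2 * k := by
    rw [← Finset.card_univ, huniv, Finset.card_union_of_disjoint hdisjAB, hA, hB]; ring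
  -- every vertex has a neighbor
  have hnbr : ∀ v : V, ∃ u : V, G.Adj v u := by
    intro v
    obtain ⟨y, hy⟩ := Fintype.exists_ne_of_one_lt_card (by omega) v
    obtain ⟨w⟩ := hconn.preconnected v y
    cases w with
    | nil => exact absurd rfl hy.symm
    | cons h p => exact ⟨_, h⟩
  -- neighborhoods
  have hnbrA : ∀ a ∈ A, G.neighborFinset a = B.filter (G.Adj a) := by
    intro a ha
    ext w
    rw [mem_neighborFinset, Finset.mem_filter]
    constructor
    · intro h
      rcases hedge h with ⟨_, hw⟩ | ⟨haB, _⟩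
      · exact ⟨hw, h⟩
      · exact absurd ⟨ha, haB⟩ (hdisj a)
    · exact fun h => h.2
  have hnbrB : ∀ b ∈ B, G.neighborFinset b = A.filter (fun a => G.Adj a b) := by
    intro b hb
    ext w
    rw [mem_neighborFinset, Finset.mem_filter]
    constructor
    · intro h
      rcases hedge h with ⟨hbA, _⟩ | ⟨_, hw⟩
      · exact absurd ⟨hbA, hb⟩ (hdisj b)
      · exact ⟨hw, h.symm⟩
    · exact fun h => h.2.symm
  -- the adjacency pair set and missing pair set
  set P := (A ×ˢ B).filter (fun p : V × V => G.Adj p.1 p.2) with hP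
  set M := (A ×ˢ B).filter (fun p : V × V => ¬ G.Adj p.1 p.2) with hM
  have hPM : #P + #M = k * k := by
    rw [hP, hM, Finset.card_filter_add_card_filter_not, Finset.card_product, hA, hB]
  -- edge count equals #P
  have hedgecount : #G.edgeFinset = #P := by
    have hsum := G.sum_degrees_eq_twice_card_edges
    rw [huniv, Finset.sum_union hdisjAB] at hsum
    have hPA : #P = ∑ a ∈ A, G.degree a := by
      rw [hP, Finset.card_filter, Finset.sum_product]
      refine Finset.sum_congr rfl fun a ha => ?_
      rw [SimpleGraph.degree, hnbrA a ha, Finset.card_filter]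
    have hPB : #P = ∑ b ∈ B, G.degree b := by
      rw [hP, Finset.card_filter, Finset.sum_product_right]
      refine Finset.sum_congr rfl fun b hb => ?_
      rw [SimpleGraph.degree, hnbrB b hb, Finset.card_filter]
    omega
  have hncard : G.edgeSet.ncard = #G.edgeFinset := by
    have := Set.ncard_coe_finset G.edgeFinset
    rw [coe_edgeFinset] at this
    exact this
  -- main contradiction argument
  by_contra hcon
  push_neg at hcon
  rw [hncard, hedgecount] at hcon
  obtain ⟨K, rfl⟩ : ∃ K, k = K + 3 := ⟨k - 3, by omega⟩
  set k := K + 3 with hkdef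
  have hsq : (k - 1) ^ 2 = (K + 2) * (K + 2) := by
    have : k - 1 = K + 2 := by omega
    rw [this]; ring
  have hMcard : #M + 3 ≤ 2 * k := by
    have hkk : k * k = (K + 2) * (K + 2) + 2 * k - 1 := by rw [hkdef]; ring_nf; omega
    omega
  -- Hall's condition
  by_cases hall : ∀ s : Finset ↥A, #s ≤ #(s.biUnion (fun a => G.neighborFinset ↑a))
  · -- Hall holds: get a perfect matching, then a Hamiltonian path, contradiction
    obtain ⟨f, hfinj, hfm⟩ :=
      (Finset.all_card_le_biUnion_card_iff_exists_injective
        (fun a : ↥A => G.neighborFinset ↑a)).1 hall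
    have hfadj : ∀ x : ↥A, G.Adj ↑x (f x) := by
      intro x
      have := hfm x
      rwa [mem_neighborFinset] at this
    have hfB : ∀ x : ↥A, f x ∈ B := by
      intro x
      rcases hedge (hfadj x) with ⟨_, h⟩ | ⟨hxB, _⟩
      · exact h
      · exact absurd ⟨x.2, hxB⟩ (hdisj ↑x)
    set R : ↥A → ↥A → Prop := fun i j => G.Adj (f i) ↑j with hR
    have hcardA : Fintype.card ↥A = k := by rw [Fintype.card_coe, hA]
    have hD : dcount R + 3 ≤ 2 * k := by
      refine le_trans (Nat.add_le_add_right ?_ 3) hMcard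
      rw [dcount]
      apply Finset.card_le_card_of_injOn (fun p => ((↑p.2 : V), f p.1))
      · rintro ⟨i, j⟩ hp
        simp only [Finset.mem_coe, Finset.mem_filter, Finset.mem_univ, true_and, hR] at hp
        rw [Finset.mem_coe, hM, Finset.mem_filter, Finset.mem_product]
        exact ⟨⟨j.2, hfB i⟩, fun h => hp.2 h.symm⟩
      · rintro ⟨i, j⟩ _ ⟨i', j'⟩ _ h
        simp only [Prod.mk.injEq] at h
        have h1 : j = j' := Subtype.ext h.1
        have h2 : i = i' := hfinj h.2
        rw [h1, h2]
    obtain ⟨l, hlnd, hlch, hllen⟩ := lemA R k hk hcardA hD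
    -- build the Hamiltonian path
    set L : List V := weave (fun i : ↥A => (↑i : V)) (fun i : ↥A => (f i : V)) l with hL
    have hLlen : L.length = 2 * k := by rw [hL, weave_length, hllen]
    have hLchain : L.Chain' G.Adj := by
      refine weave_chain' _ _ G.Adj R (fun a => hfadj a) (fun a b hab => hab) l hlch
    have hLnodup : L.Nodup := by
      refine ((weave_perm _ _ l).nodup_iff).2 ?_
      rw [List.nodup_append]
      refine ⟨hlnd.map Subtype.val_injective, hlnd.map (fun x y h => hfinj h), ?_⟩
      intro x hx x' hx' hxx'
      simp only [List.mem_map] at hx hx'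
      obtain ⟨i, _, rfl⟩ := hx
      obtain ⟨j, _, hj⟩ := hx'
      exact hdisj ↑i ⟨i.2, by rw [hxx', ← hj]; exact hfB j⟩
    -- build the graph homomorphism from the path graph
    have hget : ∀ i j : Fin L.length, (i : ℕ) + 1 = (j : ℕ) → G.Adj (L.get i) (L.get j) := by
      intro i j hij
      have h1 := List.isChain_iff_getElem.1 hLchain i (by omega)
      have h2 : j = ⟨(i : ℕ) + 1, by omega⟩ := Fin.ext hij.symm
      rw [h2]
      exact h1
    refine hfree ⟨⟨fun i : Fin (2 * k) => L.get (Fin.cast hLlen.symm i), ?_⟩, ?_⟩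
    · intro a b hab
      rw [pathGraph_adj] at hab
      rcases hab with h | h
      · exact hget _ _ h
      · exact (hget _ _ h).symm
    · intro a b hab
      have := List.nodup_iff_injective_get.1 hLnodup hab
      have hval := congrArg Fin.val this
      rw [Fin.coe_cast, Fin.coe_cast] at hval
      exact Fin.ext hval
  · -- Hall fails: count missing edges
    push_neg at hall
    obtain ⟨s, hs⟩ := hall
    set N := s.biUnion (fun a => G.neighborFinset ↑a) with hN
    have hNB : N ⊆ B := by
      intro b hb
      rw [hN, Finset.mem_biUnion] at hb
      obtain ⟨a, _, hab⟩ := hb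
      rw [mem_neighborFinset] at hab
      rcases hedge hab with ⟨_, h⟩ | ⟨haB, _⟩
      · exact h
      · exact absurd ⟨a.2, haB⟩ (hdisj ↑a)
    have hσ2 : 2 ≤ #s := by
      rcases Nat.lt_or_ge (#s) 2 with h | h
      · interval_cases h' : #s
        · omega
        · obtain ⟨a, ha⟩ := Finset.card_eq_one.1 h'
          obtain ⟨u, hu⟩ := hnbr ↑a
          have : u ∈ N := by
            rw [hN, ha]
            simp only [Finset.singleton_biUnion, mem_neighborFinset]
            exact hu
          have : 1 ≤ #N := Finset.card_pos.2 ⟨u, this⟩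
          omega
      · exact h
    have hσk : #s ≤ k - 1 := by
      by_contra hσ
      push_neg at hσ
      have hsk : #s = k := by
        have h1 := Finset.card_le_univ s
        rw [Fintype.card_coe, hA] at h1
        omega
      have hsu : s = Finset.univ := Finset.eq_univ_of_card s (by rw [hsk, Fintype.card_coe, hA])
      have hBN : B ⊆ N := by
        intro b hb
        obtain ⟨u, hu⟩ := hnbr b
        have huA : u ∈ A := by
          rcases hedge hu with ⟨hbA, _⟩ | ⟨_, h⟩
          · exact absurd ⟨hbA, hb⟩ (hdisj b)
          · exact h
        rw [hN, Finset.mem_biUnion]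
        refine ⟨⟨u, huA⟩, hsu ▸ Finset.mem_univ _, ?_⟩
        rw [mem_neighborFinset]
        exact hu.symm
      have := Finset.card_le_card hBN
      omega
    -- now the missing-edge count
    have hsub : (s.image Subtype.val) ×ˢ (B \ N) ⊆ M := by
      rintro ⟨a, b⟩ hp
      rw [Finset.mem_product, Finset.mem_sdiff] at hp
      obtain ⟨ha, hbB, hbN⟩ := hp
      rw [Finset.mem_image] at ha
      obtain ⟨x, hx, rfl⟩ := ha
      rw [hM, Finset.mem_filter, Finset.mem_product]
      refine ⟨⟨x.2, hbB⟩, fun hadj => hbN ?_⟩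
      rw [hN, Finset.mem_biUnion]
      refine ⟨x, hx, ?_⟩
      rw [mem_neighborFinset]
      exact hadj
    have hcard1 : #(s.image Subtype.val) = #s := Finset.card_image_of_injective _ Subtype.val_injective
    have hcard2 : #(B \ N) = k - #N := by rw [Finset.card_sdiff_of_subset hNB, hB]
    have hprods : #s * (k - #N) ≤ #M := by
      calc #s * (k - #N) = #((s.image Subtype.val) ×ˢ (B \ N)) := by
            rw [Finset.card_product, hcard1, hcard2]
        _ ≤ #M := Finset.card_le_card hsub
    -- quadratic bound
    have hνs : #N + 1 ≤ #s := hs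
    obtain ⟨a, ha⟩ : ∃ a, #s = a + 2 := ⟨#s - 2, by omega⟩
    obtain ⟨c, hc⟩ : ∃ c, k - 1 - #s = c := ⟨k - 1 - #s, rfl⟩
    have hkac : k = a + c + 3 := by omega
    have hkN : k - #N ≥ c + 2 := by omega
    have : (a + 2) * (c + 2) ≤ #s * (k - #N) := by
      rw [ha]
      exact Nat.mul_le_mul_left _ hkN
    have hexp : (a + 2) * (c + 2) = a * c + 2 * a + 2 * c + 4 := by ring
    omega
end

section
/- For every integer k ≥ 1 and all integers a, b ≥ 1, if G is a connected bipartite simple graph with bipartition classes of sizes a and b and there exists a vertex of G that is not an endpoint of any path on 2k vertices in G, then G has at most (k-1)(a+b) edges. -/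
open SimpleGraph

/-- Every walk has a prefix of each length up to its own, supported inside it,
which is a path if the original walk is. -/
lemma walk_prefix_exists {V : Type*} {G : SimpleGraph V} {x y : V} (p : G.Walk x y)
    (m : ℕ) (hm : m ≤ p.length) :
    ∃ (z : V) (q : G.Walk x z), q.length = m ∧ q.support ⊆ p.support ∧
      (p.IsPath → q.IsPath) := by
  induction p generalizing m with
  | nil =>
    simp only [SimpleGraph.Walk.length_nil, Nat.le_zero] at hm
    subst hm
    exact ⟨_, .nil, rfl, fun a ha => ha, fun _ => SimpleGraph.Walk.IsPath.nil⟩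
  | @cons u w v h p ih =>
    rcases m with _ | m
    · exact ⟨u, .nil, rfl, by simp, fun _ => SimpleGraph.Walk.IsPath.nil⟩
    · obtain ⟨z, q, hq1, hq2, hq3⟩ := ih m (by simpa using hm)
      refine ⟨z, .cons h q, by simp [hq1], ?_, ?_⟩
      · intro a ha
        rw [Walk.support_cons] at ha ⊢
        rcases List.mem_cons.1 ha with rfl | ha
        · exact List.mem_cons_self
        · exact List.mem_cons_of_mem _ (hq2 ha)
      · intro hp
        rw [Walk.cons_isPath_iff] at hp ⊢
        exact ⟨hq3 hp.1, fun hu => hp.2 (hq2 hu)⟩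

lemma concat_isPath' {V : Type*} {G : SimpleGraph V} {x y z : V} {p : G.Walk x y}
    (hp : p.IsPath) (h : G.Adj y z) (hz : z ∉ p.support) : (p.concat h).IsPath := by
  rw [← Walk.isPath_reverse_iff, Walk.reverse_concat, Walk.cons_isPath_iff]
  exact ⟨hp.reverse, by simpa using hz⟩

/-- For every `k ≥ 1` and all `a, b ≥ 1`, if `G` is a connected bipartite graph with
part sizes `a` and `b` and some vertex of `G` is not an endpoint of any path on `2k`
vertices in `G`, then `G` has at most `(k-1)(a+b)` edges. -/
theorem stmt7 {V : Type*} [Fintype V] (G : SimpleGraph V) (A B : Finset V) (k a b : ℕ)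
    (hk : 1 ≤ k) (ha : 1 ≤ a) (hb : 1 ≤ b)
    (hbip : IsBipartition G A B) (hA : A.card = a) (hB : B.card = b)
    (hconn : G.Connected)
    (hx : ∃ x : V, ¬ ∃ (y : V) (p : G.Walk x y), p.IsPath ∧ p.length = 2 * k - 1) :
    G.edgeSet.ncard ≤ (k - 1) * (a + b) := by
  classical
  obtain ⟨x, hx⟩ := hx
  push_neg at hx
  -- the two-coloring
  set c : V → ZMod 2 := fun v => if v ∈ A then 0 else 1 with hc
  have hadjc : ∀ ⦃u v⦄, G.Adj u v → c v = c u + 1 := by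
    intro u v huv
    rcases hbip.2.2 huv with ⟨h1, h2⟩ | ⟨h1, h2⟩
    · have hv : v ∉ A := fun hv => hbip.2.1 v ⟨hv, h2⟩
      simp [hc, h1, hv]
    · have hu : u ∉ A := fun hu => hbip.2.1 u ⟨hu, h1⟩
      simp only [hc, if_pos h2, if_neg hu]
      decide
  -- parity of walks
  have hpar : ∀ {u v : V} (p : G.Walk u v), (p.length : ZMod 2) = c u + c v := by
    intro u v p
    induction p with
    | nil =>
      rw [Walk.length_nil, Nat.cast_zero]
      exact (CharTwo.add_self_eq_zero _).symm
    | cons h p ih =>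
      rw [Walk.length_cons, Nat.cast_add, Nat.cast_one, ih, hadjc h]
      linear_combination (CharTwo.add_self_eq_zero (1 : ZMod 2))
  -- choose a longest path from x to each vertex
  have key : ∀ u : V, ∃ p : G.Walk x u, p.IsPath ∧
      ∀ q : G.Walk x u, q.IsPath → q.length ≤ p.length := by
    intro u
    set S : Set ℕ := {n | ∃ p : G.Walk x u, p.IsPath ∧ p.length = n} with hS
    have hS1 : S.Nonempty := by
      obtain ⟨w⟩ := hconn.preconnected x u
      exact ⟨w.toPath.1.length, w.toPath.1, w.toPath.2, rfl⟩
    have hS2 : BddAbove S := ⟨Fintype.card V, by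
      rintro n ⟨p, hp, rfl⟩; exact hp.length_lt.le⟩
    obtain ⟨p, hp, hl⟩ := Nat.sSup_mem hS1 hS2
    exact ⟨p, hp, fun q hq => hl ▸ le_csSup hS2 ⟨q, hq, rfl⟩⟩
  choose P hP hPmax using key
  set ℓ : V → ℕ := fun u => (P u).length with hℓ
  have hℓeq : ∀ w, ℓ w = (P w).length := fun _ => rfl
  -- longest paths from x are short
  have hℓle : ∀ u, ℓ u ≤ 2 * k - 2 := by
    intro u
    by_contra hlt
    have heu := hℓeq u
    obtain ⟨z, q, hq1, _, hq3⟩ := walk_prefix_exists (P u) (2 * k - 1) (by omega)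
    exact hx z q (hq3 (hP u)) hq1
  have hℓpar : ∀ u, ((ℓ u : ℕ) : ZMod 2) = c x + c u := fun u => hpar (P u)
  -- the lower endpoint of an edge lies on the longest path of the higher one
  have hmem : ∀ {u v}, G.Adj u v → ℓ v < ℓ u → v ∈ (P u).support := by
    intro u v huv hlt
    by_contra hvs
    have hq := concat_isPath' (hP u) huv hvs
    have hle := hPmax v _ hq
    rw [Walk.length_concat] at hle
    have heu := hℓeq u
    have hev := hℓeq v
    omega
  -- index of the lower endpoint
  have hidx : ∀ {u v} (huv : G.Adj u v) (hlt : ℓ v < ℓ u),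
      ((P u).takeUntil v (hmem huv hlt)).length < ℓ u ∧
      (((P u).takeUntil v (hmem huv hlt)).length : ZMod 2) = c x + c v ∧
      (P u).getVert ((P u).takeUntil v (hmem huv hlt)).length = v := by
    intro u v huv hlt
    set j := ((P u).takeUntil v (hmem huv hlt)).length with hj
    have hjle : j ≤ ℓ u := Walk.length_takeUntil_le _ _
    have hjpar : (j : ZMod 2) = c x + c v := hpar _
    have hjne : j ≠ ℓ u := by
      intro hje
      have h1 : (j : ZMod 2) = c x + c u := by rw [hje]; exact hℓpar u
      rw [hjpar, hadjc huv] at h1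
      have : (1 : ZMod 2) = 0 := by
        have := add_left_cancel h1
        linear_combination this
      exact one_ne_zero this
    refine ⟨lt_of_le_of_ne hjle hjne, hjpar, ?_⟩
    have hspec := (P u).take_spec (hmem huv hlt)
    have hget := Walk.getVert_append ((P u).takeUntil v (hmem huv hlt))
      ((P u).dropUntil v (hmem huv hlt)) j
    rw [hspec] at hget
    simpa [hj] using hget
  -- the counting map
  set jj : V → V → ℕ := fun u v =>
    if h : v ∈ (P u).support then ((P u).takeUntil v h).length else 0 with hjj
  set F : Sym2 V → V × ℕ := fun e =>
    if ℓ (Quot.out e).1 < ℓ (Quot.out e).2 then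
      ((Quot.out e).2, jj (Quot.out e).2 (Quot.out e).1 / 2)
    else ((Quot.out e).1, jj (Quot.out e).1 (Quot.out e).2 / 2) with hF
  -- description of F on edges
  have hFdesc : ∀ e ∈ G.edgeFinset, ∃ u v, G.Adj u v ∧ ℓ v < ℓ u ∧ e = s(u, v) ∧
      F e = (u, jj u v / 2) := by
    intro e he
    rw [mem_edgeFinset] at he
    have heq : s((Quot.out e).1, (Quot.out e).2) = e := by
      rw [Sym2.mk]
      convert Quot.out_eq e
    have hadj : G.Adj (Quot.out e).1 (Quot.out e).2 := by
      rw [← mem_edgeSet, heq]; exact he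
    have hne := fun hl : ℓ (Quot.out e).1 = ℓ (Quot.out e).2 => by
      have h1 := hℓpar (Quot.out e).1
      rw [hl, hℓpar (Quot.out e).2, hadjc hadj] at h1
      have h2 := add_left_cancel h1
      exact one_ne_zero (by linear_combination h2)
    rcases lt_or_gt_of_ne hne with hlt | hlt
    · exact ⟨(Quot.out e).2, (Quot.out e).1, hadj.symm, hlt,
        by rw [Sym2.eq_swap]; exact heq.symm, by rw [hF]; simp [hlt]⟩
    · exact ⟨(Quot.out e).1, (Quot.out e).2, hadj, hlt,
        heq.symm, by rw [hF]; simp [not_lt.2 hlt.le]⟩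
  -- F is injective on edges into univ ×ˢ range (k-1)
  have hcard : G.edgeFinset.card ≤ ((Finset.univ : Finset V) ×ˢ Finset.range (k - 1)).card := by
    apply Finset.card_le_card_of_injOn F
    · intro e he
      obtain ⟨u, v, hadj, hlt, _, hFe⟩ := hFdesc e he
      obtain ⟨h1, _, _⟩ := hidx hadj hlt
      rw [hFe, Finset.mem_coe, Finset.mem_product, Finset.mem_range]
      have hjv : jj u v = ((P u).takeUntil v (hmem hadj hlt)).length := by
        rw [hjj]; simp [hmem hadj hlt]
      constructor
      · exact Finset.mem_univ u
      · rw [hjv]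
        have h2 := hℓle u
        omega
    · intro e1 he1 e2 he2 hFe
      obtain ⟨u1, v1, hadj1, hlt1, hs1, hF1⟩ := hFdesc e1 he1
      obtain ⟨u2, v2, hadj2, hlt2, hs2, hF2⟩ := hFdesc e2 he2
      rw [hF1, hF2, Prod.mk.injEq] at hFe
      obtain ⟨hu, hm⟩ := hFe
      subst hu
      obtain ⟨hj1lt, hj1par, hj1get⟩ := hidx hadj1 hlt1
      obtain ⟨hj2lt, hj2par, hj2get⟩ := hidx hadj2 hlt2
      have hjv1 : jj u1 v1 = ((P u1).takeUntil v1 (hmem hadj1 hlt1)).length := by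
        rw [hjj]; simp [hmem hadj1 hlt1]
      have hjv2 : jj u1 v2 = ((P u1).takeUntil v2 (hmem hadj2 hlt2)).length := by
        rw [hjj]; simp [hmem hadj2 hlt2]
      rw [hjv1, hjv2] at hm
      set j1 := ((P u1).takeUntil v1 (hmem hadj1 hlt1)).length
      set j2 := ((P u1).takeUntil v2 (hmem hadj2 hlt2)).length
      have hparj : (j1 : ZMod 2) = (j2 : ZMod 2) := by
        rw [hj1par, hj2par, hadjc hadj1, hadjc hadj2]
      have hmod : j1 % 2 = j2 % 2 := (ZMod.natCast_eq_natCast_iff' j1 j2 2).1 hparj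
      have hj12 : j1 = j2 := by omega
      have hv12 : v1 = v2 := by rw [← hj1get, ← hj2get, hj12]
      rw [hs1, hs2, hv12]
  -- wrap up the cardinalities
  have hcardV : Fintype.card V = a + b := by
    rw [← hA, ← hB]
    have hdisj : Disjoint A B := Finset.disjoint_left.2 fun v hvA hvB => hbip.2.1 v ⟨hvA, hvB⟩
    rw [← Finset.card_union_of_disjoint hdisj]
    have : A ∪ B = Finset.univ := Finset.eq_univ_of_forall fun v => by
      rcases hbip.1 v with h | h
      · exact Finset.mem_union_left _ h
      · exact Finset.mem_union_right _ h
    rw [this, Finset.card_univ]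
  calc G.edgeSet.ncard = G.edgeFinset.card := by
        rw [← coe_edgeFinset, Set.ncard_coe_finset]
      _ ≤ ((Finset.univ : Finset V) ×ˢ Finset.range (k - 1)).card := hcard
      _ = (a + b) * (k - 1) := by
          rw [Finset.card_product, Finset.card_univ, Finset.card_range, hcardV]
      _ = (k - 1) * (a + b) := Nat.mul_comm _ _
end

section
/- For all integers k, d ≥ 1 and all integers a, b with b ≥ a ≥ k, if G is a connected bipartite simple graph with bipartition classes of sizes a and b, G contains no copy of the broom S_{2k+1,d*1} as a subgraph, and G has at least k(a+b) + 1 edges, then every vertex of G has degree at most k + d - 1. -/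
open SimpleGraph

/-- The broom `S_{p, d*1}`: a path on the `p` vertices `0, …, p-1` together with
`d` pendant leaves `p, …, p+d-1`, all attached to the path endpoint `p-1`. -/
def broom (p d : ℕ) : SimpleGraph (Fin (p + d)) :=
  SimpleGraph.fromRel (fun i j =>
    ((i : ℕ) + 1 = (j : ℕ) ∧ (j : ℕ) < p) ∨ ((i : ℕ) + 1 = p ∧ p ≤ (j : ℕ)))

namespace Stmt8Aux

variable {V : Type*} {G : SimpleGraph V} {A B : Finset V}

lemma bip_adj (hbip : IsBipartition G A B) {u w : V} (h : G.Adj u w) : w ∈ A ↔ u ∉ A := by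
  obtain ⟨hcov, hdis, hadj⟩ := hbip
  have hu := hcov u; have hw := hcov w
  have h1 := hdis u; have h2 := hdis w
  rcases hadj h with ⟨ha, hb⟩ | ⟨ha, hb⟩ <;> tauto

lemma walk_parity (hbip : IsBipartition G A B) {u v : V} (p : G.Walk u v) :
    (v ∈ A) ↔ ((u ∈ A) ↔ Even p.length) := by
  induction p with
  | nil => simp
  | @cons u u' v h q ih =>
    have hadj := bip_adj hbip h
    rw [Walk.length_cons, Nat.even_add_one]
    tauto

lemma getVert_parity (hbip : IsBipartition G A B) {u v : V} (p : G.Walk u v) :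
    ∀ i, i ≤ p.length → ((p.getVert i ∈ A) ↔ ((u ∈ A) ↔ Even i)) := by
  induction p with
  | nil =>
    intro i hi
    simp only [Walk.length_nil, Nat.le_zero] at hi
    subst hi
    simp
  | @cons u u' v h q ih =>
    intro i hi
    have hadj := bip_adj hbip h
    cases i with
    | zero => simp
    | succ n =>
      rw [Walk.getVert_cons_succ, Nat.even_add_one]
      have hn : n ≤ q.length := by
        simp only [Walk.length_cons] at hi; omega
      have := ih n hn
      tauto

lemma getVert_mem_support {u v : V} (p : G.Walk u v) {i : ℕ} (hi : i ≤ p.length) :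
    p.getVert i ∈ p.support :=
  Walk.mem_support_iff_exists_getVert.mpr ⟨i, rfl, hi⟩

lemma getVert_inj {u v : V} (p : G.Walk u v) :
    p.IsPath → ∀ i j, i ≤ p.length → j ≤ p.length → p.getVert i = p.getVert j → i = j := by
  induction p with
  | nil =>
    intro _ i j hi hj _
    simp only [Walk.length_nil, Nat.le_zero] at hi hj
    omega
  | @cons u u' v h q ih =>
    intro hp i j hi hj hij
    rw [Walk.cons_isPath_iff] at hp
    simp only [Walk.length_cons] at hi hj
    cases i with
    | zero =>
      cases j with
      | zero => rfl
      | succ j =>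
        exfalso
        simp only [Walk.getVert_zero, Walk.getVert_cons_succ] at hij
        exact hp.2 (hij ▸ getVert_mem_support q (by omega))
    | succ i =>
      cases j with
      | zero =>
        exfalso
        simp only [Walk.getVert_zero, Walk.getVert_cons_succ] at hij
        exact hp.2 (hij ▸ getVert_mem_support q (by omega))
      | succ j =>
        simp only [Walk.getVert_cons_succ] at hij
        have := ih hp.1 i j (by omega) (by omega) hij
        omega

/-- Counting vertices of a path lying in the class opposite to the endpoint. -/
lemma card_opposite_le (hbip : IsBipartition G A B) {u v : V} (p : G.Walk u v)
    (S : Finset V) (hS : ∀ w ∈ S, w ∈ p.support ∧ ¬(w ∈ A ↔ v ∈ A)) :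
    S.card ≤ (p.length + 1) / 2 := by
  classical
  have hv : (v ∈ A) ↔ ((u ∈ A) ↔ Even p.length) := by
    have := getVert_parity hbip p p.length le_rfl
    rwa [Walk.getVert_length] at this
  have hidx : ∀ w ∈ S, ∃ i, p.getVert i = w ∧ i ≤ p.length := fun w hw =>
    Walk.mem_support_iff_exists_getVert.mp (hS w hw).1
  choose! idx hidx1 hidx2 using hidx
  have hpar : ∀ w ∈ S, ¬(Even (idx w) ↔ Even p.length) := by
    intro w hw
    have h1 := getVert_parity hbip p (idx w) (hidx2 w hw)
    rw [hidx1 w hw] at h1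
    have h2 := (hS w hw).2
    tauto
  have hle : S.card ≤ (Finset.range ((p.length + 1) / 2)).card := by
    apply Finset.card_le_card_of_injOn (fun w => idx w / 2)
    · intro w hw
      have h1 := hpar w hw
      have h2 := hidx2 w hw
      rw [Nat.even_iff, Nat.even_iff] at h1
      simp only [Finset.mem_coe, Finset.mem_range]
      have h3 : idx w % 2 ≠ p.length % 2 := fun h => h1 ⟨fun _ => by omega, fun _ => by omega⟩
      omega
    · intro w hw w' hw' heq
      simp only [Finset.mem_coe] at hw hw'
      have h1 := hpar w hw
      have h2 := hpar w' hw'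
      rw [Nat.even_iff, Nat.even_iff] at h1 h2
      have : idx w = idx w' := by simp only at heq; omega
      rw [← hidx1 w hw, ← hidx1 w' hw', this]
  simpa using hle

/-- Every path from a fixed vertex being short forces few edges (bipartite case). -/
lemma edges_le [Fintype V] (hbip : IsBipartition G A B) (hconn : G.Connected)
    (v0 : V) (k : ℕ)
    (hno : ∀ ⦃x : V⦄ (p : G.Walk v0 x), p.IsPath → p.length < 2 * k) :
    G.edgeSet.ncard ≤ k * Fintype.card V := by
  classical
  set n := Fintype.card V with hn
  set h : V → ℕ := fun x =>
    Nat.findGreatest (fun m => ∃ p : G.Walk v0 x, p.IsPath ∧ p.length = m) n with hh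
  have hex : ∀ x, ∃ p : G.Walk v0 x, p.IsPath ∧ p.length = h x := by
    intro x
    obtain ⟨w⟩ := hconn.preconnected v0 x
    have hb : w.bypass.IsPath := Walk.bypass_isPath w
    have hsp := Nat.findGreatest_spec
      (P := fun m => ∃ p : G.Walk v0 x, p.IsPath ∧ p.length = m) (n := n)
      (le_of_lt hb.length_lt) ⟨w.bypass, hb, rfl⟩
    simpa only [hh] using hsp
  have hmax : ∀ (x : V) (p : G.Walk v0 x), p.IsPath → p.length ≤ h x := by
    intro x p hp
    simp only [hh]
    exact Nat.le_findGreatest (le_of_lt hp.length_lt) ⟨p, hp, rfl⟩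
  have hlt : ∀ x, h x < 2 * k := by
    intro x
    obtain ⟨p, hp, hl⟩ := hex x
    rw [← hl]
    exact hno p hp
  have hne : ∀ x y, G.Adj x y → h x ≠ h y := by
    intro x y hxy heq
    obtain ⟨px, hpx, hlx⟩ := hex x
    obtain ⟨py, hpy, hly⟩ := hex y
    have h1 := walk_parity hbip px
    have h2 := walk_parity hbip py
    have h3 := bip_adj hbip hxy
    rw [hlx, heq] at h1
    rw [hly] at h2
    tauto
  have key : ∀ u : V,
      ((Finset.univ : Finset V).filter (fun w => G.Adj u w ∧ h w < h u)).card ≤ k := by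
    intro u
    obtain ⟨p, hp, hl⟩ := hex u
    have hsub : ∀ w ∈ (Finset.univ : Finset V).filter (fun w => G.Adj u w ∧ h w < h u),
        w ∈ p.support ∧ ¬(w ∈ A ↔ u ∈ A) := by
      intro w hw
      simp only [Finset.mem_filter, Finset.mem_univ, true_and] at hw
      obtain ⟨hadj, hlt'⟩ := hw
      constructor
      · by_contra hns
        have hq : (Walk.cons hadj.symm p.reverse).IsPath := by
          rw [Walk.cons_isPath_iff]
          refine ⟨hp.reverse, ?_⟩
          rw [Walk.support_reverse, List.mem_reverse]
          exact hns
        have hq2 := hq.reverse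
        have hle := hmax w _ hq2
        rw [Walk.length_reverse, Walk.length_cons, Walk.length_reverse] at hle
        omega
      · have := bip_adj hbip hadj
        tauto
    have h1 := card_opposite_le hbip p _ hsub
    have h2 := hlt u
    omega
  -- now count edges
  have h2e := G.two_mul_card_edgeFinset
  set S1 := (Finset.univ : Finset (V × V)).filter
    (fun q => G.Adj q.1 q.2 ∧ h q.2 < h q.1) with hS1def
  set S2 := (Finset.univ : Finset (V × V)).filter
    (fun q => G.Adj q.1 q.2 ∧ h q.1 < h q.2) with hS2def
  have hsplit : (Finset.univ.filter fun (q : V × V) => G.Adj q.1 q.2) = S1 ∪ S2 := by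
    ext q
    simp only [hS1def, hS2def, Finset.mem_union, Finset.mem_filter, Finset.mem_univ, true_and]
    constructor
    · intro hq
      have := hne _ _ hq
      rcases Nat.lt_or_ge (h q.2) (h q.1) with hc | hc
      · exact Or.inl ⟨hq, hc⟩
      · exact Or.inr ⟨hq, by omega⟩
    · tauto
  have hdisj : Disjoint S1 S2 := by
    rw [Finset.disjoint_left]
    intro q h1 h2
    simp only [hS1def, hS2def, Finset.mem_filter] at h1 h2
    omega
  have hswap : S2.card = S1.card := by
    apply Finset.card_nbij (fun q => (q.2, q.1))
    · intro q hq
      simp only [hS1def, hS2def, Finset.mem_coe, Finset.mem_filter, Finset.mem_univ,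
        true_and] at hq ⊢
      exact ⟨hq.1.symm, hq.2⟩
    · intro q hq q' hq' he
      simp only [Prod.mk.injEq] at he
      exact Prod.ext he.2 he.1
    · intro q hq
      refine ⟨(q.2, q.1), ?_, rfl⟩
      simp only [hS1def, hS2def, Finset.mem_coe, Finset.mem_filter, Finset.mem_univ,
        true_and] at hq ⊢
      exact ⟨hq.1.symm, hq.2⟩

  have hS1card : S1.card ≤ k * n := by
    have hfib : S1.card = ∑ u : V, (S1.filter fun q => q.1 = u).card :=
      Finset.card_eq_sum_card_fiberwise (fun x _ => Finset.mem_univ x.1)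
    have hper : ∀ u : V, (S1.filter fun q => q.1 = u).card
        = ((Finset.univ : Finset V).filter (fun w => G.Adj u w ∧ h w < h u)).card := by
      intro u
      apply Finset.card_nbij (fun q => q.2)
      · intro q hq
        simp only [hS1def, Finset.mem_coe, Finset.mem_filter, Finset.mem_univ, true_and] at hq ⊢
        obtain ⟨⟨ha, hb⟩, hc⟩ := hq
        rw [hc] at ha hb
        exact ⟨ha, hb⟩
      · intro q hq q' hq' he
        simp only [hS1def, Finset.mem_coe, Finset.mem_filter] at hq hq'
        exact Prod.ext (hq.2.trans hq'.2.symm) he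
      · intro w hw
        simp only [Finset.mem_coe, Finset.mem_filter, Finset.mem_univ, true_and] at hw
        refine ⟨(u, w), ?_, rfl⟩
        simp only [hS1def, Finset.mem_coe, Finset.mem_filter, Finset.mem_univ, true_and]
        exact ⟨⟨hw.1, hw.2⟩, trivial⟩
    calc S1.card = ∑ u : V, (S1.filter fun q => q.1 = u).card := hfib
      _ = ∑ u : V, ((Finset.univ : Finset V).filter
            (fun w => G.Adj u w ∧ h w < h u)).card := by
          exact Finset.sum_congr rfl fun u _ => hper u
      _ ≤ ∑ _u : V, k := Finset.sum_le_sum fun u _ => key u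
      _ = n * k := by simp [hn, mul_comm]
      _ = k * n := mul_comm _ _
  have hcards : (Finset.univ.filter fun (q : V × V) => G.Adj q.1 q.2).card
      = S1.card + S2.card := by
    rw [hsplit]
    exact Finset.card_union_of_disjoint hdisj
  have hfin : G.edgeSet.ncard = G.edgeFinset.card := by
    simp [Set.ncard_eq_toFinset_card', SimpleGraph.edgeFinset]
  have hconv : (Finset.univ.filter fun (q : V × V) => G.Adj q.1 q.2)
      = (Finset.univ.filter fun ((x, y) : V × V) => G.Adj x y) := by
    apply Finset.filter_congr
    intro q _
    rfl
  rw [← hconv] at h2e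
  omega

/-- If some vertex has `k + d` neighbours and there is a path of length `2k`
ending at it, then `G` contains the broom. -/
lemma contains_broom [Fintype V] (hbip : IsBipartition G A B) (k d : ℕ)
    (v0 : V) (Nb : Finset V) (hNb : ∀ w ∈ Nb, G.Adj v0 w) (hNbcard : k + d ≤ Nb.card)
    {x : V} (r : G.Walk x v0) (hr : r.IsPath) (hlen : r.length = 2 * k) :
    Contains G (broom (2 * k + 1) d) := by
  classical
  set S := Nb.filter (fun w => w ∈ r.support) with hSdef
  have hSk : S.card ≤ k := by
    have h1 := card_opposite_le hbip r S ?_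
    · omega
    · intro w hw
      rw [hSdef, Finset.mem_filter] at hw
      refine ⟨hw.2, ?_⟩
      have := bip_adj hbip (hNb w hw.1)
      tauto
  have hSsub : S ⊆ Nb := Finset.filter_subset _ _
  have hcard2 : d ≤ (Nb \ S).card := by
    rw [Finset.card_sdiff_of_subset hSsub]
    omega
  obtain ⟨Z, hZsub, hZcard⟩ := Finset.exists_subset_card_eq hcard2
  have hZadj : ∀ w ∈ Z, G.Adj v0 w := fun w hw => hNb w (Finset.mem_sdiff.mp (hZsub hw)).1
  have hZnsup : ∀ w ∈ Z, w ∉ r.support := by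
    intro w hw hsup
    have h1 := Finset.mem_sdiff.mp (hZsub hw)
    exact h1.2 (Finset.mem_filter.mpr ⟨h1.1, hsup⟩)
  have hZfin : Fintype.card { z // z ∈ Z } = d := by
    rw [Fintype.card_coe, hZcard]
  set e := Fintype.equivFinOfCardEq hZfin with hedef
  set ζ : Fin d → V := fun i => ((e.symm i : { z // z ∈ Z }) : V) with hζdef
  have hζZ : ∀ i, ζ i ∈ Z := fun i => (e.symm i).2
  have hζinj : Function.Injective ζ := by
    intro i j hij
    exact e.symm.injective (Subtype.ext hij)
  set F : Fin (2 * k + 1 + d) → V := fun i =>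
    if hi : (i : ℕ) < 2 * k + 1 then r.getVert i
    else ζ ⟨(i : ℕ) - (2 * k + 1), by have := i.isLt; omega⟩ with hFdef
  have hadjF : ∀ i j : Fin (2 * k + 1 + d),
      (((i : ℕ) + 1 = (j : ℕ) ∧ (j : ℕ) < 2 * k + 1) ∨
        ((i : ℕ) + 1 = 2 * k + 1 ∧ 2 * k + 1 ≤ (j : ℕ))) → G.Adj (F i) (F j) := by
    intro i j hrel
    rcases hrel with ⟨hij, hj⟩ | ⟨hi, hj⟩
    · have hi' : (i : ℕ) < 2 * k + 1 := by omega
      rw [hFdef]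
      simp only
      rw [dif_pos hi', dif_pos hj]
      have := r.adj_getVert_succ (i := (i : ℕ)) (by omega)
      rwa [hij] at this
    · have hi' : (i : ℕ) < 2 * k + 1 := by omega
      have hj' : ¬((j : ℕ) < 2 * k + 1) := by omega
      rw [hFdef]
      simp only
      rw [dif_pos hi', dif_neg hj']
      have hv0 : r.getVert i = v0 := by
        have h2k : (i : ℕ) = 2 * k := by omega
        rw [h2k, ← hlen]
        exact r.getVert_length
      rw [hv0]
      exact hZadj _ (hζZ _)
  have hFinj : Function.Injective F := by
    intro i j hij
    rw [hFdef] at hij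
    simp only at hij
    by_cases hi : (i : ℕ) < 2 * k + 1 <;> by_cases hj : (j : ℕ) < 2 * k + 1
    · rw [dif_pos hi, dif_pos hj] at hij
      have := getVert_inj r hr (i : ℕ) (j : ℕ) (by omega) (by omega) hij
      exact Fin.ext this
    · rw [dif_pos hi, dif_neg hj] at hij
      exfalso
      have h1 : r.getVert i ∈ r.support := getVert_mem_support r (by omega)
      have h2 := hZnsup _ (hζZ ⟨(j : ℕ) - (2 * k + 1), by have := j.isLt; omega⟩)
      rw [hij] at h1
      exact h2 h1
    · rw [dif_neg hi, dif_pos hj] at hij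
      exfalso
      have h1 : r.getVert j ∈ r.support := getVert_mem_support r (by omega)
      have h2 := hZnsup _ (hζZ ⟨(i : ℕ) - (2 * k + 1), by have := i.isLt; omega⟩)
      rw [← hij] at h1
      exact h2 h1
    · rw [dif_neg hi, dif_neg hj] at hij
      have := hζinj hij
      rw [Fin.mk.injEq] at this
      have hii := i.isLt
      have hjj := j.isLt
      exact Fin.ext (by omega)
  refine ⟨⟨F, ?_⟩, hFinj⟩
  intro a b hab
  rw [broom, SimpleGraph.fromRel_adj] at hab
  rcases hab.2 with hcase | hcase
  · exact hadjF a b hcase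
  · exact (hadjF b a hcase).symm

lemma exists_path_len {u : V} (n : ℕ) :
    ∀ {x : V} (p : G.Walk x u), p.IsPath → n ≤ p.length →
      ∃ (y : V) (q : G.Walk y u), q.IsPath ∧ q.length = n := by
  intro x p
  induction p with
  | nil =>
    intro _ hn
    simp only [Walk.length_nil, Nat.le_zero] at hn
    subst hn
    exact ⟨_, Walk.nil, Walk.IsPath.nil, rfl⟩
  | @cons a a' w h q ih =>
    intro hp hn
    simp only [Walk.length_cons] at hn
    rcases Nat.lt_or_ge n (q.length + 1) with hlt | hge
    · exact ih hp.of_cons (by omega)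
    · exact ⟨a, Walk.cons h q, hp, by simp only [Walk.length_cons]; omega⟩

end Stmt8Aux

open Stmt8Aux in
/-- For all `k, d ≥ 1` and all `b ≥ a ≥ k`, if `G` is a connected bipartite graph with
part sizes `a` and `b`, containing no copy of the broom `S_{2k+1, d*1}` and having at
least `k(a+b) + 1` edges, then every vertex of `G` has degree at most `k + d - 1`. -/
theorem stmt8 {V : Type*} [Fintype V] (G : SimpleGraph V) (A B : Finset V) (k d a b : ℕ)
    (hk : 1 ≤ k) (hd : 1 ≤ d) (hka : k ≤ a) (hab : a ≤ b)
    (hbip : IsBipartition G A B) (hA : A.card = a) (hB : B.card = b)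
    (hconn : G.Connected) (hfree : ¬ Contains G (broom (2 * k + 1) d))
    (hedges : k * (a + b) + 1 ≤ G.edgeSet.ncard) :
    ∀ v : V, (G.neighborSet v).ncard ≤ k + d - 1 := by
  classical
  intro v0
  by_contra hcon
  push_neg at hcon
  have hncard : (G.neighborSet v0).ncard = (G.neighborSet v0).toFinset.card :=
    Set.ncard_eq_toFinset_card' _
  set Nb := (G.neighborSet v0).toFinset with hNbdef
  have hNb : ∀ w ∈ Nb, G.Adj v0 w := by
    intro w hw
    rw [hNbdef, Set.mem_toFinset] at hw
    exact hw
  have hNbcard : k + d ≤ Nb.card := by omega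
  by_cases hpath : ∃ (y : V) (q : G.Walk y v0), q.IsPath ∧ q.length = 2 * k
  · obtain ⟨y, q, hq, hql⟩ := hpath
    exact absurd (contains_broom hbip k d v0 Nb hNb hNbcard q hq hql) hfree
  · have hno : ∀ ⦃x : V⦄ (p : G.Walk v0 x), p.IsPath → p.length < 2 * k := by
      intro x p hp
      by_contra hge
      push_neg at hge
      obtain ⟨y, q, hq, hql⟩ := exists_path_len (2 * k) p.reverse hp.reverse
        (by rwa [Walk.length_reverse])
      exact hpath ⟨y, q, hq, hql⟩
    have hle := edges_le hbip hconn v0 k hno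
    have hcardV : Fintype.card V = a + b := by
      have hU : A ∪ B = Finset.univ := by
        ext v
        simp only [Finset.mem_union, Finset.mem_univ, iff_true]
        exact hbip.1 v
      have hD : Disjoint A B := by
        rw [Finset.disjoint_left]
        intro v hv1 hv2
        exact hbip.2.1 v ⟨hv1, hv2⟩
      have hcu := Finset.card_union_of_disjoint hD
      rw [hU, Finset.card_univ] at hcu
      omega
    rw [hcardV] at hle
    omega
end

section
/- For all integers k, d ≥ 2 and every integer n such that n ≥ d²/2 and d > 2k, every connected bipartite simple graph with both bipartition classes of size n containing no copy of the broom S_{2k+1,d*1} as a subgraph has at most nd edges. -/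
open SimpleGraph

namespace BroomProof

variable {V : Type*} {G : SimpleGraph V}

lemma getVert_mem_support {x y : V} (p : G.Walk x y) (i : ℕ) :
    p.getVert i ∈ p.support := by
  induction p generalizing i with
  | nil => simp [SimpleGraph.Walk.getVert_of_length_le]
  | cons h q ih =>
    cases i with
    | zero => simp [SimpleGraph.Walk.getVert_zero]
    | succ n =>
      rw [SimpleGraph.Walk.getVert_cons_succ]
      simp only [SimpleGraph.Walk.support_cons, List.mem_cons]
      exact Or.inr (ih n)

lemma mem_support_exists_getVert {x y z : V} (p : G.Walk x y) (hz : z ∈ p.support) :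
    ∃ i, i ≤ p.length ∧ p.getVert i = z := by
  induction p with
  | nil =>
    refine ⟨0, by simp, ?_⟩
    simp only [SimpleGraph.Walk.support_nil, List.mem_singleton] at hz
    simp [hz]
  | cons h q ih =>
    rw [SimpleGraph.Walk.support_cons, List.mem_cons] at hz
    rcases hz with rfl | hz
    · exact ⟨0, by simp, SimpleGraph.Walk.getVert_zero _⟩
    · obtain ⟨i, hi, hgv⟩ := ih hz
      exact ⟨i + 1, by simpa using Nat.succ_le_succ hi,
        by rwa [SimpleGraph.Walk.getVert_cons_succ]⟩

lemma IsPath.getVert_inj {x y : V} {p : G.Walk x y} (hp : p.IsPath) {i j : ℕ}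
    (hi : i ≤ p.length) (hj : j ≤ p.length) (h : p.getVert i = p.getVert j) : i = j := by
  induction p generalizing i j with
  | nil => simp at hi hj; omega
  | cons hadj q ih =>
    have hq : q.IsPath := hp.of_cons
    have hx : _ ∉ q.support := (SimpleGraph.Walk.cons_isPath_iff _ _).1 hp |>.2
    cases i with
    | zero =>
      cases j with
      | zero => rfl
      | succ m =>
        exfalso
        rw [SimpleGraph.Walk.getVert_zero, SimpleGraph.Walk.getVert_cons_succ] at h
        exact hx (h ▸ getVert_mem_support q m)
    | succ n =>
      cases j with
      | zero =>
        exfalso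
        rw [SimpleGraph.Walk.getVert_zero, SimpleGraph.Walk.getVert_cons_succ] at h
        exact hx (h ▸ getVert_mem_support q n)
      | succ m =>
        rw [SimpleGraph.Walk.getVert_cons_succ, SimpleGraph.Walk.getVert_cons_succ] at h
        have := ih hq (by simpa using hi) (by simpa using hj) h
        omega

/-- take the first `m` edges of a walk -/
def wtake {x y : V} : (p : G.Walk x y) → (m : ℕ) → G.Walk x (p.getVert m)
  | p, 0 => SimpleGraph.Walk.nil.copy rfl (p.getVert_zero).symm
  | SimpleGraph.Walk.nil, (_ + 1) => SimpleGraph.Walk.nil.copy rfl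
      (by rw [SimpleGraph.Walk.getVert_of_length_le] ; simp)
  | SimpleGraph.Walk.cons h q, (m + 1) =>
      (SimpleGraph.Walk.cons h (wtake q m)).copy rfl
        (by rw [SimpleGraph.Walk.getVert_cons_succ])

lemma support_wtake {x y : V} (p : G.Walk x y) (m : ℕ) :
    (wtake p m).support = p.support.take (m + 1) := by
  induction p generalizing m with
  | nil => cases m <;> simp [wtake]
  | cons h q ih =>
    cases m with
    | zero => simp [wtake]
    | succ n =>
      simp only [wtake, SimpleGraph.Walk.support_copy, SimpleGraph.Walk.support_cons, ih]
      rw [List.take_cons (by omega)]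
      simp

lemma length_wtake {x y : V} (p : G.Walk x y) (m : ℕ) :
    (wtake p m).length = min m p.length := by
  have h1 := SimpleGraph.Walk.length_support (wtake p m)
  have h2 := SimpleGraph.Walk.length_support p
  rw [support_wtake, List.length_take] at h1
  omega

lemma IsPath.wtake {x y : V} {p : G.Walk x y} (hp : p.IsPath) (m : ℕ) :
    (BroomProof.wtake p m).IsPath := by
  rw [SimpleGraph.Walk.isPath_def, support_wtake]
  exact hp.support_nodup.sublist (List.take_sublist _ _)


variable {V : Type*} {G : SimpleGraph V}

-- parity of positions along a walk, w.r.t. a proper 2-coloring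
lemma cl_getVert (cl : V → Bool) (hcl : ∀ {a b}, G.Adj a b → cl a ≠ cl b)
    {x y : V} (p : G.Walk x y) : ∀ i, i ≤ p.length →
    cl (p.getVert i) = Bool.xor (cl (p.getVert 0)) (decide (i % 2 = 1)) := by
  induction p with
  | nil => intro i hi; simp at hi; simp [hi]
  | cons h q ih =>
    rename_i xx zz yy
    intro i hi
    cases i with
    | zero => simp
    | succ n =>
      rw [SimpleGraph.Walk.getVert_cons_succ]
      have hn : n ≤ q.length := by simp at hi; omega
      rw [ih n hn]
      have h0 : (SimpleGraph.Walk.cons h q).getVert 0 = xx := SimpleGraph.Walk.getVert_zero _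
      have hq0 : q.getVert 0 = zz := SimpleGraph.Walk.getVert_zero _
      rw [h0, hq0]
      have hv : cl zz = !(cl xx) := by
        have := hcl h
        cases hx : cl xx <;> cases hy : cl zz <;> simp_all
      rw [hv]
      rcases Nat.mod_two_eq_zero_or_one n with h2 | h2 <;>
        · have h3 : (n+1) % 2 = 1 ∧ ¬ ((n+1) % 2 = 0) ∨ ((n+1) % 2 = 0 ∧ ¬ ((n+1) % 2 = 1)) := by omega
          rcases h3 with ⟨h4, h5⟩ | ⟨h4, h5⟩ <;> cases hx : cl xx <;> simp_all <;> omega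

lemma contains_broom [Fintype V] [DecidableEq V] [DecidableRel G.Adj]
    {k d : ℕ} {x v : V} (p : G.Walk x v) (hp : p.IsPath)
    (hlen : p.length = 2*k) (T : Finset V) (hTsub : T ⊆ G.neighborFinset v)
    (hTcard : T.card = d) (hTdisj : ∀ t ∈ T, t ∉ p.support) :
    Contains G (broom (2*k+1) d) := by
  have g : Fin d ≃ {t // t ∈ T} := (T.equivFinOfCardEq hTcard).symm
  set f : Fin (2*k+1+d) → V := fun i =>
    if h : (i : ℕ) < 2*k+1 then p.getVert i else (g ⟨(i : ℕ) - (2*k+1), by omega⟩ : V)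
    with hf
  have hmemT : ∀ (m : Fin d), (g m : V) ∈ T := fun m => (g m).2
  have hfi_path : ∀ (i : Fin (2*k+1+d)), (i : ℕ) < 2*k+1 → f i = p.getVert i := by
    intro i hi; rw [hf]; exact dif_pos hi
  have hfi_leaf : ∀ (i : Fin (2*k+1+d)) (hi : ¬ ((i : ℕ) < 2*k+1)),
      f i = (g ⟨(i : ℕ) - (2*k+1), by have := i.isLt; omega⟩ : V) := by
    intro i hi; rw [hf]; exact dif_neg hi
  -- the center
  have hcenter : ∀ (i : Fin (2*k+1+d)), (i : ℕ) = 2*k → f i = v := by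
    intro i hi
    rw [hfi_path i (by omega), hi, ← hlen, SimpleGraph.Walk.getVert_length]
  -- adjacency transfer for the underlying relation
  have key : ∀ (i j : Fin (2*k+1+d)),
      (((i : ℕ) + 1 = (j : ℕ) ∧ (j : ℕ) < 2*k+1) ∨ ((i : ℕ) + 1 = 2*k+1 ∧ 2*k+1 ≤ (j : ℕ))) →
      G.Adj (f i) (f j) := by
    rintro i j (⟨hij, hjp⟩ | ⟨hip, hjp⟩)
    · rw [hfi_path i (by omega), hfi_path j (by omega), ← hij]
      exact p.adj_getVert_succ (by omega)
    · rw [hcenter i (by omega), hfi_leaf j (by omega)]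
      have := hTsub (hmemT ⟨(j : ℕ) - (2*k+1), by omega⟩)
      rw [SimpleGraph.mem_neighborFinset] at this
      exact this
  have hom : ∀ {i j : Fin (2*k+1+d)}, (broom (2*k+1) d).Adj i j → G.Adj (f i) (f j) := by
    intro i j hadj
    rw [broom, SimpleGraph.fromRel_adj] at hadj
    rcases hadj with ⟨hne, h1 | h1⟩
    · exact key i j h1
    · exact (key j i h1).symm
  have hinj : Function.Injective f := by
    intro i j hij
    by_cases hi : (i : ℕ) < 2*k+1 <;> by_cases hj : (j : ℕ) < 2*k+1
    · rw [hfi_path i hi, hfi_path j hj] at hij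
      have := IsPath.getVert_inj hp (by omega : (i:ℕ) ≤ p.length)
        (by omega : (j:ℕ) ≤ p.length) hij
      exact Fin.ext this
    · exfalso
      rw [hfi_path i hi, hfi_leaf j hj] at hij
      exact hTdisj _ (hmemT ⟨(j : ℕ) - (2*k+1), by omega⟩) (hij ▸ getVert_mem_support p i)
    · exfalso
      rw [hfi_leaf i hi, hfi_path j hj] at hij
      exact hTdisj _ (hmemT ⟨(i : ℕ) - (2*k+1), by omega⟩) (hij.symm ▸ getVert_mem_support p j)
    · rw [hfi_leaf i hi, hfi_leaf j hj] at hij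
      have h2 := g.injective (Subtype.ext hij)
      have h3 : (i : ℕ) - (2*k+1) = (j : ℕ) - (2*k+1) := congrArg Fin.val h2
      exact Fin.ext (by omega)
  exact ⟨⟨f, fun {a b} h => hom h⟩, hinj⟩

-- broom from a long path ending at v with ≥ d neighbors of v off the path
lemma contains_broom_of_many [Fintype V] [DecidableEq V] [DecidableRel G.Adj]
    {k d : ℕ} {x v : V} (p : G.Walk x v) (hp : p.IsPath) (hlen : p.length = 2*k)
    (hbig : d ≤ (G.neighborFinset v \ p.support.toFinset).card) :
    Contains G (broom (2*k+1) d) := by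
  obtain ⟨T, hTsub, hTcard⟩ := Finset.exists_subset_card_eq hbig
  refine contains_broom p hp hlen T (fun t ht => (Finset.mem_sdiff.1 (hTsub ht)).1) hTcard ?_
  intro t ht hmem
  exact (Finset.mem_sdiff.1 (hTsub ht)).2 (List.mem_toFinset.2 hmem)

-- at most k neighbors of v on a path of 2k+1 vertices ending at v
lemma nbrs_on_path_le [Fintype V] [DecidableEq V] [DecidableRel G.Adj]
    (cl : V → Bool) (hcl : ∀ {a b}, G.Adj a b → cl a ≠ cl b)
    {k : ℕ} {x v : V} (p : G.Walk x v) (hp : p.IsPath) (hlen : p.length = 2*k) :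
    (G.neighborFinset v ∩ p.support.toFinset).card ≤ k := by
  set q := p.reverse with hq
  have hqlen : q.length = 2*k := by simp [hq, hlen]
  have hq0 : q.getVert 0 = v := q.getVert_zero
  have hsubset : G.neighborFinset v ∩ p.support.toFinset ⊆
      Finset.image (fun i => q.getVert (2*i+1)) (Finset.range k) := by
    intro z hz
    rw [Finset.mem_inter, SimpleGraph.mem_neighborFinset, List.mem_toFinset] at hz
    obtain ⟨hadj, hmem⟩ := hz
    have hmem' : z ∈ q.support := by
      rw [hq, SimpleGraph.Walk.support_reverse, List.mem_reverse]; exact hmem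
    obtain ⟨i, hi, hgv⟩ := mem_support_exists_getVert q hmem'
    have hpar := cl_getVert cl hcl q i hi
    rw [hgv, hq0] at hpar
    have hne : cl v ≠ cl z := hcl hadj
    have hodd : i % 2 = 1 := by
      by_contra hcon
      simp [hcon] at hpar
      exact hne hpar.symm
    have : ∃ j, j < k ∧ i = 2*j+1 := by
      refine ⟨i / 2, by omega, by omega⟩
    obtain ⟨j, hj, rfl⟩ := this
    rw [Finset.mem_image]
    exact ⟨j, Finset.mem_range.2 hj, hgv⟩
  calc (G.neighborFinset v ∩ p.support.toFinset).card
      ≤ _ := Finset.card_le_card hsubset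
    _ ≤ k := (Finset.card_image_le).trans (by simp)

-- degree bound in the broom-free graph when v ends a path on 2k+1 vertices
lemma degree_le_of_path_end [Fintype V] [DecidableEq V] [DecidableRel G.Adj]
    (cl : V → Bool) (hcl : ∀ {a b}, G.Adj a b → cl a ≠ cl b)
    {k d : ℕ} (hfree : ¬ Contains G (broom (2*k+1) d))
    {x v : V} (p : G.Walk x v) (hp : p.IsPath) (hlen : p.length = 2*k) :
    G.degree v ≤ d - 1 + k := by
  have h1 : (G.neighborFinset v \ p.support.toFinset).card ≤ d - 1 := by
    by_contra hcon
    push_neg at hcon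
    have hd : d ≤ (G.neighborFinset v \ p.support.toFinset).card := by
      rcases Nat.eq_zero_or_pos d with rfl | hd0
      · omega
      · omega
    exact hfree (contains_broom_of_many p hp hlen hd)
  have h2 := nbrs_on_path_le cl hcl p hp hlen
  have h3 : (G.neighborFinset v \ p.support.toFinset).card +
      (G.neighborFinset v ∩ p.support.toFinset).card = (G.neighborFinset v).card :=
    Finset.card_sdiff_add_card_inter _ _
  rw [SimpleGraph.degree]
  omega


variable {V : Type*} {G : SimpleGraph V}

/-- reachable within a vertex set -/
def ReachIn (G : SimpleGraph V) (s : Finset V) (x y : V) : Prop :=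
  ∃ p : G.Walk x y, ∀ z ∈ p.support, z ∈ s

lemma ReachIn.mem_left {s : Finset V} {x y : V} (h : ReachIn G s x y) : x ∈ s := by
  obtain ⟨p, hp⟩ := h; exact hp _ p.start_mem_support

lemma ReachIn.mem_right {s : Finset V} {x y : V} (h : ReachIn G s x y) : y ∈ s := by
  obtain ⟨p, hp⟩ := h; exact hp _ p.end_mem_support

lemma ReachIn.refl {s : Finset V} {x : V} (hx : x ∈ s) : ReachIn G s x x :=
  ⟨SimpleGraph.Walk.nil, by simpa using hx⟩

lemma ReachIn.symm {s : Finset V} {x y : V} (h : ReachIn G s x y) : ReachIn G s y x := by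
  obtain ⟨p, hp⟩ := h
  exact ⟨p.reverse, fun z hz => hp z (by
    rwa [SimpleGraph.Walk.support_reverse, List.mem_reverse] at hz)⟩

lemma ReachIn.trans {s : Finset V} {x y z : V} (h1 : ReachIn G s x y)
    (h2 : ReachIn G s y z) : ReachIn G s x z := by
  obtain ⟨p, hp⟩ := h1
  obtain ⟨q, hq⟩ := h2
  refine ⟨p.append q, fun m hm => ?_⟩
  rw [SimpleGraph.Walk.support_append, List.mem_append] at hm
  rcases hm with hm | hm
  · exact hp _ hm
  · exact hq _ (List.mem_of_mem_tail hm)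

lemma ReachIn.adj {s : Finset V} {x y : V} (hx : x ∈ s) (hy : y ∈ s)
    (h : G.Adj x y) : ReachIn G s x y := by
  refine ⟨SimpleGraph.Walk.cons h SimpleGraph.Walk.nil, fun z hz => ?_⟩
  simp only [SimpleGraph.Walk.support_cons, SimpleGraph.Walk.support_nil,
    List.mem_cons, List.mem_singleton] at hz
  rcases hz with rfl | hz
  · exact hx
  · simp at hz; rwa [hz]

/-- connected component of `x` within the set `s` -/
noncomputable def compIn (G : SimpleGraph V) (s : Finset V) (x : V) : Finset V :=
  @Finset.filter _ (fun y => ReachIn G s x y) (Classical.decPred _) s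

lemma mem_compIn {s : Finset V} {x y : V} :
    y ∈ compIn G s x ↔ y ∈ s ∧ ReachIn G s x y :=
  @Finset.mem_filter _ _ (Classical.decPred _) _ _

lemma compIn_subset {s : Finset V} {x : V} : compIn G s x ⊆ s :=
  @Finset.filter_subset _ _ (Classical.decPred _) _

lemma self_mem_compIn {s : Finset V} {x : V} (hx : x ∈ s) : x ∈ compIn G s x :=
  mem_compIn.2 ⟨hx, ReachIn.refl hx⟩

lemma compIn_eq_of_mem {s : Finset V} {x y : V} (h : y ∈ compIn G s x) :
    compIn G s y = compIn G s x := by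
  obtain ⟨hy, hr⟩ := mem_compIn.1 h
  ext z
  simp only [mem_compIn]
  exact ⟨fun ⟨hz, h2⟩ => ⟨hz, hr.trans h2⟩, fun ⟨hz, h2⟩ => ⟨hz, hr.symm.trans h2⟩⟩

lemma walk_support_in_comp [DecidableEq V] {s : Finset V} {a b : V} (p : G.Walk a b)
    (hp : ∀ z ∈ p.support, z ∈ s) : ∀ m ∈ p.support, m ∈ compIn G s a := by
  intro m hm
  refine mem_compIn.2 ⟨hp _ hm, ⟨p.takeUntil m hm, fun z hz => ?_⟩⟩
  exact hp _ (SimpleGraph.Walk.support_takeUntil_subset _ hm hz)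

/-- reachability within `s` upgrades to reachability within the component -/
lemma ReachIn.in_comp [DecidableEq V] {s : Finset V} {a b : V}
    (h : ReachIn G s a b) : ReachIn G (compIn G s a) a b := by
  obtain ⟨p, hp⟩ := h
  exact ⟨p, walk_support_in_comp p hp⟩

lemma exists_exit {s : Finset V} : ∀ {x v : V} (p : G.Walk x v), x ∈ s → v ∉ s →
    ∃ z w', ReachIn G s x z ∧ G.Adj z w' ∧ w' ∉ s ∧ w' ∈ p.support
  | x, _, SimpleGraph.Walk.nil, hx, hv => absurd hx hv
  | x, v, SimpleGraph.Walk.cons hadj q, hx, hv => by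
    rename_i m
    by_cases hm : m ∈ s
    · obtain ⟨z, w', hr, ha, hw, hmem⟩ := exists_exit q hm hv
      refine ⟨z, w', (ReachIn.adj hx hm hadj).trans hr, ha, hw, ?_⟩
      rw [SimpleGraph.Walk.support_cons]
      exact List.mem_cons_of_mem _ hmem
    · refine ⟨x, m, ReachIn.refl hx, hadj, hm, ?_⟩
      rw [SimpleGraph.Walk.support_cons]
      exact List.mem_cons_of_mem _ q.start_mem_support

/-- number of ordered adjacent pairs inside `s` -/
def oe (G : SimpleGraph V) [DecidableRel G.Adj] (s : Finset V) : ℕ :=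
  ((s ×ˢ s).filter fun z => G.Adj z.1 z.2).card

/-- The key sparseness bound: if every path starting at `r` inside the connected
set `s` has at most `L` vertices, then (with debts `w`) the number of edges
inside `s` is at most about `(L/2) * |s|`. -/
lemma sparse_bound [Fintype V] [DecidableEq V] [DecidableRel G.Adj]
    (cl : V → Bool) (hcl : ∀ {a b}, G.Adj a b → cl a ≠ cl b) :
    ∀ (N : ℕ) (s : Finset V) (r : V) (L Q : ℕ) (w : V → ℕ),
    s.card ≤ N → r ∈ s → 1 ≤ L →
    (∀ x ∈ s, ReachIn G s r x) →
    (∀ (x : V) (p : G.Walk r x), p.IsPath → (∀ z ∈ p.support, z ∈ s) →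
      p.support.length ≤ L) →
    (∀ z ∈ s, z ≠ r → w z + (if cl z = cl r then L / 2 else (L+1) / 2) ≤ Q) →
    oe G s + 2 * (∑ z ∈ s.erase r, w z) ≤ 2 * Q * (s.card - 1) := by
  intro N
  induction N with
  | zero =>
    intro s r L Q w hcard hr _ _ _ _
    exact absurd (Finset.card_pos.2 ⟨r, hr⟩) (by omega)
  | succ N ih =>
    intro s r L Q w hcard hr hL hconn hpath hcap
    set t := s.erase r with ht
    have hrt : r ∉ t := by simp [ht]
    have htsub : t ⊆ s := Finset.erase_subset _ _
    have htcard : t.card = s.card - 1 := Finset.card_erase_of_mem hr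
    set R := t.filter (fun z => G.Adj r z) with hR
    set comps := t.image (fun z => compIn G t z) with hcomps
    have hcomp_rep : ∀ C ∈ comps, ∃ z₀, z₀ ∈ t ∧ C = compIn G t z₀ := by
      intro C hC
      obtain ⟨z₀, hz₀, hEq⟩ := Finset.mem_image.1 hC
      exact ⟨z₀, hz₀, hEq.symm⟩
    have hcomp_sub : ∀ C ∈ comps, C ⊆ t := by
      intro C hC
      obtain ⟨z₀, _, rfl⟩ := hcomp_rep C hC
      exact compIn_subset
    have hbiUnion : comps.biUnion id = t := by
      ext z
      simp only [Finset.mem_biUnion, id]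
      constructor
      · rintro ⟨C, hC, hz⟩; exact hcomp_sub C hC hz
      · intro hz
        exact ⟨compIn G t z, Finset.mem_image_of_mem _ hz, self_mem_compIn hz⟩
    have hdisj : ∀ C1 ∈ comps, ∀ C2 ∈ comps, C1 ≠ C2 → Disjoint C1 C2 := by
      intro C1 h1 C2 h2 hne
      rw [Finset.disjoint_left]
      intro a ha1 ha2
      obtain ⟨z1, _, rfl⟩ := hcomp_rep C1 h1
      obtain ⟨z2, _, rfl⟩ := hcomp_rep C2 h2
      exact hne ((compIn_eq_of_mem ha1).symm.trans (compIn_eq_of_mem ha2))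
    have hsum_card : ∑ C ∈ comps, C.card = t.card := by
      rw [← hbiUnion]
      exact (Finset.card_biUnion hdisj).symm
    -- (c3)
    have hc3 : oe G s ≤ 2 * R.card + oe G t := by
      have hsub : (s ×ˢ s).filter (fun z => G.Adj z.1 z.2) ⊆
          (({r} ×ˢ R) ∪ (R ×ˢ {r})) ∪ ((t ×ˢ t).filter (fun z => G.Adj z.1 z.2)) := by
        rintro ⟨a, b⟩ hz
        simp only [Finset.mem_filter, Finset.mem_product] at hz
        obtain ⟨⟨ha, hb⟩, hadj⟩ := hz
        by_cases har : a = r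
        · subst har
          refine Finset.mem_union_left _ (Finset.mem_union_left _ ?_)
          refine Finset.mem_product.2 ⟨Finset.mem_singleton_self _, ?_⟩
          rw [hR, Finset.mem_filter, ht, Finset.mem_erase]
          exact ⟨⟨hadj.ne', hb⟩, hadj⟩
        by_cases hbr : b = r
        · subst hbr
          refine Finset.mem_union_left _ (Finset.mem_union_right _ ?_)
          refine Finset.mem_product.2 ⟨?_, Finset.mem_singleton_self _⟩
          rw [hR, Finset.mem_filter, ht, Finset.mem_erase]
          exact ⟨⟨har, ha⟩, hadj.symm⟩
        · refine Finset.mem_union_right _ ?_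
          simp only [Finset.mem_filter, Finset.mem_product, ht, Finset.mem_erase]
          exact ⟨⟨⟨har, ha⟩, ⟨hbr, hb⟩⟩, hadj⟩
      calc oe G s ≤ ((({r} ×ˢ R) ∪ (R ×ˢ {r})) ∪
            ((t ×ˢ t).filter (fun z => G.Adj z.1 z.2))).card := Finset.card_le_card hsub
        _ ≤ (({r} ×ˢ R) ∪ (R ×ˢ {r})).card +
            ((t ×ˢ t).filter (fun z => G.Adj z.1 z.2)).card := Finset.card_union_le _ _
        _ ≤ (({r} ×ˢ R).card + (R ×ˢ {r}).card) + oe G t := by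
            have := Finset.card_union_le ({r} ×ˢ R) (R ×ˢ {r})
            unfold oe
            omega
        _ ≤ 2 * R.card + oe G t := by
            rw [Finset.card_product, Finset.card_product]
            simp
            omega
    -- (c4)
    have hc4 : oe G t ≤ ∑ C ∈ comps, oe G C := by
      have hsub : (t ×ˢ t).filter (fun z => G.Adj z.1 z.2) ⊆
          comps.biUnion (fun C => (C ×ˢ C).filter (fun z => G.Adj z.1 z.2)) := by
        rintro ⟨a, b⟩ hz
        simp only [Finset.mem_filter, Finset.mem_product] at hz
        obtain ⟨⟨ha, hb⟩, hadj⟩ := hz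
        refine Finset.mem_biUnion.2 ⟨compIn G t a, Finset.mem_image_of_mem _ ha, ?_⟩
        simp only [Finset.mem_filter, Finset.mem_product]
        exact ⟨⟨self_mem_compIn ha, mem_compIn.2 ⟨hb, ReachIn.adj ha hb hadj⟩⟩, hadj⟩
      exact (Finset.card_le_card hsub).trans Finset.card_biUnion_le
    -- (c5)
    have hc5 : R.card ≤ ∑ C ∈ comps, (R ∩ C).card := by
      have hReq : R ⊆ comps.biUnion (fun C => R ∩ C) := by
        intro a haR
        have hat : a ∈ t := Finset.filter_subset _ _ haR
        exact Finset.mem_biUnion.2 ⟨compIn G t a, Finset.mem_image_of_mem _ hat,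
          Finset.mem_inter.2 ⟨haR, self_mem_compIn hat⟩⟩
      exact (Finset.card_le_card hReq).trans Finset.card_biUnion_le
    -- (c6)
    have hc6 : ∑ z ∈ t, w z = ∑ C ∈ comps, ∑ z ∈ C, w z := by
      rw [← hbiUnion]
      refine Finset.sum_biUnion ?_
      intro C1 h1 C2 h2 hne
      simp only [Function.onFun, id]
      exact hdisj C1 h1 C2 h2 hne
    -- per component bound
    have hper : ∀ C ∈ comps,
        oe G C + 2 * (R ∩ C).card + 2 * ∑ z ∈ C, w z ≤ 2 * Q * C.card := by
      intro C hC
      obtain ⟨z₀, hz₀, hCeq⟩ := hcomp_rep C hC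
      obtain ⟨p0, hp0⟩ := hconn z₀ (htsub hz₀)
      obtain ⟨u, w', hreach, hadjzw, hw't, hw'sup⟩ :=
        exists_exit (s := t) p0.reverse hz₀ hrt
      have hw's : w' ∈ s := by
        apply hp0
        rwa [SimpleGraph.Walk.support_reverse, List.mem_reverse] at hw'sup
      have hw'r : w' = r := by
        by_contra hne
        exact hw't (Finset.mem_erase.2 ⟨hne, hw's⟩)
      have hadj_ru : G.Adj r u := (hw'r ▸ hadjzw).symm
      have hu_memC : u ∈ C := by
        rw [hCeq]
        exact mem_compIn.2 ⟨hreach.mem_right, hreach⟩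
      have hCsub : C ⊆ t := hcomp_sub C hC
      have hut : u ∈ t := hCsub hu_memC
      have hus : u ∈ s := htsub hut
      have hrC : r ∉ C := fun h => hrt (hCsub h)
      have hL2 : 2 ≤ L := by
        have hone : (SimpleGraph.Walk.cons hadj_ru SimpleGraph.Walk.nil).IsPath := by
          rw [SimpleGraph.Walk.cons_isPath_iff]
          exact ⟨SimpleGraph.Walk.IsPath.nil, by simp [hadj_ru.ne]⟩
        have := hpath u (SimpleGraph.Walk.cons hadj_ru SimpleGraph.Walk.nil) hone (by
          intro z hz
          simp only [SimpleGraph.Walk.support_cons, SimpleGraph.Walk.support_nil,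
            List.mem_cons, List.mem_singleton] at hz
          rcases hz with rfl | hz
          · exact hr
          · simp at hz; rw [hz]; exact hus)
        simpa using this
      set w2 : V → ℕ := fun z => w z + (if G.Adj r z then 1 else 0) with hw2
      have hconnC : ∀ x ∈ C, ReachIn G C u x := by
        intro x hx
        have h1 : ReachIn G t z₀ x := (mem_compIn.1 (hCeq ▸ hx)).2
        have h2 : ReachIn G t u x := hreach.symm.trans h1
        have h3 := h2.in_comp
        have h4 : compIn G t u = C := by
          rw [hCeq]
          exact compIn_eq_of_mem (hCeq ▸ hu_memC)
        rwa [h4] at h3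
      have hpathC : ∀ (x : V) (q : G.Walk u x), q.IsPath →
          (∀ m ∈ q.support, m ∈ C) → q.support.length ≤ L - 1 := by
        intro x q hq hsup
        have hrnot : r ∉ q.support := fun hmem => hrC (hsup _ hmem)
        have hbig := hpath x (SimpleGraph.Walk.cons hadj_ru q)
          ((SimpleGraph.Walk.cons_isPath_iff _ _).2 ⟨hq, hrnot⟩) (by
            intro z hz
            simp only [SimpleGraph.Walk.support_cons, List.mem_cons] at hz
            rcases hz with rfl | hz
            · exact hr
            · exact htsub (hCsub (hsup _ hz)))
        rw [SimpleGraph.Walk.support_cons] at hbig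
        simp only [List.length_cons] at hbig
        omega
      have hcapC : ∀ z ∈ C, z ≠ u →
          w2 z + (if cl z = cl u then (L-1) / 2 else ((L-1)+1) / 2) ≤ Q := by
        intro z hzC hzu
        have hzs : z ∈ s := htsub (hCsub hzC)
        have hzr : z ≠ r := (Finset.mem_erase.1 (hCsub hzC)).1
        have hparent := hcap z hzs hzr
        have hclru : cl r ≠ cl u := hcl hadj_ru
        by_cases hzu2 : cl z = cl u
        · have hzr2 : ¬ (cl z = cl r) := by
            rw [hzu2]; exact fun h => hclru h.symm
          rw [if_neg hzr2] at hparent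
          rw [if_pos hzu2]
          by_cases hadjrz : G.Adj r z
          · simp only [hw2, if_pos hadjrz]
            omega
          · simp only [hw2, if_neg hadjrz]
            omega
        · have hzr2 : cl z = cl r := by
            cases hz1 : cl z <;> cases hr1 : cl r <;> cases hu1 : cl u <;>
              first
                | rfl
                | exact absurd (hz1.trans hu1.symm) hzu2
                | exact absurd (hr1.trans hu1.symm) hclru
          have hnadj : ¬ G.Adj r z := fun h => (hcl h) hzr2.symm
          rw [if_pos hzr2] at hparent
          rw [if_neg hzu2]
          simp only [hw2, if_neg hnadj]
          omega
      have hcardC : C.card ≤ N := by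
        have := Finset.card_le_card hCsub
        omega
      have hchild := ih C u (L-1) Q w2 hcardC hu_memC (by omega) hconnC hpathC hcapC
      have hroot : w u + 1 ≤ Q := by
        have := hcap u hus (Finset.mem_erase.1 hut).1
        have hclne : ¬ (cl u = cl r) := fun h => (hcl hadj_ru) h.symm
        rw [if_neg hclne] at this
        omega
      have hRC : R ∩ C = C.filter (fun z => G.Adj r z) := by
        ext z
        simp only [Finset.mem_inter, hR, Finset.mem_filter]
        constructor
        · rintro ⟨⟨_, hadj⟩, hzC⟩; exact ⟨hzC, hadj⟩
        · rintro ⟨hzC, hadj⟩; exact ⟨⟨hCsub hzC, hadj⟩, hzC⟩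
      have hsum_eq : (R ∩ C).card + ∑ z ∈ C, w z = (∑ z ∈ C.erase u, w2 z) + (w u + 1) := by
        rw [hRC, Finset.card_filter]
        have h1 : ∑ z ∈ C, (if G.Adj r z then 1 else 0) + ∑ z ∈ C, w z
            = ∑ z ∈ C, w2 z := by
          rw [← Finset.sum_add_distrib]
          refine Finset.sum_congr rfl fun z _ => ?_
          simp only [hw2]; omega
        rw [h1, ← Finset.sum_erase_add C w2 hu_memC]
        simp only [hw2, if_pos hadj_ru]
      have hCpos : 1 ≤ C.card := Finset.card_pos.2 ⟨u, hu_memC⟩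
      calc oe G C + 2 * (R ∩ C).card + 2 * ∑ z ∈ C, w z
          = oe G C + 2 * ((R ∩ C).card + ∑ z ∈ C, w z) := by ring
        _ = oe G C + 2 * (∑ z ∈ C.erase u, w2 z) + 2 * (w u + 1) := by rw [hsum_eq]; ring
        _ ≤ 2 * Q * (C.card - 1) + 2 * Q := by omega
        _ ≤ 2 * Q * C.card := by
            have h3 : 2 * Q * (C.card - 1) + 2 * Q = 2 * Q * ((C.card - 1) + 1) := by ring
            have h4 : C.card - 1 + 1 = C.card := by omega
            rw [h3, h4]
    -- final assembly
    have hfinal : oe G s + 2 * (∑ z ∈ t, w z) ≤ 2 * Q * t.card := by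
      calc oe G s + 2 * (∑ z ∈ t, w z)
          ≤ 2 * R.card + oe G t + 2 * (∑ z ∈ t, w z) := by omega
        _ ≤ 2 * (∑ C ∈ comps, (R ∩ C).card) + (∑ C ∈ comps, oe G C)
            + 2 * (∑ C ∈ comps, ∑ z ∈ C, w z) := by
            rw [← hc6]
            omega
        _ = ∑ C ∈ comps, (oe G C + 2 * (R ∩ C).card + 2 * ∑ z ∈ C, w z) := by
            rw [Finset.sum_add_distrib, Finset.sum_add_distrib, Finset.mul_sum,
              Finset.mul_sum]
            ring
        _ ≤ ∑ C ∈ comps, 2 * Q * C.card := Finset.sum_le_sum hper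
        _ = 2 * Q * t.card := by rw [← Finset.mul_sum, hsum_card]
    rw [htcard] at hfinal
    exact hfinal

lemma final_arith (n d k D Fc : ℕ) (h1 : Fc + D + 1 = 2*n) (h2 : D + 1 ≤ d + k)
    (h3 : d + 1 ≤ D) (h4 : 2*k + 1 ≤ d) (h5 : 2 ≤ k) (h6 : d*d ≤ 2*n) :
    2*D + 2*(D*(d+k-2)) + 2*((k-1)*Fc) ≤ 2*(n*d) := by
  have hb1 : 2 ≤ d + k := by omega
  have hb2 : 1 ≤ k := by omega
  zify [hb1, hb2]
  have hz1 : (Fc:ℤ) + D + 1 = 2*n := by exact_mod_cast h1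
  have hz2 : (D:ℤ) + 1 ≤ d + k := by exact_mod_cast h2
  have hz3 : (d:ℤ) + 1 ≤ D := by exact_mod_cast h3
  have hz4 : 2*(k:ℤ) + 1 ≤ d := by exact_mod_cast h4
  have hz5 : (2:ℤ) ≤ k := by exact_mod_cast h5
  have hz6 : (d:ℤ)*d ≤ 2*n := by exact_mod_cast h6
  nlinarith [mul_nonneg (by linarith : (0:ℤ) ≤ 2*(n:ℤ) - d*d) (by linarith : (0:ℤ) ≤ (d:ℤ) - 2*k + 2),
    mul_nonneg (by positivity : (0:ℤ) ≤ (d:ℤ)) (by linarith : (0:ℤ) ≤ (d:ℤ) - 2*k + 2),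
    mul_le_mul_of_nonneg_right (by linarith : (D:ℤ) ≤ (d:ℤ) + k - 1) (by positivity : (0:ℤ) ≤ (d:ℤ)),
    mul_nonneg (by linarith : (0:ℤ) ≤ (k:ℤ) - 1) (by linarith : (0:ℤ) ≤ 2*(n:ℤ) - 1)]

lemma caseI_arith (n d k e : ℕ) (h1 : 2*k + 1 ≤ d) (h2 : e + 2 * 0 ≤ 2*k*(2*n-1)) :
    e ≤ 2*(n*d) := by
  have h3 : 2*k*(2*n-1) ≤ 2*k*(2*n) := Nat.mul_le_mul_left _ (by omega)
  have h4 : 2*k*(2*n) ≤ d*(2*n) := Nat.mul_le_mul_right _ (by omega)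
  have h5 : d*(2*n) = 2*(n*d) := by ring
  omega

lemma oe_univ_eq {V : Type*} {G : SimpleGraph V} [Fintype V] [DecidableEq V]
    [DecidableRel G.Adj] : oe G Finset.univ = ∑ v : V, G.degree v := by
  unfold oe
  rw [Finset.card_filter, Finset.sum_product]
  refine Finset.sum_congr rfl fun x _ => ?_
  have hdeg : G.degree x = (Finset.univ.filter (fun y => G.Adj x y)).card := by
    rw [← SimpleGraph.neighborFinset_eq_filter]; rfl
  rw [hdeg, Finset.card_filter]

end BroomProof

open BroomProof in
/-- For all `k, d ≥ 2` and every `n` with `n ≥ d²/2` and `d > 2k`, every connected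
bipartite graph with both classes of size `n` and no copy of the broom `S_{2k+1, d*1}`
as a subgraph has at most `nd` edges. -/
theorem stmt11 {V : Type*} [Fintype V] (G : SimpleGraph V) (A B : Finset V) (k d n : ℕ)
    (hk : 2 ≤ k) (hd : 2 ≤ d) (hn : d ^ 2 ≤ 2 * n) (hdk : 2 * k < d)
    (hbip : IsBipartition G A B) (hA : A.card = n) (hB : B.card = n)
    (hconn : G.Connected) (hfree : ¬ Contains G (broom (2 * k + 1) d)) :
    G.edgeSet.ncard ≤ n * d := by
  letI : DecidableEq V := Classical.decEq V
  letI : DecidableRel G.Adj := Classical.decRel _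
  obtain ⟨hcover, hdisjAB, hedge⟩ := hbip
  set cl : V → Bool := fun v => decide (v ∈ A) with hcldef
  have hcl : ∀ {a b}, G.Adj a b → cl a ≠ cl b := by
    intro a b hab
    rcases hedge hab with ⟨ha, hb⟩ | ⟨ha, hb⟩
    · have hbA : b ∉ A := fun h => hdisjAB b ⟨h, hb⟩
      simp [hcldef, ha, hbA]
    · have haA : a ∉ A := fun h => hdisjAB a ⟨h, ha⟩
      simp [hcldef, haA, hb]
  have hAB : A ∪ B = Finset.univ :=
    Finset.eq_univ_iff_forall.2 (fun v => Finset.mem_union.2 (hcover v))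
  have hdisj2 : Disjoint A B := Finset.disjoint_left.2 fun a ha hb => hdisjAB a ⟨ha, hb⟩
  have hcardV : (Finset.univ : Finset V).card = 2 * n := by
    rw [← hAB, Finset.card_union_of_disjoint hdisj2, hA, hB]; ring
  have hdd : d * d ≤ 2 * n := by
    have := hn; rwa [pow_two] at this
  -- reduce goal to the ordered-pair count
  have hedgecard : G.edgeSet.ncard = G.edgeFinset.card := by
    rw [← SimpleGraph.coe_edgeFinset, Set.ncard_coe_finset]
  have hoe2e : oe G Finset.univ = 2 * G.edgeFinset.card := by
    rw [oe_univ_eq, SimpleGraph.sum_degrees_eq_twice_card_edges]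
  suffices hgoal : oe G Finset.univ ≤ 2 * (n * d) by
    rw [hedgecard]; omega
  by_cases hcase : ∃ v : V, ∀ (x : V) (p : G.Walk v x), p.IsPath → p.support.length ≤ 2*k
  -- Case I : some vertex starts no path on 2k+1 vertices
  · obtain ⟨v, hv⟩ := hcase
    have hsb := sparse_bound cl hcl (Finset.univ.card) Finset.univ v (2*k) k (fun _ => 0)
      le_rfl (Finset.mem_univ v) (by omega)
      (fun x _ => by
        obtain ⟨p⟩ := hconn.preconnected v x
        exact ⟨p, fun z _ => Finset.mem_univ z⟩)
      (fun x p hp _ => hv x p hp)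
      (fun z _ _ => by
        have h0 : (fun (_ : V) => (0:ℕ)) z = 0 := rfl
        rw [zero_add]
        split_ifs <;> omega)
    simp only [Finset.sum_const_zero, mul_zero, add_zero] at hsb
    rw [hcardV] at hsb
    exact caseI_arith n d k _ (by omega) (by omega : oe G Finset.univ + 2*0 ≤ 2*k*(2*n-1))
  -- Case II : every vertex ends a path on 2k+1 vertices
  · push_neg at hcase
    have hEP : ∀ v : V, ∃ (x : V) (p : G.Walk x v), p.IsPath ∧ p.length = 2*k := by
      intro v
      obtain ⟨x, p, hp, hlen⟩ := hcase v
      have hlen2 : 2*k ≤ p.length := by have := p.length_support; omega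
      refine ⟨p.getVert (2*k), (wtake p (2*k)).reverse, (IsPath.wtake hp _).reverse, ?_⟩
      rw [SimpleGraph.Walk.length_reverse, length_wtake]
      omega
    have hDeg : ∀ v : V, G.degree v ≤ d - 1 + k := by
      intro v
      obtain ⟨x, p, hp, hl⟩ := hEP v
      exact degree_le_of_path_end cl hcl hfree p hp hl
    by_cases hmax : ∀ v : V, G.degree v ≤ d
    -- Case II.a : all degrees at most d
    · have hsum : ∑ v : V, G.degree v ≤ 2*n*d := by
        calc ∑ v : V, G.degree v ≤ ∑ _v : V, d := Finset.sum_le_sum (fun v _ => hmax v)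
          _ = (Finset.univ.card) * d := by rw [Finset.sum_const, smul_eq_mul]
          _ = 2*n*d := by rw [hcardV]
      rw [oe_univ_eq]
      have h2 : 2*n*d = 2*(n*d) := by ring
      omega
    -- Case II.b : some vertex of degree > d
    · push_neg at hmax
      obtain ⟨u, hu⟩ := hmax
      set W := G.neighborFinset u with hW
      set D := G.degree u with hD
      have hDW : W.card = D := rfl
      have huW : u ∉ W := SimpleGraph.notMem_neighborFinset_self G u
      set F := Finset.univ \ insert u W with hF
      have hmemF : ∀ z, z ∈ F ↔ (z ≠ u ∧ z ∉ W) := by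
        intro z
        simp only [hF, Finset.mem_sdiff, Finset.mem_univ, true_and, Finset.mem_insert]
        tauto
      have huF : u ∉ F := fun h => ((hmemF u).1 h).1 rfl
      have hFcard : F.card + (D + 1) = 2*n := by
        have h1 : F.card = Finset.univ.card - (insert u W).card :=
          Finset.card_sdiff_of_subset (Finset.subset_univ _)
      -- card insert
        have h2 : (insert u W).card = D + 1 := by
          rw [Finset.card_insert_of_notMem huW, hDW]
        have h3 : (insert u W).card ≤ Finset.univ.card := Finset.card_le_univ _
        rw [h1, h2]
        rw [h2] at h3
        omega
      -- no long paths inside F ending at a W-attached vertex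
      have hFpath : ∀ z, z ∈ F → (∃ w0 ∈ W, G.Adj z w0) →
          ∀ (y : V) (p : G.Walk z y), p.IsPath → (∀ m ∈ p.support, m ∈ F) →
          p.support.length ≤ 2*k - 2 := by
        rintro z hzF ⟨w0, hw0W, hzw0⟩ y p hp hsupF
        by_contra hcon
        push_neg at hcon
        have hplen : 2*k - 2 ≤ p.length := by have := p.length_support; omega
        set q := wtake p (2*k - 2) with hq
        have hqpath : q.IsPath := IsPath.wtake hp _
        have hqlen : q.length = 2*k - 2 := by rw [hq, length_wtake]; omega
        have hqsup : ∀ m ∈ q.support, m ∈ F := by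
          intro m hm
          rw [hq, support_wtake] at hm
          exact hsupF m (List.take_subset _ _ hm)
        have hw0u : G.Adj w0 u := by
          have : G.Adj u w0 := by rw [hW] at hw0W; simpa using hw0W
          exact this.symm
        set tail2 : G.Walk z u :=
          SimpleGraph.Walk.cons hzw0 (SimpleGraph.Walk.cons hw0u SimpleGraph.Walk.nil)
          with htail
        set full := q.reverse.append tail2 with hfull
        have hfulllen : full.length = 2*k := by
          rw [hfull, SimpleGraph.Walk.length_append, SimpleGraph.Walk.length_reverse, hqlen,
            htail]
          simp only [SimpleGraph.Walk.length_cons, SimpleGraph.Walk.length_nil]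
          omega
        have htailsup : tail2.support = [z, w0, u] := by
          rw [htail]
          simp [SimpleGraph.Walk.support_cons]
        have hfullsup : full.support = q.reverse.support ++ [w0, u] := by
          rw [hfull, SimpleGraph.Walk.support_append, htailsup]
          rfl
        have hqrevF : ∀ m ∈ q.reverse.support, m ∈ F := by
          intro m hm
          rw [SimpleGraph.Walk.support_reverse, List.mem_reverse] at hm
          exact hqsup m hm
        have hw0F : w0 ∉ F := fun h => ((hmemF w0).1 h).2 hw0W
        have hfullpath : full.IsPath := by
          rw [SimpleGraph.Walk.isPath_def, hfullsup, List.nodup_append]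
          refine ⟨hqpath.reverse.support_nodup, ?_, ?_⟩
          · simp [hw0u.ne]
          · intro a ha b hab heq; subst heq
            simp only [List.mem_cons, List.mem_singleton, List.not_mem_nil] at hab
            rcases hab with rfl | rfl | h
            · exact hw0F (hqrevF a ha)
            · exact huF (hqrevF a ha)
            · exact h
        have hWsup : W ∩ full.support.toFinset ⊆ {w0} := by
          intro m hm
          rw [Finset.mem_inter, List.mem_toFinset, hfullsup, List.mem_append] at hm
          obtain ⟨hmW, hmem | hmem⟩ := hm
          · exact absurd (hqrevF m hmem) (fun h => ((hmemF m).1 h).2 hmW)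
          · simp only [List.mem_cons, List.mem_singleton] at hmem
            rcases hmem with rfl | rfl | h
            · exact Finset.mem_singleton_self _
            · exact absurd hmW huW
            · exact absurd h List.not_mem_nil
        have hbig : d ≤ ((G.neighborFinset u) \ full.support.toFinset).card := by
          have h1 : (W ∩ full.support.toFinset).card ≤ 1 :=
            le_trans (Finset.card_le_card hWsup) (by simp)
          have h2 := Finset.card_sdiff_add_card_inter W full.support.toFinset
          rw [hDW] at h2
          have h3 : (W \ full.support.toFinset).card + 1 ≥ D := by omega
          rw [← hW]
          omega
        exact hfree (contains_broom_of_many full hfullpath hfulllen hbig)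
      -- edges inside F are sparse
      have hoeF : oe G F ≤ 2*(k-1)*F.card := by
        set compsF := F.image (fun z => compIn G F z) with hcompsF
        have hrep : ∀ C ∈ compsF, ∃ z₀, z₀ ∈ F ∧ C = compIn G F z₀ := by
          intro C hC
          obtain ⟨z₀, hz₀, hEq⟩ := Finset.mem_image.1 hC
          exact ⟨z₀, hz₀, hEq.symm⟩
        have hsubF : ∀ C ∈ compsF, C ⊆ F := by
          intro C hC
          obtain ⟨z₀, _, rfl⟩ := hrep C hC
          exact compIn_subset
        have hdisjF : ∀ C1 ∈ compsF, ∀ C2 ∈ compsF, C1 ≠ C2 → Disjoint C1 C2 := by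
          intro C1 h1 C2 h2 hne
          rw [Finset.disjoint_left]
          intro a ha1 ha2
          obtain ⟨z1, _, rfl⟩ := hrep C1 h1
          obtain ⟨z2, _, rfl⟩ := hrep C2 h2
          exact hne ((compIn_eq_of_mem ha1).symm.trans (compIn_eq_of_mem ha2))
        have hbiF : compsF.biUnion id = F := by
          ext z
          simp only [Finset.mem_biUnion, id]
          constructor
          · rintro ⟨C, hC, hz⟩; exact hsubF C hC hz
          · intro hz
            exact ⟨compIn G F z, Finset.mem_image_of_mem _ hz, self_mem_compIn hz⟩
        have hsumF : ∑ C ∈ compsF, C.card = F.card := by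
          rw [← hbiF]
          exact (Finset.card_biUnion hdisjF).symm
        have hc4F : oe G F ≤ ∑ C ∈ compsF, oe G C := by
          have hsub : (F ×ˢ F).filter (fun z => G.Adj z.1 z.2) ⊆
              compsF.biUnion (fun C => (C ×ˢ C).filter (fun z => G.Adj z.1 z.2)) := by
            rintro ⟨a, b⟩ hz
            simp only [Finset.mem_filter, Finset.mem_product] at hz
            obtain ⟨⟨ha, hb⟩, hadj⟩ := hz
            refine Finset.mem_biUnion.2 ⟨compIn G F a, Finset.mem_image_of_mem _ ha, ?_⟩
            simp only [Finset.mem_filter, Finset.mem_product]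
            exact ⟨⟨self_mem_compIn ha, mem_compIn.2 ⟨hb, ReachIn.adj ha hb hadj⟩⟩, hadj⟩
          exact (Finset.card_le_card hsub).trans Finset.card_biUnion_le
        have hperF : ∀ C ∈ compsF, oe G C ≤ 2*(k-1)*C.card := by
          intro C hC
          obtain ⟨z₀, hz₀, hCeq⟩ := hrep C hC
          obtain ⟨p0⟩ := hconn.preconnected u z₀
          obtain ⟨z, w', hreach, hadjzw, hw'F, _⟩ :=
            exists_exit (s := F) p0.reverse hz₀ huF
          have hzF : z ∈ F := hreach.mem_right
          have hw'W : w' ∈ W := by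
            by_cases hwu : w' = u
            · exfalso
              have : G.Adj z u := hwu ▸ hadjzw
              refine ((hmemF z).1 hzF).2 ?_
              rw [hW]
              simpa using this.symm
            · by_contra hwW
              exact hw'F ((hmemF w').2 ⟨hwu, hwW⟩)
          have hzC : z ∈ C := by
            rw [hCeq]
            exact mem_compIn.2 ⟨hzF, hreach⟩
          have hconnC : ∀ x ∈ C, ReachIn G C z x := by
            intro x hx
            have h1 : ReachIn G F z₀ x := (mem_compIn.1 (hCeq ▸ hx)).2
            have h2 : ReachIn G F z x := hreach.symm.trans h1
            have h3 := h2.in_comp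
            have h4 : compIn G F z = C := by
              rw [hCeq]
              exact compIn_eq_of_mem (hCeq ▸ hzC)
            rwa [h4] at h3
          have hpathC : ∀ (x : V) (q : G.Walk z x), q.IsPath →
              (∀ m ∈ q.support, m ∈ C) → q.support.length ≤ 2*k-2 := by
            intro x q hq hsup
            exact hFpath z hzF ⟨w', hw'W, hadjzw⟩ x q hq
              (fun m hm => hsubF C hC (hsup m hm))
          have hsb := sparse_bound cl hcl C.card C z (2*k-2) (k-1) (fun _ => 0)
            le_rfl hzC (by omega) hconnC hpathC
            (fun z' _ _ => by
              have h0 : (fun (_ : V) => (0:ℕ)) z' = 0 := rfl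
              rw [zero_add]
              split_ifs <;> omega)
          simp only [Finset.sum_const_zero, mul_zero, add_zero] at hsb
          calc oe G C ≤ 2*(k-1)*(C.card - 1) := hsb
            _ ≤ 2*(k-1)*C.card := Nat.mul_le_mul_left _ (by omega)
        calc oe G F ≤ ∑ C ∈ compsF, oe G C := hc4F
          _ ≤ ∑ C ∈ compsF, 2*(k-1)*C.card := Finset.sum_le_sum hperF
          _ = 2*(k-1)*F.card := by rw [← Finset.mul_sum, hsumF]
      -- splitting all ordered adjacent pairs
      have hsplit : oe G Finset.univ ≤
          2*D + 2*(∑ w ∈ W, (G.degree w - 1)) + oe G F := by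
        have hsub : (Finset.univ ×ˢ Finset.univ).filter (fun z => G.Adj z.1 z.2) ⊆
            ((({u} ×ˢ W) ∪ (W ×ˢ {u})) ∪
             ((W.biUnion (fun w => {w} ×ˢ ((G.neighborFinset w).erase u))) ∪
              (W.biUnion (fun w => ((G.neighborFinset w).erase u) ×ˢ {w})))) ∪
            ((F ×ˢ F).filter (fun z => G.Adj z.1 z.2)) := by
          rintro ⟨a, b⟩ hz
          simp only [Finset.mem_filter, Finset.mem_product] at hz
          obtain ⟨⟨ha, hb⟩, hadj⟩ := hz
          by_cases hau : a = u
          · subst hau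
            refine Finset.mem_union_left _ (Finset.mem_union_left _
              (Finset.mem_union_left _ ?_))
            refine Finset.mem_product.2 ⟨Finset.mem_singleton_self _, ?_⟩
            rw [hW]; simpa using hadj
          by_cases hbu : b = u
          · subst hbu
            refine Finset.mem_union_left _ (Finset.mem_union_left _
              (Finset.mem_union_right _ ?_))
            refine Finset.mem_product.2 ⟨?_, Finset.mem_singleton_self _⟩
            rw [hW]; simpa using hadj.symm
          by_cases haW : a ∈ W
          · refine Finset.mem_union_left _ (Finset.mem_union_right _
              (Finset.mem_union_left _ ?_))
            refine Finset.mem_biUnion.2 ⟨a, haW, ?_⟩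
            refine Finset.mem_product.2 ⟨Finset.mem_singleton_self _, ?_⟩
            refine Finset.mem_erase.2 ⟨hbu, ?_⟩
            simpa using hadj
          by_cases hbW : b ∈ W
          · refine Finset.mem_union_left _ (Finset.mem_union_right _
              (Finset.mem_union_right _ ?_))
            refine Finset.mem_biUnion.2 ⟨b, hbW, ?_⟩
            refine Finset.mem_product.2 ⟨?_, Finset.mem_singleton_self _⟩
            refine Finset.mem_erase.2 ⟨hau, ?_⟩
            simpa using hadj.symm
          · refine Finset.mem_union_right _ ?_
            simp only [Finset.mem_filter, Finset.mem_product]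
            exact ⟨⟨(hmemF a).2 ⟨hau, haW⟩, (hmemF b).2 ⟨hbu, hbW⟩⟩, hadj⟩
        have hcard1 : (({u} ×ˢ W) ∪ (W ×ˢ {u})).card ≤ 2*D := by
          refine le_trans (Finset.card_union_le _ _) ?_
          rw [Finset.card_product, Finset.card_product]
          simp [hDW]
          omega
        have hcard2 : ((W.biUnion (fun w => {w} ×ˢ ((G.neighborFinset w).erase u))) ∪
            (W.biUnion (fun w => ((G.neighborFinset w).erase u) ×ˢ {w}))).card ≤
            2*(∑ w ∈ W, (G.degree w - 1)) := by
          have he : ∀ w ∈ W, ((G.neighborFinset w).erase u).card = G.degree w - 1 := by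
            intro w hwW
            have hadjuw : G.Adj u w := by rw [hW] at hwW; simpa using hwW
            rw [Finset.card_erase_of_mem (by simpa using hadjuw.symm)]
            rfl
          refine le_trans (Finset.card_union_le _ _) ?_
          have hc1 : (W.biUnion (fun w => {w} ×ˢ ((G.neighborFinset w).erase u))).card ≤
              ∑ w ∈ W, (G.degree w - 1) := by
            refine le_trans Finset.card_biUnion_le ?_
            refine Finset.sum_le_sum fun w hw => ?_
            rw [Finset.card_product, Finset.card_singleton, one_mul, he w hw]
          have hc2 : (W.biUnion (fun w => ((G.neighborFinset w).erase u) ×ˢ {w})).card ≤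
              ∑ w ∈ W, (G.degree w - 1) := by
            refine le_trans Finset.card_biUnion_le ?_
            refine Finset.sum_le_sum fun w hw => ?_
            rw [Finset.card_product, Finset.card_singleton, mul_one, he w hw]
          omega
        calc oe G Finset.univ ≤ _ := Finset.card_le_card hsub
          _ ≤ ((({u} ×ˢ W) ∪ (W ×ˢ {u})) ∪
             ((W.biUnion (fun w => {w} ×ˢ ((G.neighborFinset w).erase u))) ∪
              (W.biUnion (fun w => ((G.neighborFinset w).erase u) ×ˢ {w})))).card +
              oe G F := Finset.card_union_le _ _
          _ ≤ (({u} ×ˢ W) ∪ (W ×ˢ {u})).card +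
              ((W.biUnion (fun w => {w} ×ˢ ((G.neighborFinset w).erase u))) ∪
               (W.biUnion (fun w => ((G.neighborFinset w).erase u) ×ˢ {w}))).card +
              oe G F := by
              have := Finset.card_union_le (({u} ×ˢ W) ∪ (W ×ˢ {u}))
                ((W.biUnion (fun w => {w} ×ˢ ((G.neighborFinset w).erase u))) ∪
                 (W.biUnion (fun w => ((G.neighborFinset w).erase u) ×ˢ {w})))
              omega
          _ ≤ 2*D + 2*(∑ w ∈ W, (G.degree w - 1)) + oe G F := by omega
      -- W-degree bound
      have hWdeg : ∑ w ∈ W, (G.degree w - 1) ≤ D * (d + k - 2) := by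
        calc ∑ w ∈ W, (G.degree w - 1) ≤ ∑ _w ∈ W, (d + k - 2) :=
            Finset.sum_le_sum (fun w _ => by have := hDeg w; omega)
          _ = D * (d+k-2) := by rw [Finset.sum_const, smul_eq_mul, hDW]
      -- finish with arithmetic
      have hDub : D + 1 ≤ d + k := by have := hDeg u; omega
      have harith := final_arith n d k D F.card hFcard hDub (by omega) (by omega) hk hdd
      have hoeFcard : oe G F ≤ 2*((k-1)*F.card) := by
        have := hoeF
        have h2 : 2*(k-1)*F.card = 2*((k-1)*F.card) := by ring
        omega
      calc oe G Finset.univ ≤ 2*D + 2*(∑ w ∈ W, (G.degree w - 1)) + oe G F := hsplit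
        _ ≤ 2*D + 2*(D*(d+k-2)) + 2*((k-1)*F.card) := by omega
        _ ≤ 2*(n*d) := harith
end

section
/- For all integers k > d ≥ 2 and every positive integer n, every connected bipartite simple graph with both bipartition classes of size n containing no copy of the broom S_{2k+1,d*1} as a subgraph has at most 2nk + 1 edges. -/
open SimpleGraph

section BroomAux

variable {V : Type*}

lemma bip_adj {G : SimpleGraph V} {A B : Finset V} (hbip : IsBipartition G A B)
    {u v : V} (h : G.Adj u v) : ¬ (u ∈ A ↔ v ∈ A) := by
  obtain ⟨hcov, hdisj, hadj⟩ := hbip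
  rcases hadj h with ⟨h1, h2⟩ | ⟨h1, h2⟩
  · intro hiff; exact hdisj v ⟨hiff.mp h1, h2⟩
  · intro hiff; exact hdisj u ⟨hiff.mpr h2, h1⟩

lemma chain_parity {G : SimpleGraph V} {A B : Finset V} (hbip : IsBipartition G A B)
    (c : ℕ → V) (m : ℕ) (hadj : ∀ i, i < m → G.Adj (c i) (c (i+1))) :
    ∀ i, i ≤ m → ((c i ∈ A ↔ c 0 ∈ A) ↔ Even i) := by
  intro i
  induction i with
  | zero => simp
  | succ i ih =>
    intro hi
    have h1 := ih (by omega)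
    have h2 := bip_adj hbip (hadj i (by omega))
    rw [Nat.even_add_one, ← h1]
    tauto

lemma card_filter_odd (k : ℕ) :
    ((Finset.range (2*k)).filter (fun j => j % 2 = 1)).card = k := by
  induction k with
  | zero => simp
  | succ k ih =>
    have h : 2 * (k+1) = (2*k) + 1 + 1 := by ring
    rw [h, Finset.range_add_one, Finset.range_add_one, Finset.filter_insert, if_pos (by omega),
      Finset.filter_insert, if_neg (by omega),
      Finset.card_insert_of_notMem (by simp), ih]

lemma contains_broom_of {G : SimpleGraph V} {k d : ℕ}
    (c : ℕ → V)
    (hinj : ∀ i ≤ 2*k, ∀ j ≤ 2*k, c i = c j → i = j)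
    (hadj : ∀ i, i < 2*k → G.Adj (c i) (c (i+1)))
    (L : Finset V) (hLcard : L.card = d)
    (hLdisj : ∀ y ∈ L, ∀ i ≤ 2*k, y ≠ c i)
    (hLadj : ∀ y ∈ L, G.Adj (c (2*k)) y) :
    Contains G (broom (2*k+1) d) := by
  classical
  let e := L.equivFinOfCardEq hLcard
  let f : Fin (2*k+1+d) → V := fun a =>
    if h : (a : ℕ) < 2*k+1 then c a else (e.symm ⟨(a : ℕ) - (2*k+1), by omega⟩ : V)
  have key : ∀ (a b : Fin (2*k+1+d)),
      (((a:ℕ)+1 = (b:ℕ) ∧ (b:ℕ) < 2*k+1) ∨ ((a:ℕ)+1 = 2*k+1 ∧ 2*k+1 ≤ (b:ℕ))) →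
      G.Adj (f a) (f b) := by
    rintro a b (⟨h1, h2⟩ | ⟨h1, h2⟩)
    · have ha : (a:ℕ) < 2*k+1 := by omega
      show G.Adj (if h : (a : ℕ) < 2*k+1 then c a else _) (if h : (b : ℕ) < 2*k+1 then c b else _)
      rw [dif_pos ha, dif_pos h2]
      have h3 := hadj (a:ℕ) (by omega)
      rw [h1] at h3
      exact h3
    · have ha : (a:ℕ) < 2*k+1 := by omega
      have hb : ¬ ((b:ℕ) < 2*k+1) := by omega
      show G.Adj (if h : (a : ℕ) < 2*k+1 then c a else _) (if h : (b : ℕ) < 2*k+1 then c b else _)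
      rw [dif_pos ha, dif_neg hb]
      have haa : (a:ℕ) = 2*k := by omega
      rw [haa]
      exact hLadj _ (Subtype.mem _)
  have hfinj : Function.Injective f := by
    intro a b hab
    by_cases ha : (a:ℕ) < 2*k+1 <;> by_cases hb : (b:ℕ) < 2*k+1
    · simp only [f, dif_pos ha, dif_pos hb] at hab
      exact Fin.ext (hinj _ (by omega) _ (by omega) hab)
    · simp only [f, dif_pos ha, dif_neg hb] at hab
      exact absurd hab.symm (hLdisj _ (Subtype.mem _) _ (by omega))
    · simp only [f, dif_neg ha, dif_pos hb] at hab
      exact absurd hab (hLdisj _ (Subtype.mem _) _ (by omega))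
    · simp only [f, dif_neg ha, dif_neg hb] at hab
      have h2 := e.symm.injective (Subtype.coe_injective hab)
      have h3 : (a:ℕ) - (2*k+1) = (b:ℕ) - (2*k+1) := congrArg Fin.val h2
      exact Fin.ext (by omega)
  refine ⟨⟨f, ?_⟩, hfinj⟩
  intro a b hab
  rw [broom, SimpleGraph.fromRel_adj] at hab
  obtain ⟨hne, hrel⟩ := hab
  rcases hrel with h | h
  · exact key a b h
  · exact (key b a h).symm

lemma degree_le_of_path [Fintype V] [DecidableEq V] {G : SimpleGraph V} [DecidableRel G.Adj]
    {A B : Finset V} {k d : ℕ} (hd : 1 ≤ d)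
    (hbip : IsBipartition G A B)
    (hfree : ¬ Contains G (broom (2*k+1) d))
    (c : ℕ → V)
    (hinj : ∀ i ≤ 2*k, ∀ j ≤ 2*k, c i = c j → i = j)
    (hadj : ∀ i, i < 2*k → G.Adj (c i) (c (i+1))) :
    G.degree (c (2*k)) ≤ k + (d-1) := by
  classical
  set x := c (2*k) with hx
  set pathF : Finset V := (Finset.range (2*k+1)).image c with hpathF
  have hsplit := Finset.card_filter_add_card_filter_not
    (s := G.neighborFinset x) (p := fun y => y ∈ pathF)
  have h1 : (G.neighborFinset x).filter (fun y => y ∈ pathF) ⊆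
      ((Finset.range (2*k)).filter (fun j => j % 2 = 1)).image c := by
    intro y hy
    rw [Finset.mem_filter, SimpleGraph.mem_neighborFinset] at hy
    obtain ⟨hyadj, hyp⟩ := hy
    rw [hpathF, Finset.mem_image] at hyp
    obtain ⟨j, hj, hjy⟩ := hyp
    rw [Finset.mem_range] at hj
    have hpar := chain_parity hbip c (2*k) hadj
    have hxA : (c (2*k) ∈ A ↔ c 0 ∈ A) := (hpar (2*k) le_rfl).mpr ⟨k, by ring⟩
    have hne := bip_adj hbip hyadj
    rw [← hjy] at hne
    have hodd : ¬ Even j := by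
      intro hev
      have hjA := (hpar j (by omega)).mpr hev
      exact hne (hxA.trans hjA.symm)
    rw [Nat.even_iff] at hodd
    have hj2 : j ≠ 2*k := by omega
    exact Finset.mem_image.mpr ⟨j, Finset.mem_filter.mpr
      ⟨Finset.mem_range.mpr (by omega), by omega⟩, hjy⟩
  have h1c : ((G.neighborFinset x).filter (fun y => y ∈ pathF)).card ≤ k := by
    calc ((G.neighborFinset x).filter (fun y => y ∈ pathF)).card
        ≤ (((Finset.range (2*k)).filter (fun j => j % 2 = 1)).image c).card :=
          Finset.card_le_card h1
      _ ≤ ((Finset.range (2*k)).filter (fun j => j % 2 = 1)).card := Finset.card_image_le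
      _ = k := card_filter_odd k
  have h2 : ((G.neighborFinset x).filter (fun y => ¬ y ∈ pathF)).card ≤ d - 1 := by
    by_contra hcon
    push_neg at hcon
    have hd' : d ≤ ((G.neighborFinset x).filter (fun y => ¬ y ∈ pathF)).card := by omega
    obtain ⟨L, hLsub, hLcard⟩ := Finset.exists_subset_card_eq hd'
    apply hfree
    refine contains_broom_of c hinj hadj L hLcard ?_ ?_
    · intro y hy i hi hyc
      have hmem := hLsub hy
      rw [Finset.mem_filter] at hmem
      exact hmem.2 (Finset.mem_image.mpr ⟨i, Finset.mem_range.mpr (by omega), hyc.symm⟩)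
    · intro y hy
      have hmem := hLsub hy
      rw [Finset.mem_filter, SimpleGraph.mem_neighborFinset] at hmem
      exact hmem.1
  have hdeg : G.degree x = (G.neighborFinset x).card :=
    (SimpleGraph.card_neighborFinset_eq_degree G x).symm
  omega

end BroomAux

section BroomAux2

variable {V : Type*}

lemma exists_maximal_path [Fintype V] (G : SimpleGraph V) (v : V) :
    ∃ (u w : V) (p : G.Walk u w), p.IsPath ∧ ∀ y, G.Adj u y → y ∈ p.support := by
  classical
  suffices h : ∀ (fuel : ℕ) (u w : V) (p : G.Walk u w), p.IsPath →
      Fintype.card V ≤ p.support.length + fuel →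
      ∃ (u' w' : V) (q : G.Walk u' w'), q.IsPath ∧ ∀ y, G.Adj u' y → y ∈ q.support by
    exact h (Fintype.card V) v v SimpleGraph.Walk.nil (by simp) (by simp)
  intro fuel
  induction fuel with
  | zero =>
    intro u w p hp hcard
    refine ⟨u, w, p, hp, fun y _ => ?_⟩
    have hnd : p.support.Nodup := hp.support_nodup
    have hlen : p.support.toFinset.card = p.support.length :=
      List.toFinset_card_of_nodup hnd
    have hle : p.support.length ≤ Fintype.card V := hnd.length_le_card
    have huniv : p.support.toFinset = Finset.univ := by
      apply Finset.eq_univ_of_card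
      rw [hlen]; omega
    have : y ∈ p.support.toFinset := by rw [huniv]; exact Finset.mem_univ y
    simpa using this
  | succ fuel ih =>
    intro u w p hp hcard
    by_cases hex : ∃ y, G.Adj u y ∧ y ∉ p.support
    · obtain ⟨y, hadj, hyn⟩ := hex
      refine ih y w (SimpleGraph.Walk.cons hadj.symm p) (hp.cons hyn) ?_
      rw [SimpleGraph.Walk.support_cons]
      simp only [List.length_cons]
      omega
    · push_neg at hex
      exact ⟨u, w, p, hp, hex⟩

lemma reach_lift {G : SimpleGraph V} {v₀ : V} :
    ∀ {x y : V} (w : G.Walk x y), v₀ ∉ w.support → ∀ (hx : x ≠ v₀) (hy : y ≠ v₀),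
      (G.comap (Subtype.val : {z : V // z ≠ v₀} → V)).Reachable ⟨x, hx⟩ ⟨y, hy⟩ := by
  intro x y w
  induction w with
  | nil => intro _ hx hy; exact SimpleGraph.Reachable.refl _
  | @cons a b c h p ih =>
    intro hsup hx hy
    rw [SimpleGraph.Walk.support_cons, List.mem_cons] at hsup
    push_neg at hsup
    obtain ⟨h1, h2⟩ := hsup
    have hb : b ≠ v₀ := fun hbv => h2 (hbv ▸ SimpleGraph.Walk.start_mem_support p)
    have hadj' : (G.comap (Subtype.val : {z : V // z ≠ v₀} → V)).Adj ⟨a, hx⟩ ⟨b, hb⟩ := h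
    exact hadj'.reachable.trans (ih h2 hb hy)

lemma ncard_eq_edgeFinset_card [Fintype V] (G : SimpleGraph V) [Fintype G.edgeSet] :
    G.edgeSet.ncard = G.edgeFinset.card := by
  rw [← Nat.card_coe_set_eq, Nat.card_eq_fintype_card, SimpleGraph.edgeFinset_card]

lemma edge_card_delete [Fintype V] [DecidableEq V] (G : SimpleGraph V) [DecidableRel G.Adj]
    (v₀ : V) :
    G.edgeSet.ncard
      = (G.comap (Subtype.val : {z : V // z ≠ v₀} → V)).edgeSet.ncard + G.degree v₀ := by
  classical
  rw [ncard_eq_edgeFinset_card, ncard_eq_edgeFinset_card]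
  set G' := G.comap (Subtype.val : {z : V // z ≠ v₀} → V) with hG'
  have hsplit := Finset.card_filter_add_card_filter_not
    (s := G.edgeFinset) (p := fun e => v₀ ∈ e)
  have h1 : (G.edgeFinset.filter (fun e => v₀ ∈ e)).card = G.degree v₀ := by
    rw [← SimpleGraph.incidenceFinset_eq_filter]
    exact SimpleGraph.card_incidenceFinset_eq_degree G v₀
  have h2 : (G.edgeFinset.filter (fun e => ¬ v₀ ∈ e))
      = G'.edgeFinset.image (Sym2.map Subtype.val) := by
    ext e
    induction e with
    | _ a b =>
      simp only [Finset.mem_filter, SimpleGraph.mem_edgeFinset, SimpleGraph.mem_edgeSet,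
        Finset.mem_image, Sym2.mem_iff]
      constructor
      · rintro ⟨hadj, hne⟩
        push_neg at hne
        refine ⟨s(⟨a, fun h => hne.1 h.symm⟩, ⟨b, fun h => hne.2 h.symm⟩), ?_, ?_⟩
        · exact (SimpleGraph.mem_edgeSet G').mpr hadj
        · rfl
      · rintro ⟨e', he', hmap⟩
        induction e' with
        | _ p q =>
          have hadjpq : G.Adj p.val q.val := (SimpleGraph.mem_edgeSet G').mp he'
          have hmap' : s(p.val, q.val) = s(a, b) := hmap
          rw [Sym2.eq_iff] at hmap'
          rcases hmap' with ⟨hpa, hqb⟩ | ⟨hpb, hqa⟩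
          · refine ⟨hpa ▸ hqb ▸ hadjpq, ?_⟩
            push_neg
            exact ⟨fun h => (hpa ▸ p.2) h.symm, fun h => (hqb ▸ q.2) h.symm⟩
          · refine ⟨(hpb ▸ hqa ▸ hadjpq).symm, ?_⟩
            push_neg
            exact ⟨fun h => (hqa ▸ q.2) h.symm, fun h => (hpb ▸ p.2) h.symm⟩
  have h3 : (G'.edgeFinset.image (Sym2.map Subtype.val)).card = G'.edgeFinset.card :=
    Finset.card_image_of_injective _ (Sym2.map.injective Subtype.val_injective)
  have h4 : (G.edgeFinset.filter (fun e => ¬ v₀ ∈ e)).card = G'.edgeFinset.card := by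
    rw [h2, h3]
  show G.edgeFinset.card = G'.edgeFinset.card + G.degree v₀
  omega

end BroomAux2

section BroomAux3

variable {V : Type*}

lemma exists_path_to_all [Fintype V] {G : SimpleGraph V} (hconn : G.Connected)
    {k : ℕ} (c : ℕ → V) (len i : ℕ)
    (hinj : ∀ a, a < len → ∀ b, b < len → c a = c b → a = b)
    (hchain : ∀ a, a + 1 < len → G.Adj (c a) (c (a+1)))
    (hi : 2*k+1 ≤ i) (hilen : i < len) (hcyc : G.Adj (c 0) (c i)) (x : V) :
    ∃ c' : ℕ → V, (∀ s, s ≤ 2*k → ∀ t, t ≤ 2*k → c' s = c' t → s = t) ∧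
      (∀ s, s < 2*k → G.Adj (c' s) (c' (s+1))) ∧ c' (2*k) = x := by
  classical
  set cy : Finset V := (Finset.range (i+1)).image c with hcy
  have hcyne : cy.Nonempty := ⟨c 0, Finset.mem_image.mpr ⟨0, by simp, rfl⟩⟩
  set D : V → ℕ := fun z => cy.inf' hcyne (fun y => G.dist y z) with hD
  have hD_le : ∀ z, ∀ y ∈ cy, D z ≤ G.dist y z := fun z y hy => Finset.inf'_le _ hy
  have hD_mem : ∀ z, z ∈ cy → D z = 0 := by
    intro z hz
    have h := hD_le z z hz
    simpa [SimpleGraph.dist_self] using h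
  suffices H : ∀ q z, D z = q → ∃ c' : ℕ → V,
      (∀ s, s ≤ 2*k → ∀ t, t ≤ 2*k → c' s = c' t → s = t) ∧
      (∀ s, s < 2*k → G.Adj (c' s) (c' (s+1))) ∧ c' (2*k) = z ∧
      (∀ t, t ≤ 2*k → D (c' t) ≤ (D z + t) - 2*k) by
    obtain ⟨c', h1, h2, h3, _⟩ := H (D x) x rfl
    exact ⟨c', h1, h2, h3⟩
  intro q
  induction q using Nat.strong_induction_on with
  | _ q IH =>
    intro z hz
    rcases Nat.eq_zero_or_pos q with hq0 | hqpos
    · subst hq0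
      have hzc : z ∈ cy := by
        by_contra hno
        obtain ⟨y, hy, hyd⟩ := Finset.exists_mem_eq_inf' hcyne (fun y => G.dist y z)
        have hd0 : G.dist y z = 0 := by rw [← hyd]; exact hz
        have := (hconn.dist_eq_zero_iff).mp hd0
        exact hno (this ▸ hy)
      obtain ⟨j, hj, hjz⟩ := Finset.mem_image.mp hzc
      rw [Finset.mem_range] at hj
      by_cases hjk : 2*k ≤ j
      · refine ⟨fun t => c (j - 2*k + t), ?_, ?_, ?_, ?_⟩
        · intro s hs t ht h
          beta_reduce at h
          have := hinj _ (by omega) _ (by omega) h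
          omega
        · intro s hs
          beta_reduce
          have h := hchain (j - 2*k + s) (by omega)
          have he : j - 2*k + (s+1) = (j - 2*k + s) + 1 := by omega
          rw [he]
          exact h
        · beta_reduce
          have he : j - 2*k + 2*k = j := by omega
          rw [he, hjz]
        · intro t ht
          beta_reduce
          have hmem : c (j - 2*k + t) ∈ cy :=
            Finset.mem_image.mpr ⟨_, Finset.mem_range.mpr (by omega), rfl⟩
          rw [hD_mem _ hmem]
          omega
      · push_neg at hjk
        refine ⟨fun t => if 2*k - j ≤ t then c (t - (2*k - j)) else c (i - (2*k - j) + 1 + t),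
          ?_, ?_, ?_, ?_⟩
        · intro s hs t ht h
          beta_reduce at h
          split_ifs at h with h1 h2 h2
          · have := hinj _ (by omega) _ (by omega) h
            omega
          · have := hinj _ (by omega) _ (by omega) h
            omega
          · have := hinj _ (by omega) _ (by omega) h
            omega
          · have := hinj _ (by omega) _ (by omega) h
            omega
        · intro s hs
          beta_reduce
          by_cases hc1 : 2*k - j ≤ s
          · rw [if_pos hc1, if_pos (by omega)]
            have h := hchain (s - (2*k - j)) (by omega)
            have he : s + 1 - (2*k - j) = (s - (2*k - j)) + 1 := by omega
            rw [he]
            exact h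
          · push_neg at hc1
            by_cases hc2 : s + 1 = 2*k - j
            · rw [if_neg (by omega), if_pos (by omega)]
              have he1 : i - (2*k - j) + 1 + s = i := by omega
              have he2 : s + 1 - (2*k - j) = 0 := by omega
              rw [he1, he2]
              exact hcyc.symm
            · rw [if_neg (by omega), if_neg (by omega)]
              have h := hchain (i - (2*k - j) + 1 + s) (by omega)
              have he : i - (2*k - j) + 1 + (s+1) = (i - (2*k - j) + 1 + s) + 1 := by omega
              rw [he]
              exact h
        · beta_reduce
          rw [if_pos (by omega)]
          have he : 2*k - (2*k - j) = j := by omega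
          rw [he, hjz]
        · intro t ht
          beta_reduce
          have hmem : (if 2*k - j ≤ t then c (t - (2*k - j)) else c (i - (2*k - j) + 1 + t)) ∈ cy := by
            split_ifs
            · exact Finset.mem_image.mpr ⟨_, Finset.mem_range.mpr (by omega), rfl⟩
            · exact Finset.mem_image.mpr ⟨_, Finset.mem_range.mpr (by omega), rfl⟩
          rw [hD_mem _ hmem]
          omega
    · obtain ⟨y₀, hy₀, hy₀d⟩ := Finset.exists_mem_eq_inf' hcyne (fun y => G.dist y z)
      have hdist : G.dist y₀ z = q := by rw [← hy₀d]; exact hz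
      obtain ⟨w, hwp, hwl⟩ := hconn.exists_path_of_dist y₀ z
      rw [hdist] at hwl
      cases hrev : w.reverse with
      | nil =>
        exfalso
        have : w.length = 0 := by
          have := congrArg SimpleGraph.Walk.length hrev
          rw [SimpleGraph.Walk.length_reverse] at this
          simpa using this
        omega
      | @cons _ b _ hzb w2 =>
        have hlen2 : w2.length + 1 = q := by
          have := congrArg SimpleGraph.Walk.length hrev
          rw [SimpleGraph.Walk.length_reverse] at this
          simp only [SimpleGraph.Walk.length_cons] at this
          omega
        have hDb : D b < q := by
          have h1 : D b ≤ G.dist y₀ b := hD_le b y₀ hy₀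
          have h2 : G.dist y₀ b ≤ w2.reverse.length := SimpleGraph.dist_le _
          rw [SimpleGraph.Walk.length_reverse] at h2
          omega
        obtain ⟨c', h1, h2, h3, h4⟩ := IH (D b) hDb b rfl
        have hzne : ∀ t, t ≤ 2*k → c' t ≠ z := by
          intro t ht heq
          have := h4 t ht
          rw [heq, hz] at this
          omega
        refine ⟨fun t => if t = 2*k then z else c' (t+1), ?_, ?_, by simp, ?_⟩
        · intro s hs t ht h
          beta_reduce at h
          split_ifs at h with e1 e2 e2
          · omega
          · exact absurd h.symm (hzne (t+1) (by omega))
          · exact absurd h (hzne (s+1) (by omega))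
          · have := h1 (s+1) (by omega) (t+1) (by omega) h
            omega
        · intro s hs
          beta_reduce
          by_cases hc : s + 1 = 2*k
          · rw [if_neg (by omega), if_pos hc, hc, h3]
            exact hzb.symm
          · rw [if_neg (by omega), if_neg hc]
            exact h2 (s+1) (by omega)
        · intro t ht
          beta_reduce
          by_cases hc : t = 2*k
          · rw [if_pos hc]
            omega
          · rw [if_neg hc]
            have := h4 (t+1) (by omega)
            rw [hz]
            omega

end BroomAux3

universe u

theorem broom_edge_bound (k d : ℕ) (hd : 2 ≤ d) (hdk : d < k) :
    ∀ (N : ℕ) {V : Type u} [Fintype V] (G : SimpleGraph V) (A B : Finset V),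
      IsBipartition G A B → G.Connected → ¬ Contains G (broom (2*k+1) d) →
      Fintype.card V = N →
      G.edgeSet.ncard ≤ k * (N - 1) + 1 := by
  intro N
  induction N using Nat.strong_induction_on with
  | _ N IH =>
    intro V _ G A B hbip hconn hfree hcard
    classical
    rw [ncard_eq_edgeFinset_card G]
    by_cases hN1 : N ≤ 1
    · have hsub : Subsingleton V := by
        rw [← Fintype.card_le_one_iff_subsingleton] at *
        omega
      have hemp : G.edgeFinset = ∅ := by
        ext e
        simp only [SimpleGraph.mem_edgeFinset, Finset.notMem_empty, iff_false]
        refine Sym2.ind (fun a b h => ?_) e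
        have hadj := (SimpleGraph.mem_edgeSet G).mp h
        rw [Subsingleton.elim b a] at hadj
        exact G.loopless.irrefl a hadj
      rw [hemp]
      simp
    push_neg at hN1
    -- a maximal path
    obtain ⟨v00⟩ := hconn.nonempty
    obtain ⟨u, w, p, hp, hmax⟩ := exists_maximal_path G v00
    by_cases hdeg : G.degree u ≤ k
    · -- Case A : delete u
      -- p is not nil
      obtain ⟨x0, hx0⟩ := Fintype.exists_ne_of_one_lt_card (by omega) u
      cases p with
      | nil =>
        exfalso
        obtain ⟨w0⟩ := hconn.preconnected u x0
        cases w0 with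
        | nil => exact hx0 rfl
        | cons h q =>
          have := hmax _ h
          simp only [SimpleGraph.Walk.support_nil, List.mem_singleton] at this
          exact G.loopless.irrefl u (this ▸ h)
      | @cons _ b _ hub q =>
        have hq : q.IsPath := hp.of_cons
        have hus : u ∉ q.support := ((SimpleGraph.Walk.cons_isPath_iff hub q).mp hp).2
        have hbu : b ≠ u := fun h => hus (h ▸ q.start_mem_support)
        set G' := G.comap (Subtype.val : {z : V // z ≠ u} → V) with hG'
        -- G' connected
        have key : ∀ (x : V) (hx : x ≠ u), G'.Reachable ⟨x, hx⟩ ⟨b, hbu⟩ := by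
          intro x hx
          obtain ⟨w0⟩ := hconn.preconnected x b
          have hwp : w0.bypass.IsPath := SimpleGraph.Walk.bypass_isPath w0
          by_cases hu : u ∈ w0.bypass.support
          · have hw1p : (w0.bypass.takeUntil u hu).IsPath := hwp.takeUntil hu
            have hw1r : (w0.bypass.takeUntil u hu).reverse.IsPath := hw1p.reverse
            cases hrev : (w0.bypass.takeUntil u hu).reverse with
            | nil => exact absurd rfl hx
            | @cons _ z _ hadj w2 =>
              rw [hrev] at hw1r
              have hzsup : u ∉ w2.support :=
                ((SimpleGraph.Walk.cons_isPath_iff hadj w2).mp hw1r).2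
              have hz_ne : z ≠ u := fun h => hzsup (h ▸ w2.start_mem_support)
              have hz_in : z ∈ q.support := by
                have hmem := hmax z hadj
                rw [SimpleGraph.Walk.support_cons, List.mem_cons] at hmem
                rcases hmem with h | h
                · exact absurd h hz_ne
                · exact h
              have r1 : G'.Reachable ⟨x, hx⟩ ⟨z, hz_ne⟩ := by
                refine reach_lift w2.reverse ?_ hx hz_ne
                rw [SimpleGraph.Walk.support_reverse]
                simpa using hzsup
              have r2 : G'.Reachable ⟨z, hz_ne⟩ ⟨b, hbu⟩ := by
                refine (reach_lift (q.takeUntil z hz_in) ?_ hbu hz_ne).symm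
                exact fun hmem => hus (SimpleGraph.Walk.support_takeUntil_subset _ _ hmem)
              exact r1.trans r2
          · exact reach_lift w0.bypass hu hx hbu
        have hG'conn : G'.Connected := by
          rw [SimpleGraph.connected_iff]
          refine ⟨fun a c => ?_, ⟨⟨b, hbu⟩⟩⟩
          obtain ⟨a1, a2⟩ := a
          obtain ⟨c1, c2⟩ := c
          exact (key a1 a2).trans (key c1 c2).symm
        -- bipartition
        have hbip' : IsBipartition G' (A.subtype (fun z => z ≠ u)) (B.subtype (fun z => z ≠ u)) := by
          obtain ⟨hcov, hdisj, hadj⟩ := hbip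
          refine ⟨?_, ?_, ?_⟩
          · rintro ⟨v, hv⟩
            rcases hcov v with h | h
            · exact Or.inl (Finset.mem_subtype.mpr h)
            · exact Or.inr (Finset.mem_subtype.mpr h)
          · rintro ⟨v, hv⟩ ⟨h1, h2⟩
            exact hdisj v ⟨Finset.mem_subtype.mp h1, Finset.mem_subtype.mp h2⟩
          · rintro ⟨v1, hv1⟩ ⟨v2, hv2⟩ hadj12
            rcases hadj hadj12 with ⟨h1, h2⟩ | ⟨h1, h2⟩
            · exact Or.inl ⟨Finset.mem_subtype.mpr h1, Finset.mem_subtype.mpr h2⟩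
            · exact Or.inr ⟨Finset.mem_subtype.mpr h1, Finset.mem_subtype.mpr h2⟩
        -- broom-free
        have hfree' : ¬ Contains G' (broom (2*k+1) d) := by
          rintro ⟨f, hf⟩
          refine hfree ⟨(⟨Subtype.val, fun {a b} h => h⟩ : G' →g G).comp f, ?_⟩
          intro a b h
          exact hf (Subtype.val_injective h)
        -- card
        have hcard' : Fintype.card {z : V // z ≠ u} = N - 1 := by
          have h := Fintype.card_subtype_compl (fun z : V => z = u)
          rw [Fintype.card_subtype_eq] at h
          rw [← hcard]
          exact h
        have hIH := IH (N-1) (by omega) G' (A.subtype (fun z => z ≠ u))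
          (B.subtype (fun z => z ≠ u)) hbip' hG'conn hfree' hcard'
        have hedge := edge_card_delete G u
        rw [ncard_eq_edgeFinset_card G] at hedge
        have harith : k * (N - 1 - 1) + 1 + k ≤ k * (N-1) + 1 := by
          obtain ⟨M, hM⟩ : ∃ M, N = M + 2 := ⟨N - 2, by omega⟩
          subst hM
          have e1 : M + 2 - 1 - 1 = M := by omega
          have e2 : M + 2 - 1 = M + 1 := by omega
          rw [e1, e2, Nat.mul_succ]
          omega
        calc G.edgeFinset.card = G'.edgeSet.ncard + G.degree u := hedge
          _ ≤ (k * (N - 1 - 1) + 1) + k := by omega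
          _ ≤ k * (N-1) + 1 := harith
    · -- Case B
      push_neg at hdeg
      set l := p.support with hl
      set c : ℕ → V := fun t => l.getD t u with hc
      have hlen : l.length = p.length + 1 := SimpleGraph.Walk.length_support p
      have hc0 : c 0 = u := by
        rw [hc]
        rw [hl, SimpleGraph.Walk.support_eq_cons]
        rfl
      have hinj : ∀ a, a < l.length → ∀ b, b < l.length → c a = c b → a = b := by
        intro a ha b hb h
        have hnd : l.Nodup := hp.support_nodup
        rw [hc] at h
        simp only [List.getD_eq_getElem l u ha, List.getD_eq_getElem l u hb] at h
        exact (hnd.getElem_inj_iff).mp h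
      have hchain : ∀ a, a + 1 < l.length → G.Adj (c a) (c (a+1)) := by
        have hch := SimpleGraph.Walk.isChain_adj_support p
        rw [List.isChain_iff_getElem] at hch
        rw [← hl] at hch
        intro a ha
        have h := hch a (by omega)
        rw [hc]
        simp only [List.getD_eq_getElem l u (by omega : a < l.length),
          List.getD_eq_getElem l u (by omega : a + 1 < l.length)]
        simpa [List.get_eq_getElem] using h
      -- find a far neighbor
      have hfar : ∃ j, 2*k+1 ≤ j ∧ j < l.length ∧ G.Adj (c 0) (c j) := by
        by_contra hno
        push_neg at hno
        have hsub : G.neighborFinset u ⊆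
            ((Finset.range (2*k)).filter (fun j => j % 2 = 1)).image c := by
          intro y hy
          rw [SimpleGraph.mem_neighborFinset] at hy
          have hys : y ∈ l := hmax y hy
          rw [List.mem_iff_get] at hys
          obtain ⟨⟨j, hjlt⟩, hjy⟩ := hys
          have hcy : c j = y := by
            rw [hc]
            simp only [List.getD_eq_getElem l u hjlt]
            simpa [List.get_eq_getElem] using hjy
          have hadjj : G.Adj (c 0) (c j) := by rw [hc0, hcy]; exact hy
          have hpar := chain_parity hbip c (l.length - 1)
            (fun a ha => hchain a (by omega))
          have hodd : ¬ Even j := by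
            intro hev
            have h1 := (hpar j (by omega)).mpr hev
            exact bip_adj hbip hadjj h1.symm
          rw [Nat.even_iff] at hodd
          have hjk : j < 2*k := by
            by_contra hge
            push_neg at hge
            exact hno j (by omega) hjlt hadjj
          exact Finset.mem_image.mpr ⟨j, Finset.mem_filter.mpr
            ⟨Finset.mem_range.mpr hjk, by omega⟩, hcy⟩
        have hcle := Finset.card_le_card hsub
        have h1 : (G.neighborFinset u).card = G.degree u :=
          SimpleGraph.card_neighborFinset_eq_degree G u
        have h2 : (((Finset.range (2*k)).filter (fun j => j % 2 = 1)).image c).card ≤ k := by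
          calc _ ≤ ((Finset.range (2*k)).filter (fun j => j % 2 = 1)).card :=
              Finset.card_image_le
            _ = k := card_filter_odd k
        omega
      obtain ⟨i, hi1, hi2, hicyc⟩ := hfar
      have hall : ∀ x : V, G.degree x ≤ k + (d-1) := by
        intro x
        obtain ⟨c', h1, h2, h3⟩ := exists_path_to_all hconn c l.length i hinj hchain hi1 hi2 hicyc x
        have hdb := degree_le_of_path (G := G) (A := A) (B := B) (by omega) hbip hfree c'
          (fun a ha b hb h => h1 a ha b hb h) h2
        rwa [h3] at hdb
      have hsum : ∑ v : V, G.degree v = 2 * G.edgeFinset.card :=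
        SimpleGraph.sum_degrees_eq_twice_card_edges G
      have h2e : 2 * G.edgeFinset.card ≤ N * (k + (d-1)) := by
        rw [← hsum]
        calc ∑ v : V, G.degree v ≤ Finset.univ.card • (k + (d-1)) :=
            Finset.sum_le_card_nsmul _ _ _ (fun x _ => hall x)
          _ = N * (k + (d-1)) := by rw [smul_eq_mul, Finset.card_univ, hcard]
      have hNlarge : 2*k+2 ≤ N := by
        have hcyc_card : ((Finset.range (i+1)).image c).card = i+1 := by
          rw [Finset.card_image_of_injOn, Finset.card_range]
          intro a ha b hb h
          rw [Finset.mem_coe, Finset.mem_range] at ha hb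
          exact hinj a (by omega) b (by omega) h
        have := Finset.card_le_univ ((Finset.range (i+1)).image c)
        rw [hcyc_card, hcard] at this
        omega
      -- arithmetic
      obtain ⟨K, hK⟩ : ∃ K, k = d + 1 + K := ⟨k - d - 1, by omega⟩
      obtain ⟨M, hM⟩ : ∃ M, N = 2*k + 2 + M := ⟨N - (2*k+2), by omega⟩
      obtain ⟨D2, hD2⟩ : ∃ D2, d = D2 + 2 := ⟨d - 2, by omega⟩
      have hfin : N - 1 = 2*k + 1 + M := by omega
      rw [hfin]
      have hdm1 : d - 1 = D2 + 1 := by omega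
      rw [hdm1] at h2e
      subst hK hM hD2
      nlinarith [h2e]


/-- For all `k > d ≥ 2` and every `n ≥ 1`, every connected bipartite graph with both
classes of size `n` and no copy of the broom `S_{2k+1, d*1}` as a subgraph has at most
`2nk + 1` edges. -/
theorem stmt12 {V : Type*} [Fintype V] (G : SimpleGraph V) (A B : Finset V) (k d n : ℕ)
    (hd : 2 ≤ d) (hdk : d < k) (hn : 1 ≤ n)
    (hbip : IsBipartition G A B) (hA : A.card = n) (hB : B.card = n)
    (hconn : G.Connected) (hfree : ¬ Contains G (broom (2 * k + 1) d)) :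
    G.edgeSet.ncard ≤ 2 * n * k + 1 := by
  classical
  have hNcard : Fintype.card V = 2 * n := by
    have hcov := hbip.1
    have hdisj := hbip.2.1
    have huniv : A ∪ B = Finset.univ :=
      Finset.eq_univ_iff_forall.mpr (fun v => Finset.mem_union.mpr (hcov v))
    have hdisj' : Disjoint A B :=
      Finset.disjoint_left.mpr (fun {a} ha hb => hdisj a ⟨ha, hb⟩)
    have hcu := Finset.card_union_of_disjoint hdisj'
    rw [huniv, Finset.card_univ, hA, hB] at hcu
    rw [hcu]
    omega
  have h := broom_edge_bound k d hd hdk (2*n) G A B hbip hconn hfree hNcard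
  calc G.edgeSet.ncard ≤ k * (2*n - 1) + 1 := h
    _ ≤ k * (2*n) + 1 := by
        have := Nat.mul_le_mul_left k (show 2*n - 1 ≤ 2*n by omega)
        omega
    _ = 2 * n * k + 1 := by ring
end

section
/- For every integer n > 3, the maximum number of edges in a connected bipartite simple graph with both bipartition classes of size n containing no path on 5 vertices as a subgraph equals 2n - 1, and the same maximum holds when forbidding a path on 6 vertices instead. -/
open SimpleGraph

set_option maxHeartbeats 1000000

lemma getVert_eq_support_getElem {V : Type*} {G : SimpleGraph V} {u w : V} (p : G.Walk u w)
    {i : ℕ} (h : i ≤ p.length) :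
    p.getVert i = p.support[i]'(by rw [Walk.length_support]; omega) := by
  induction p generalizing i with
  | nil =>
    obtain rfl : i = 0 := by simpa using h
    simp
  | cons hadj q ih =>
    cases i with
    | zero => simp
    | succ i =>
      rw [Walk.getVert_cons_succ]
      simp only [Walk.support_cons, List.getElem_cons_succ]
      exact ih (by simpa [Nat.succ_le_iff, Nat.lt_succ_iff] using h)

lemma cycle_getVert_inj {V : Type*} {G : SimpleGraph V} {v : V} {p : G.Walk v v}
    (hp : p.IsCycle) {i j : ℕ} (h1 : 1 ≤ i) (h2 : i < j) (h3 : j ≤ p.length) :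
    p.getVert i ≠ p.getVert j := by
  have hn := hp.support_nodup
  have hi : i ≤ p.length := by omega
  rw [getVert_eq_support_getElem p hi, getVert_eq_support_getElem p h3]
  have hlen : p.support.length = p.length + 1 := Walk.length_support p
  have htail : p.support.tail.length = p.length := by
    rw [List.length_tail, hlen]; omega
  intro heq
  have e1 : p.support[i] = p.support.tail[i-1]'(by omega) := by
    rw [List.getElem_tail]
    congr 1
    omega
  have e2 : p.support[j] = p.support.tail[j-1]'(by omega) := by
    rw [List.getElem_tail]
    congr 1
    omega
  rw [e1, e2] at heq
  have := (List.Nodup.getElem_inj_iff hn).mp heq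
  omega


lemma reach_set {V : Type*} {G : SimpleGraph V} {S : Set V} :
    ∀ {u w : V} (_ : G.Walk u w), u ∉ S → w ∈ S →
    ∃ x y, x ∉ S ∧ y ∈ S ∧ G.Adj x y ∧ (x = u ∨ ∃ x', x' ∉ S ∧ G.Adj x' x) := by
  intro u w p
  induction p with
  | nil => intro hu hw; exact absurd hw hu
  | @cons a b c hadj q ih =>
    intro hu hw
    by_cases hb : b ∈ S
    · exact ⟨a, b, hu, hb, hadj, Or.inl rfl⟩
    · obtain ⟨x, y, hx, hy, hxy, hcase⟩ := ih hb hw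
      refine ⟨x, y, hx, hy, hxy, Or.inr ?_⟩
      rcases hcase with rfl | ⟨x', hx', hx'x⟩
      · exact ⟨a, hu, hadj⟩
      · exact ⟨x', hx', hx'x⟩

lemma contains6 {V : Type*} {G : SimpleGraph V} {v0 v1 v2 v3 v4 v5 : V}
    (h01 : G.Adj v0 v1) (h12 : G.Adj v1 v2) (h23 : G.Adj v2 v3) (h34 : G.Adj v3 v4)
    (h45 : G.Adj v4 v5)
    (h02 : v0 ≠ v2) (h03 : v0 ≠ v3) (h04 : v0 ≠ v4) (h05 : v0 ≠ v5)
    (h13 : v1 ≠ v3) (h14 : v1 ≠ v4) (h15 : v1 ≠ v5)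
    (h24 : v2 ≠ v4) (h25 : v2 ≠ v5) (h35 : v3 ≠ v5) : Contains G (pathGraph 6) := by
  have n01 := h01.ne; have n12 := h12.ne; have n23 := h23.ne
  have n34 := h34.ne; have n45 := h45.ne
  have hinj : Function.Injective ![v0,v1,v2,v3,v4,v5] := by
    intro a b hab
    fin_cases a <;> fin_cases b <;>
      first
        | rfl
        | exact absurd hab n01 | exact absurd hab (Ne.symm n01)
        | exact absurd hab n12 | exact absurd hab (Ne.symm n12)
        | exact absurd hab n23 | exact absurd hab (Ne.symm n23)
        | exact absurd hab n34 | exact absurd hab (Ne.symm n34)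
        | exact absurd hab n45 | exact absurd hab (Ne.symm n45)
        | exact absurd hab h02 | exact absurd hab (Ne.symm h02)
        | exact absurd hab h03 | exact absurd hab (Ne.symm h03)
        | exact absurd hab h04 | exact absurd hab (Ne.symm h04)
        | exact absurd hab h05 | exact absurd hab (Ne.symm h05)
        | exact absurd hab h13 | exact absurd hab (Ne.symm h13)
        | exact absurd hab h14 | exact absurd hab (Ne.symm h14)
        | exact absurd hab h15 | exact absurd hab (Ne.symm h15)
        | exact absurd hab h24 | exact absurd hab (Ne.symm h24)
        | exact absurd hab h25 | exact absurd hab (Ne.symm h25)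
        | exact absurd hab h35 | exact absurd hab (Ne.symm h35)
  refine ⟨⟨![v0,v1,v2,v3,v4,v5], ?_⟩, hinj⟩
  intro a b hab
  rw [pathGraph_adj] at hab
  fin_cases a <;> fin_cases b <;>
    first
      | exact h01 | exact h01.symm | exact h12 | exact h12.symm
      | exact h23 | exact h23.symm | exact h34 | exact h34.symm
      | exact h45 | exact h45.symm
      | exact absurd hab (by decide)

lemma contains5 {V : Type*} {G : SimpleGraph V} {v0 v1 v2 v3 v4 : V}
    (h01 : G.Adj v0 v1) (h12 : G.Adj v1 v2) (h23 : G.Adj v2 v3) (h34 : G.Adj v3 v4)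
    (h02 : v0 ≠ v2) (h03 : v0 ≠ v3) (h04 : v0 ≠ v4)
    (h13 : v1 ≠ v3) (h14 : v1 ≠ v4) (h24 : v2 ≠ v4) : Contains G (pathGraph 5) := by
  have n01 := h01.ne; have n12 := h12.ne; have n23 := h23.ne; have n34 := h34.ne
  have hinj : Function.Injective ![v0,v1,v2,v3,v4] := by
    intro a b hab
    fin_cases a <;> fin_cases b <;>
      first
        | rfl
        | exact absurd hab n01 | exact absurd hab (Ne.symm n01)
        | exact absurd hab n12 | exact absurd hab (Ne.symm n12)
        | exact absurd hab n23 | exact absurd hab (Ne.symm n23)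
        | exact absurd hab n34 | exact absurd hab (Ne.symm n34)
        | exact absurd hab h02 | exact absurd hab (Ne.symm h02)
        | exact absurd hab h03 | exact absurd hab (Ne.symm h03)
        | exact absurd hab h04 | exact absurd hab (Ne.symm h04)
        | exact absurd hab h13 | exact absurd hab (Ne.symm h13)
        | exact absurd hab h14 | exact absurd hab (Ne.symm h14)
        | exact absurd hab h24 | exact absurd hab (Ne.symm h24)
  refine ⟨⟨![v0,v1,v2,v3,v4], ?_⟩, hinj⟩
  intro a b hab
  rw [pathGraph_adj] at hab
  fin_cases a <;> fin_cases b <;>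
    first
      | exact h01 | exact h01.symm | exact h12 | exact h12.symm
      | exact h23 | exact h23.symm | exact h34 | exact h34.symm
      | exact absurd hab (by decide)

lemma contains5_of_contains6 {V : Type*} {G : SimpleGraph V}
    (h : Contains G (pathGraph 6)) : Contains G (pathGraph 5) := by
  obtain ⟨f, hf⟩ := h
  refine ⟨f.comp ⟨Fin.castLE (by omega), ?_⟩, ?_⟩
  · intro a b hab
    rw [pathGraph_adj] at hab ⊢
    simpa using hab
  · exact hf.comp (Fin.castLE_injective (by omega))


def Dgraph (n : ℕ) : SimpleGraph (Fin (2*n)) where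
  Adj u v := u ≠ v ∧ ((u.val = 0 ∧ n ≤ v.val) ∨ (v.val = 0 ∧ n ≤ u.val) ∨
    (u.val = n ∧ v.val < n) ∨ (v.val = n ∧ u.val < n))
  symm := by
    constructor
    rintro u v ⟨h1, h2⟩
    exact ⟨Ne.symm h1, by tauto⟩
  loopless := ⟨fun v h => h.1 rfl⟩

lemma Dgraph_adj {n : ℕ} {u v : Fin (2*n)} : (Dgraph n).Adj u v ↔
    u ≠ v ∧ ((u.val = 0 ∧ n ≤ v.val) ∨ (v.val = 0 ∧ n ≤ u.val) ∨
    (u.val = n ∧ v.val < n) ∨ (v.val = n ∧ u.val < n)) := Iff.rfl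

lemma Dgraph_connected {n : ℕ} (hn : 0 < n) : (Dgraph n).Connected := by
  have h2n : 0 < 2 * n := by omega
  rw [connected_iff]
  refine ⟨?_, ⟨⟨0, h2n⟩⟩⟩
  have key : ∀ v : Fin (2*n), (Dgraph n).Reachable v ⟨n, by omega⟩ := by
    intro v
    by_cases hv : v = ⟨n, by omega⟩
    · exact hv ▸ Reachable.refl v
    · by_cases hlt : v.val < n
      · exact Adj.reachable ⟨hv, by right; right; right; exact ⟨rfl, hlt⟩⟩
      · have r1 : (Dgraph n).Reachable v ⟨0, h2n⟩ := by
          refine Adj.reachable ⟨?_, by right; left; exact ⟨rfl, by omega⟩⟩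
          intro h
          apply hlt
          rw [h]
          simpa using hn
        have r2 : (Dgraph n).Reachable (⟨0, h2n⟩ : Fin (2*n)) ⟨n, by omega⟩ :=
          Adj.reachable ⟨by simp [Fin.ext_iff]; omega, by left; exact ⟨rfl, le_refl n⟩⟩
        exact r1.trans r2
  exact fun u v => (key u).trans (key v).symm

lemma Dgraph_no_p5 {n : ℕ} (hn : 3 < n) : ¬ Contains (Dgraph n) (pathGraph 5) := by
  rintro ⟨f, hf⟩
  have a01 := f.map_adj (show (pathGraph 5).Adj 0 1 by rw [pathGraph_adj]; decide)
  have a12 := f.map_adj (show (pathGraph 5).Adj 1 2 by rw [pathGraph_adj]; decide)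
  have a23 := f.map_adj (show (pathGraph 5).Adj 2 3 by rw [pathGraph_adj]; decide)
  have a34 := f.map_adj (show (pathGraph 5).Adj 3 4 by rw [pathGraph_adj]; decide)
  rw [Dgraph_adj] at a01 a12 a23 a34
  have d02 : f 0 ≠ f 2 := fun h => by simpa using hf h
  have d03 : f 0 ≠ f 3 := fun h => by simpa using hf h
  have d04 : f 0 ≠ f 4 := fun h => by simpa using hf h
  have d13 : f 1 ≠ f 3 := fun h => by simpa using hf h
  have d14 : f 1 ≠ f 4 := fun h => by simpa using hf h
  have d24 : f 2 ≠ f 4 := fun h => by simpa using hf h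
  simp only [Ne, Fin.ext_iff] at a01 a12 a23 a34 d02 d03 d04 d13 d14 d24
  omega

lemma card_filter_lt (n : ℕ) :
    (Finset.univ.filter (fun v : Fin (2*n) => v.val < n)).card = n := by
  have : (Finset.univ.filter (fun v : Fin (2*n) => v.val < n)) =
      (Finset.range n).attachFin (fun m hm => by rw [Finset.mem_range] at hm; omega) := by
    ext v
    simp [Finset.mem_attachFin]
  rw [this, Finset.card_attachFin, Finset.card_range]

lemma card_filter_ge (n : ℕ) :
    (Finset.univ.filter (fun v : Fin (2*n) => n ≤ v.val)).card = n := by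
  have h := Finset.card_filter_add_card_filter_not
    (s := (Finset.univ : Finset (Fin (2*n)))) (p := fun v => v.val < n)
  simp only [not_lt] at h
  have h2 := card_filter_lt n
  have : (Finset.univ : Finset (Fin (2*n))).card = 2 * n := by simp
  omega

lemma Dgraph_edge_count {n : ℕ} (hn : 0 < n) :
    (Dgraph n).edgeSet.ncard = 2 * n - 1 := by
  classical
  have h2n : 0 < 2 * n := by omega
  set a0 : Fin (2*n) := ⟨0, h2n⟩ with ha0
  set b0 : Fin (2*n) := ⟨n, by omega⟩ with hb0
  set g : Fin (2*n) → Sym2 (Fin (2*n)) :=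
    fun v => if (v : ℕ) < n then s(b0, v) else s(a0, v) with hg
  have hne : a0 ≠ b0 := by simp [ha0, hb0, Fin.ext_iff]; omega
  have ha0v : (a0 : ℕ) = 0 := rfl
  have hb0v : (b0 : ℕ) = n := rfl
  have hmem : ∀ x : Fin (2*n), x ≠ b0 → x ∈ (↑(Finset.univ.erase b0) : Set (Fin (2*n))) := by
    intro x hx
    simp [hx]
  have himg : (Dgraph n).edgeSet = g '' ↑(Finset.univ.erase b0) := by
    ext e
    induction e with
    | h u v =>
      rw [mem_edgeSet, Dgraph_adj]
      constructor
      · rintro ⟨huv, hor⟩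
        rcases hor with ⟨hu, hv⟩ | ⟨hv, hu⟩ | ⟨hu, hv⟩ | ⟨hv, hu⟩
        · have hu' : u = a0 := Fin.ext hu
          by_cases hvb : v = b0
          · refine ⟨a0, hmem a0 hne, ?_⟩
            simp only [hg]
            rw [if_pos (show (a0 : ℕ) < n from hn), hu', hvb, Sym2.eq_swap]
          · refine ⟨v, hmem v hvb, ?_⟩
            simp only [hg]
            rw [if_neg (by omega), hu']
        · have hv' : v = a0 := Fin.ext hv
          by_cases hub : u = b0
          · refine ⟨a0, hmem a0 hne, ?_⟩
            simp only [hg]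
            rw [if_pos (show (a0 : ℕ) < n from hn), hub, hv']
          · refine ⟨u, hmem u hub, ?_⟩
            simp only [hg]
            rw [if_neg (by omega), hv', Sym2.eq_swap]
        · have hu' : u = b0 := Fin.ext hu
          refine ⟨v, hmem v (fun h => by rw [h, hb0v] at hv; omega), ?_⟩
          simp only [hg]
          rw [if_pos hv, hu']
        · have hv' : v = b0 := Fin.ext hv
          refine ⟨u, hmem u (fun h => by rw [h, hb0v] at hu; omega), ?_⟩
          simp only [hg]
          rw [if_pos hu, hv', Sym2.eq_swap]
      · rintro ⟨x, hx, hgx⟩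
        simp only [Finset.coe_erase, Set.mem_diff, Set.mem_singleton_iff] at hx
        have hxb : x ≠ b0 := hx.2
        simp only [hg] at hgx
        by_cases hlt : (x : ℕ) < n
        · rw [if_pos hlt, Sym2.eq_iff] at hgx
          rcases hgx with ⟨h1, h2⟩ | ⟨h1, h2⟩
          · subst h1; subst h2
            exact ⟨fun h => hxb h.symm, Or.inr (Or.inr (Or.inl ⟨hb0v, hlt⟩))⟩
          · subst h1; subst h2
            exact ⟨hxb, Or.inr (Or.inr (Or.inr ⟨hb0v, hlt⟩))⟩
        · rw [if_neg hlt, Sym2.eq_iff] at hgx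
          rcases hgx with ⟨h1, h2⟩ | ⟨h1, h2⟩
          · subst h1; subst h2
            refine ⟨fun h => hlt (by rw [← h, ha0v]; exact hn), ?_⟩
            exact Or.inl ⟨ha0v, by omega⟩
          · subst h1; subst h2
            refine ⟨fun h => hlt (by rw [h, ha0v]; exact hn), ?_⟩
            exact Or.inr (Or.inl ⟨ha0v, by omega⟩)
  have hinj : Set.InjOn g ↑(Finset.univ.erase b0) := by
    intro u hu v hv huv
    simp only [Finset.coe_erase, Set.mem_diff, Set.mem_singleton_iff] at hu hv
    simp only [hg] at huv
    by_cases h1 : (u : ℕ) < n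
    · by_cases h2 : (v : ℕ) < n
      · rw [if_pos h1, if_pos h2, Sym2.eq_iff] at huv
        rcases huv with ⟨_, h⟩ | ⟨hbv, hub⟩
        · exact h
        · exact absurd hbv.symm hv.2
      · rw [if_pos h1, if_neg h2, Sym2.eq_iff] at huv
        rcases huv with ⟨hba, h⟩ | ⟨hbv, hub⟩
        · exact absurd (congrArg Fin.val hba) (by simp [ha0, hb0]; omega)
        · exact absurd hbv.symm hv.2
    · by_cases h2 : (v : ℕ) < n
      · rw [if_neg h1, if_pos h2, Sym2.eq_iff] at huv
        rcases huv with ⟨hba, h⟩ | ⟨hav, hub⟩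
        · exact absurd (congrArg Fin.val hba) (by simp [ha0, hb0]; omega)
        · exact absurd hub hu.2
      · rw [if_neg h1, if_neg h2, Sym2.eq_iff] at huv
        rcases huv with ⟨_, h⟩ | ⟨hav, hua⟩
        · exact h
        · have hu0 : (u : ℕ) = 0 := by rw [hua]
          have hv0 : (v : ℕ) = 0 := by rw [← hav]
          exact Fin.ext (by omega)
  rw [himg, Set.ncard_image_of_injOn hinj, Set.ncard_coe_finset,
    Finset.card_erase_of_mem (Finset.mem_univ _)]
  simp

lemma c4_p6 {V : Type*} {G : SimpleGraph V} {A B : Finset V}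
    (hdisj : ∀ v, ¬(v ∈ A ∧ v ∈ B))
    (hadj : ∀ ⦃u v⦄, G.Adj u v → (u ∈ A ∧ v ∈ B) ∨ (u ∈ B ∧ v ∈ A))
    (hpre : G.Preconnected)
    (hA : 3 ≤ A.card) (hB : 3 ≤ B.card)
    {c1 c2 c3 c4 : V}
    (h12 : G.Adj c1 c2) (h23 : G.Adj c2 c3) (h34 : G.Adj c3 c4) (h41 : G.Adj c4 c1)
    (hne13 : c1 ≠ c3) (hne24 : c2 ≠ c4)
    (hc1 : c1 ∈ A) : Contains G (pathGraph 6) := by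
  classical
  have n12 := h12.ne
  have n23 := h23.ne
  have n34 := h34.ne
  have n41 := h41.ne
  have hc2 : c2 ∈ B := by
    rcases hadj h12 with ⟨_, h⟩ | ⟨h, _⟩
    · exact h
    · exact absurd ⟨hc1, h⟩ (hdisj c1)
  have hc3 : c3 ∈ A := by
    rcases hadj h23 with ⟨h, _⟩ | ⟨_, h⟩
    · exact absurd ⟨h, hc2⟩ (hdisj c2)
    · exact h
  have hc4 : c4 ∈ B := by
    rcases hadj h34 with ⟨_, h⟩ | ⟨h, _⟩
    · exact h
    · exact absurd ⟨hc3, h⟩ (hdisj c3)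
  set S : Set V := {c1, c2, c3, c4} with hS
  have hc1S : c1 ∈ S := by simp [hS]
  have hnotS : ∀ v : V, v ≠ c1 → v ≠ c2 → v ≠ c3 → v ≠ c4 → v ∉ S := by
    intro v hv1 hv2 hv3 hv4
    simp [hS, hv1, hv2, hv3, hv4]
  have hpend : ∀ x' x y : V, x' ∉ S → x ∉ S → G.Adj x' x → G.Adj x y → y ∈ S →
      Contains G (pathGraph 6) := by
    intro x' x y hx' hx hx'x hxy hy
    simp only [hS, Set.mem_insert_iff, Set.mem_singleton_iff, not_or] at hx' hx
    obtain ⟨hx'1, hx'2, hx'3, hx'4⟩ := hx'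
    obtain ⟨hx1, hx2, hx3, hx4⟩ := hx
    rcases (by simpa [hS, Set.mem_insert_iff] using hy : y = c1 ∨ y = c2 ∨ y = c3 ∨ y = c4)
      with rfl | rfl | rfl | rfl
    · exact contains6 hx'x hxy h12 h23 h34
        hx'1 hx'2 hx'3 hx'4 hx2 hx3 hx4 hne13 (Ne.symm n41) hne24
    · exact contains6 hx'x hxy h23 h34 h41
        hx'2 hx'3 hx'4 hx'1 hx3 hx4 hx1 hne24 (Ne.symm n12) (Ne.symm hne13)
    · exact contains6 hx'x hxy h34 h41 h12
        hx'3 hx'4 hx'1 hx'2 hx4 hx1 hx2 (Ne.symm hne13) (Ne.symm n23) (Ne.symm hne24)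
    · exact contains6 hx'x hxy h41 h12 h23
        hx'4 hx'1 hx'2 hx'3 hx1 hx2 hx3 (Ne.symm hne24) (Ne.symm n34) hne13
  -- pick a ∈ A outside the cycle
  have hAns : ¬ A ⊆ {c1, c3} := by
    intro hsub
    have h1 := Finset.card_le_card hsub
    have h2 : ({c1, c3} : Finset V).card ≤ 2 :=
      (Finset.card_insert_le _ _).trans (by simp)
    omega
  obtain ⟨a, haA, ha'⟩ := Finset.not_subset.mp hAns
  simp only [Finset.mem_insert, Finset.mem_singleton, not_or] at ha'
  obtain ⟨hac1, hac3⟩ := ha'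
  have hac2 : a ≠ c2 := fun h => hdisj a ⟨haA, h ▸ hc2⟩
  have hac4 : a ≠ c4 := fun h => hdisj a ⟨haA, h ▸ hc4⟩
  have haS : a ∉ S := hnotS a hac1 hac2 hac3 hac4
  obtain ⟨pa⟩ := hpre a c1
  obtain ⟨x, y, hx, hy, hxy, hcase⟩ := reach_set pa haS hc1S
  rcases hcase with rfl | ⟨x', hx', hx'x⟩
  swap
  · exact hpend x' x y hx' hx hx'x hxy hy
  -- x = a : a is adjacent to y ∈ {c2, c4}
  have hyB : y ∈ B := by
    rcases hadj hxy with ⟨_, h⟩ | ⟨h, _⟩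
    · exact h
    · exact absurd ⟨haA, h⟩ (hdisj x)
  have hy24 : y = c2 ∨ y = c4 := by
    rcases (by simpa [hS, Set.mem_insert_iff] using hy : y = c1 ∨ y = c2 ∨ y = c3 ∨ y = c4)
      with rfl | rfl | rfl | rfl
    · exact absurd ⟨hc1, hyB⟩ (hdisj y)
    · exact Or.inl rfl
    · exact absurd ⟨hc3, hyB⟩ (hdisj y)
    · exact Or.inr rfl
  -- pick b ∈ B outside the cycle
  have hBns : ¬ B ⊆ {c2, c4} := by
    intro hsub
    have h1 := Finset.card_le_card hsub
    have h2 : ({c2, c4} : Finset V).card ≤ 2 :=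
      (Finset.card_insert_le _ _).trans (by simp)
    omega
  obtain ⟨b, hbB, hb'⟩ := Finset.not_subset.mp hBns
  simp only [Finset.mem_insert, Finset.mem_singleton, not_or] at hb'
  obtain ⟨hbc2, hbc4⟩ := hb'
  have hbc1 : b ≠ c1 := fun h => hdisj b ⟨h ▸ hc1, hbB⟩
  have hbc3 : b ≠ c3 := fun h => hdisj b ⟨h ▸ hc3, hbB⟩
  have hbS : b ∉ S := hnotS b hbc1 hbc2 hbc3 hbc4
  obtain ⟨pb⟩ := hpre b c1
  obtain ⟨x2, z, hx2, hz, hx2z, hcase2⟩ := reach_set pb hbS hc1S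
  rcases hcase2 with rfl | ⟨x', hx', hx'x⟩
  swap
  · exact hpend x' x2 z hx' hx2 hx'x hx2z hz
  have hzA : z ∈ A := by
    rcases hadj hx2z with ⟨h, _⟩ | ⟨_, h⟩
    · exact absurd ⟨h, hbB⟩ (hdisj x2)
    · exact h
  have hz13 : z = c1 ∨ z = c3 := by
    rcases (by simpa [hS, Set.mem_insert_iff] using hz : z = c1 ∨ z = c2 ∨ z = c3 ∨ z = c4)
      with rfl | rfl | rfl | rfl
    · exact Or.inl rfl
    · exact absurd ⟨hzA, hc2⟩ (hdisj z)
    · exact Or.inr rfl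
    · exact absurd ⟨hzA, hc4⟩ (hdisj z)
  have hab : x ≠ x2 := fun h => hdisj x ⟨haA, h ▸ hbB⟩
  rcases hy24 with rfl | rfl <;> rcases hz13 with rfl | rfl
  · -- a–c2, b–c1 : a c2 c3 c4 c1 b
    exact contains6 hxy h23 h34 h41 hx2z.symm
      hac3 hac4 hac1 hab hne24 (Ne.symm n12) (Ne.symm hbc2) (Ne.symm hne13)
      (Ne.symm hbc3) (Ne.symm hbc4)
  · -- a–c2, b–c3 : a c2 c1 c4 c3 b
    exact contains6 hxy h12.symm h41.symm h34.symm hx2z.symm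
      hac1 hac4 hac3 hab hne24 n23 (Ne.symm hbc2) hne13 (Ne.symm hbc1) (Ne.symm hbc4)
  · -- a–c4, b–c1 : a c4 c3 c2 c1 b
    exact contains6 hxy h34.symm h23.symm h12.symm hx2z.symm
      hac3 hac2 hac1 hab (Ne.symm hne24) n41 (Ne.symm hbc4) (Ne.symm hne13)
      (Ne.symm hbc3) (Ne.symm hbc2)
  · -- a–c4, b–c3 : a c4 c1 c2 c3 b
    exact contains6 hxy h41 h12 h23 hx2z.symm
      hac1 hac2 hac3 hab (Ne.symm hne24) (Ne.symm n34) (Ne.symm hbc4) hne13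
      (Ne.symm hbc1) (Ne.symm hbc2)

lemma upper_bound {n : ℕ} (hn : 3 < n) {G : SimpleGraph (Fin (2*n))}
    {A B : Finset (Fin (2*n))}
    (hdisj : ∀ v, ¬(v ∈ A ∧ v ∈ B))
    (hadj : ∀ ⦃u v⦄, G.Adj u v → (u ∈ A ∧ v ∈ B) ∨ (u ∈ B ∧ v ∈ A))
    (hA : A.card = n) (hB : B.card = n)
    (hconn : G.Connected) (hP6 : ¬ Contains G (pathGraph 6)) :
    G.edgeSet.ncard = 2 * n - 1 := by
  classical
  have hacyc : G.IsAcyclic := by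
    intro v c hc
    have hL := hc.three_le_length
    set w : ℕ → Fin (2*n) := c.getVert with hw
    have hadj' : ∀ i, i < c.length → G.Adj (w i) (w (i+1)) :=
      fun i hi => c.adj_getVert_succ hi
    have hinj : ∀ i j, 1 ≤ i → i < j → j ≤ c.length → w i ≠ w j :=
      fun i j h1 h2 h3 => cycle_getVert_inj hc h1 h2 h3
    have hw0 : w c.length = w 0 := by
      rw [hw]
      rw [Walk.getVert_length, Walk.getVert_zero]
    rcases lt_or_ge c.length 6 with h6 | h6
    · interval_cases hLen : c.length
      · -- length 3
        have a0 := hadj' 0 (by omega)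
        have a1 := hadj' 1 (by omega)
        have a2 := hadj' 2 (by omega)
        rw [show (2:ℕ)+1 = 3 from rfl, hw0] at a2
        have d0 := hdisj (w 0); have d1 := hdisj (w 1); have d2 := hdisj (w 2)
        have e0 := hadj a0; have e1 := hadj a1; have e2 := hadj a2
        rcases e0 with ⟨p0, q1⟩ | ⟨p0, q1⟩ <;>
          rcases e1 with ⟨p1, q2⟩ | ⟨p1, q2⟩ <;>
          rcases e2 with ⟨p2, t0⟩ | ⟨p2, t0⟩ <;>
          first
            | exact d0 ⟨p0, t0⟩ | exact d0 ⟨t0, p0⟩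
            | exact d1 ⟨q1, p1⟩ | exact d1 ⟨p1, q1⟩
            | exact d2 ⟨q2, p2⟩ | exact d2 ⟨p2, q2⟩
      · -- length 4
        have a0 := hadj' 0 (by omega)
        have a1 := hadj' 1 (by omega)
        have a2 := hadj' 2 (by omega)
        have a3 := hadj' 3 (by omega)
        have h41 : G.Adj (w 4) (w 1) := by
          rw [hw0]
          exact a0
        have hne13 : w 1 ≠ w 3 := hinj 1 3 (by omega) (by omega) (by omega)
        have hne24 : w 2 ≠ w 4 := hinj 2 4 (by omega) (by omega) (by omega)
        have a12 := hadj' 1 (by omega)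
        rcases hadj a12 with ⟨h1A, _⟩ | ⟨h1B, _⟩
        · exact hP6 (c4_p6 hdisj hadj hconn.preconnected (by omega) (by omega)
            a1 a2 a3 h41 hne13 hne24 h1A)
        · refine hP6 (c4_p6 (A := B) (B := A) (fun v h => hdisj v ⟨h.2, h.1⟩)
            (fun u v h => (hadj h).symm) hconn.preconnected (by omega) (by omega)
            a1 a2 a3 h41 hne13 hne24 h1B)
      · -- length 5
        have a0 := hadj' 0 (by omega)
        have a1 := hadj' 1 (by omega)
        have a2 := hadj' 2 (by omega)
        have a3 := hadj' 3 (by omega)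
        have a4 := hadj' 4 (by omega)
        rw [show (4:ℕ)+1 = 5 from rfl, hw0] at a4
        have d0 := hdisj (w 0); have d1 := hdisj (w 1); have d2 := hdisj (w 2)
        have d3 := hdisj (w 3); have d4 := hdisj (w 4)
        have e0 := hadj a0; have e1 := hadj a1; have e2 := hadj a2
        have e3 := hadj a3; have e4 := hadj a4
        rcases e0 with ⟨p0, q1⟩ | ⟨p0, q1⟩ <;>
          rcases e1 with ⟨p1, q2⟩ | ⟨p1, q2⟩ <;>
          rcases e2 with ⟨p2, q3⟩ | ⟨p2, q3⟩ <;>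
          rcases e3 with ⟨p3, q4⟩ | ⟨p3, q4⟩ <;>
          rcases e4 with ⟨p4, t0⟩ | ⟨p4, t0⟩ <;>
          first
            | exact d0 ⟨p0, t0⟩ | exact d0 ⟨t0, p0⟩
            | exact d1 ⟨q1, p1⟩ | exact d1 ⟨p1, q1⟩
            | exact d2 ⟨q2, p2⟩ | exact d2 ⟨p2, q2⟩
            | exact d3 ⟨q3, p3⟩ | exact d3 ⟨p3, q3⟩
            | exact d4 ⟨q4, p4⟩ | exact d4 ⟨p4, q4⟩
    · -- length ≥ 6
      refine hP6 (contains6 (hadj' 1 (by omega)) (hadj' 2 (by omega)) (hadj' 3 (by omega))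
        (hadj' 4 (by omega)) (hadj' 5 (by omega))
        (hinj 1 3 (by omega) (by omega) (by omega))
        (hinj 1 4 (by omega) (by omega) (by omega))
        (hinj 1 5 (by omega) (by omega) (by omega))
        (hinj 1 6 (by omega) (by omega) (by omega))
        (hinj 2 4 (by omega) (by omega) (by omega))
        (hinj 2 5 (by omega) (by omega) (by omega))
        (hinj 2 6 (by omega) (by omega) (by omega))
        (hinj 3 5 (by omega) (by omega) (by omega))
        (hinj 3 6 (by omega) (by omega) (by omega))
        (hinj 4 6 (by omega) (by omega) (by omega)))
  have hT : G.IsTree := ⟨hconn, hacyc⟩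
  haveI : Fintype G.edgeSet := Fintype.ofFinite _
  have hcard := hT.card_edgeFinset
  have hV : Fintype.card (Fin (2*n)) = 2*n := Fintype.card_fin _
  have hnc : G.edgeSet.ncard = G.edgeFinset.card := by
    rw [Set.ncard_eq_toFinset_card']
    congr 1
  omega

lemma Dgraph_bipartition {n : ℕ} :
    IsBipartition (Dgraph n) (Finset.univ.filter (fun v : Fin (2*n) => v.val < n))
      (Finset.univ.filter (fun v : Fin (2*n) => n ≤ v.val)) := by
  refine ⟨?_, ?_, ?_⟩
  · intro v
    simp only [Finset.mem_filter, Finset.mem_univ, true_and]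
    omega
  · intro v
    simp only [Finset.mem_filter, Finset.mem_univ, true_and]
    omega
  · intro u v huv
    rw [Dgraph_adj] at huv
    simp only [Finset.mem_filter, Finset.mem_univ, true_and]
    omega

/-- For every `n > 3`, the maximum number of edges of a connected bipartite graph with
both classes of size `n` and no path on `5` vertices as a subgraph is `2n - 1`, and
the same maximum holds when forbidding the path on `6` vertices instead. -/
theorem stmt13 (n : ℕ) (hn : 3 < n) :
    IsGreatest {m : ℕ | ∃ (G : SimpleGraph (Fin (2 * n))) (A B : Finset (Fin (2 * n))),
        IsBipartition G A B ∧ A.card = n ∧ B.card = n ∧ G.Connected ∧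
        ¬ Contains G (pathGraph 5) ∧ G.edgeSet.ncard = m} (2 * n - 1) ∧
    IsGreatest {m : ℕ | ∃ (G : SimpleGraph (Fin (2 * n))) (A B : Finset (Fin (2 * n))),
        IsBipartition G A B ∧ A.card = n ∧ B.card = n ∧ G.Connected ∧
        ¬ Contains G (pathGraph 6) ∧ G.edgeSet.ncard = m} (2 * n - 1) := by
  constructor
  · constructor
    · exact ⟨Dgraph n, _, _, Dgraph_bipartition, card_filter_lt n, card_filter_ge n,
        Dgraph_connected (by omega), Dgraph_no_p5 hn, Dgraph_edge_count (by omega)⟩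
    · rintro m ⟨G, A, B, ⟨hcov, hdisj, hadj⟩, hA, hB, hconn, hnc5, rfl⟩
      have hP6 : ¬ Contains G (pathGraph 6) := fun h => hnc5 (contains5_of_contains6 h)
      exact le_of_eq (upper_bound hn hdisj hadj hA hB hconn hP6)
  · constructor
    · refine ⟨Dgraph n, _, _, Dgraph_bipartition, card_filter_lt n, card_filter_ge n,
        Dgraph_connected (by omega), ?_, Dgraph_edge_count (by omega)⟩
      exact fun h => Dgraph_no_p5 hn (contains5_of_contains6 h)
    · rintro m ⟨G, A, B, ⟨hcov, hdisj, hadj⟩, hA, hB, hconn, hnc6, rfl⟩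
      exact le_of_eq (upper_bound hn hdisj hadj hA hB hconn hnc6)
end
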